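/- arXiv:1906.10619 — 6 statements merged into one kernel-verified Lean document; each statement's English description precedes it below -/
import Mathlib

section
/- Let f : [m] ⟶ [n] and f' : [m'] ⟶ [n] be morphisms of the simplex category Δ. The cospan (f, f') admits a pullback in Δ if and only if both of the following hold: (i) for each i ∈ {0,…,n} at most one of the preimages f⁻¹{i}, f'⁻¹{i} has more than one element (the pair is backwards compatible), and (ii) there exists i ∈ {0,…,n} with f⁻¹{i} and f'⁻¹{i} both nonempty. Moreover, when these conditions hold, the set {(a,b) ∈ [m]×[m'] : f(a) = f'(b)}, equipped with the componentwise partial order, is a (nonempty finite) linear order, and this linearly ordered set together with the two coordinate projections to [m] and [m'] is a pullback of (f, f') in Δ. -/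
/-!
Formalization of statements from "Higher Segal spaces via higher excision" (T. Walde).
-/

open CategoryTheory CategoryTheory.Limits SimplexCategory

universe v u

namespace HigherSegal

set_option linter.unusedVariables false
set_option linter.unusedSectionVars false

/-- Two morphisms `f, f'` of `Δ` with common codomain `[n]` are backwards compatible if
for each `i ∈ {0, …, n}` at most one of the preimages `f⁻¹{i}`, `f'⁻¹{i}` has more than
one element. -/
def BackwardsCompatiblePair {m m' n : ℕ}
    (f : SimplexCategory.mk m ⟶ SimplexCategory.mk n)
    (f' : SimplexCategory.mk m' ⟶ SimplexCategory.mk n) : Prop :=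
  ∀ i : Fin (n + 1),
    ¬((∃ a b : Fin (m + 1), a ≠ b ∧ f.toOrderHom a = i ∧ f.toOrderHom b = i) ∧
      (∃ a b : Fin (m' + 1), a ≠ b ∧ f'.toOrderHom a = i ∧ f'.toOrderHom b = i))

/-- A pair of morphisms of `Δ` with common codomain `[n]` is compatible if (BC1) for each
`i` at most one of the two preimages is not a singleton, and (BC2) for each `0 < i ≤ n`
at most one of the two morphisms fails to contain `{i−1, i}` in its image. -/
def CompatiblePair {m m' n : ℕ}
    (f : SimplexCategory.mk m ⟶ SimplexCategory.mk n)
    (f' : SimplexCategory.mk m' ⟶ SimplexCategory.mk n) : Prop :=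
  (∀ i : Fin (n + 1),
      ¬(¬(∃! a, f.toOrderHom a = i) ∧ ¬(∃! b, f'.toOrderHom b = i))) ∧
  (∀ i : Fin n,
      ¬(¬(i.castSucc ∈ Set.range ⇑f.toOrderHom ∧ i.succ ∈ Set.range ⇑f.toOrderHom) ∧
        ¬(i.castSucc ∈ Set.range ⇑f'.toOrderHom ∧ i.succ ∈ Set.range ⇑f'.toOrderHom)))

/-- The set `{(a, b) ∈ [m] × [m'] : f(a) = f'(b)}`, with the componentwise partial
order inherited from the product. -/
def PullbackSet {m m' n : ℕ}
    (f : SimplexCategory.mk m ⟶ SimplexCategory.mk n)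
    (f' : SimplexCategory.mk m' ⟶ SimplexCategory.mk n) : Type :=
  { x : Fin (m + 1) × Fin (m' + 1) // f.toOrderHom x.1 = f'.toOrderHom x.2 }

instance {m m' n : ℕ} (f : SimplexCategory.mk m ⟶ SimplexCategory.mk n)
    (f' : SimplexCategory.mk m' ⟶ SimplexCategory.mk n) :
    PartialOrder (PullbackSet f f') :=
  Subtype.partialOrder _

/-- The first coordinate projection `[p] ⟶ [m]`, along an order isomorphism
`Fin (p+1) ≃o PullbackSet f f'`. -/
def projFst {m m' n p : ℕ}
    (f : SimplexCategory.mk m ⟶ SimplexCategory.mk n)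
    (f' : SimplexCategory.mk m' ⟶ SimplexCategory.mk n)
    (e : Fin (p + 1) ≃o PullbackSet f f') : SimplexCategory.mk p ⟶ SimplexCategory.mk m :=
  SimplexCategory.mkHom
    { toFun := fun a => (e a).val.1
      monotone' := fun a b h => (Prod.le_def.mp (Subtype.coe_le_coe.mpr (e.monotone h))).1 }

/-- The second coordinate projection `[p] ⟶ [m']`. -/
def projSnd {m m' n p : ℕ}
    (f : SimplexCategory.mk m ⟶ SimplexCategory.mk n)
    (f' : SimplexCategory.mk m' ⟶ SimplexCategory.mk n)
    (e : Fin (p + 1) ≃o PullbackSet f f') : SimplexCategory.mk p ⟶ SimplexCategory.mk m' :=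
  SimplexCategory.mkHom
    { toFun := fun a => (e a).val.2
      monotone' := fun a b h => (Prod.le_def.mp (Subtype.coe_le_coe.mpr (e.monotone h))).2 }

/- ### Auxiliary lemmas -/

instance {m m' n : ℕ} (f : SimplexCategory.mk m ⟶ SimplexCategory.mk n)
    (f' : SimplexCategory.mk m' ⟶ SimplexCategory.mk n) :
    Fintype (PullbackSet f f') := by unfold PullbackSet; infer_instance

lemma pbs_le_iff {m m' n : ℕ} {f : SimplexCategory.mk m ⟶ SimplexCategory.mk n}
    {f' : SimplexCategory.mk m' ⟶ SimplexCategory.mk n} (p q : PullbackSet f f') :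
    p ≤ q ↔ p.val.1 ≤ q.val.1 ∧ p.val.2 ≤ q.val.2 := Iff.rfl

lemma pbs_total {m m' n : ℕ} {f : SimplexCategory.mk m ⟶ SimplexCategory.mk n}
    {f' : SimplexCategory.mk m' ⟶ SimplexCategory.mk n}
    (hbc : BackwardsCompatiblePair f f') (p q : PullbackSet f f') :
    p ≤ q ∨ q ≤ p := by
  obtain ⟨⟨a, b⟩, hab⟩ := p
  obtain ⟨⟨a', b'⟩, hab'⟩ := q
  show (a ≤ a' ∧ b ≤ b') ∨ (a' ≤ a ∧ b' ≤ b)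
  simp only at hab hab' ⊢
  rcases le_total a a' with h1 | h1 <;> rcases le_total b b' with h2 | h2
  · exact Or.inl ⟨h1, h2⟩
  · by_cases hA : a = a'
    · exact Or.inr ⟨hA.ge, h2⟩
    by_cases hB : b = b'
    · exact Or.inl ⟨h1, hB.le⟩
    exfalso
    have e1 : f.toOrderHom a ≤ f.toOrderHom a' := f.toOrderHom.monotone h1
    have e2 : f.toOrderHom a' ≤ f.toOrderHom a := by
      rw [hab', hab]; exact f'.toOrderHom.monotone h2
    have hfa : f.toOrderHom a = f.toOrderHom a' := le_antisymm e1 e2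
    have hfb : f'.toOrderHom b = f'.toOrderHom b' := by rw [← hab, ← hab', hfa]
    exact hbc (f.toOrderHom a)
      ⟨⟨a, a', hA, rfl, hfa.symm⟩, ⟨b, b', hB, hab.symm, by rw [← hfb]; exact hab.symm⟩⟩
  · by_cases hA : a = a'
    · exact Or.inl ⟨hA.le, h2⟩
    by_cases hB : b = b'
    · exact Or.inr ⟨h1, hB.ge⟩
    exfalso
    have e1 : f.toOrderHom a' ≤ f.toOrderHom a := f.toOrderHom.monotone h1
    have e2 : f.toOrderHom a ≤ f.toOrderHom a' := by
      rw [hab', hab]; exact f'.toOrderHom.monotone h2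
    have hfa : f.toOrderHom a = f.toOrderHom a' := le_antisymm e2 e1
    have hfb : f'.toOrderHom b = f'.toOrderHom b' := by rw [← hab, ← hab', hfa]
    exact hbc (f.toOrderHom a)
      ⟨⟨a, a', hA, rfl, hfa.symm⟩, ⟨b, b', hB, hab.symm, by rw [← hfb]; exact hab.symm⟩⟩
  · exact Or.inr ⟨h1, h2⟩

lemma explicit_isPullback {m m' n : ℕ} {f : SimplexCategory.mk m ⟶ SimplexCategory.mk n}
    {f' : SimplexCategory.mk m' ⟶ SimplexCategory.mk n}
    (hbc : BackwardsCompatiblePair f f')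
    (hne : ∃ i : Fin (n + 1), (∃ a, f.toOrderHom a = i) ∧ (∃ b, f'.toOrderHom b = i)) :
    ∃ (p : ℕ) (e : Fin (p + 1) ≃o PullbackSet f f'),
      IsPullback (projFst f f' e) (projSnd f f' e) f f' := by
  obtain ⟨i, ⟨a, ha⟩, ⟨b, hb⟩⟩ := hne
  have hne' : Nonempty (PullbackSet f f') := ⟨⟨(a, b), by rw [ha, hb]⟩⟩
  letI : LinearOrder (PullbackSet f f') :=
    { (inferInstance : PartialOrder (PullbackSet f f')) with
      le_total := pbs_total hbc
      toDecidableLE := Classical.decRel _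
      toDecidableEq := Classical.decEq _
      toDecidableLT := Classical.decRel _ }
  obtain ⟨p, hp⟩ : ∃ p, Fintype.card (PullbackSet f f') = p + 1 := by
    have := Fintype.card_pos_iff.mpr hne'
    exact ⟨Fintype.card (PullbackSet f f') - 1, by omega⟩
  have e0 := monoEquivOfFin (PullbackSet f f') hp
  have e : Fin (p + 1) ≃o PullbackSet f f' := ⟨e0.toEquiv, fun {x y} => e0.le_iff_le⟩
  have scond : ∀ (s : PullbackCone f f') (x : Fin (s.pt.len + 1)),
      f.toOrderHom (s.fst.toOrderHom x) = f'.toOrderHom (s.snd.toOrderHom x) := by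
    intro s x
    exact congrArg (fun (g : s.pt ⟶ SimplexCategory.mk n) => g.toOrderHom x) s.condition
  have weq : projFst f f' e ≫ f = projSnd f f' e ≫ f' := by
    apply SimplexCategory.Hom.ext
    apply OrderHom.ext
    funext x
    exact (e x).2
  refine ⟨p, e, ?_⟩
  clear hp
  refine IsPullback.of_isLimit (PullbackCone.IsLimit.mk weq
    (fun s => SimplexCategory.Hom.mk
      { toFun := fun x => e.symm ⟨(s.fst.toOrderHom x, s.snd.toOrderHom x), scond s x⟩
        monotone' := fun x y h => e.symm.monotone
          ((pbs_le_iff _ _).mpr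
            ⟨s.fst.toOrderHom.monotone h, s.snd.toOrderHom.monotone h⟩) })
    (fun s => ?_) (fun s => ?_) (fun s u h1 h2 => ?_))
  · apply SimplexCategory.Hom.ext; apply OrderHom.ext; funext x
    show (e (e.symm ⟨(s.fst.toOrderHom x, s.snd.toOrderHom x), scond s x⟩)).val.1
      = s.fst.toOrderHom x
    exact congrArg (fun y : PullbackSet f f' => y.val.1) (e.apply_symm_apply _)
  · apply SimplexCategory.Hom.ext; apply OrderHom.ext; funext x
    show (e (e.symm ⟨(s.fst.toOrderHom x, s.snd.toOrderHom x), scond s x⟩)).val.2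
      = s.snd.toOrderHom x
    exact congrArg (fun y : PullbackSet f f' => y.val.2) (e.apply_symm_apply _)
  · apply SimplexCategory.Hom.ext; apply OrderHom.ext; funext x
    show u.toOrderHom x = e.symm ⟨(s.fst.toOrderHom x, s.snd.toOrderHom x), scond s x⟩
    apply e.injective
    refine Eq.trans ?_ (e.apply_symm_apply _).symm
    apply Subtype.ext
    exact Prod.ext
      (congrArg (fun (g : s.pt ⟶ SimplexCategory.mk m) => g.toOrderHom x) h1)
      (congrArg (fun (g : s.pt ⟶ SimplexCategory.mk m') => g.toOrderHom x) h2)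

lemma forward_bc {m m' n : ℕ} {f : SimplexCategory.mk m ⟶ SimplexCategory.mk n}
    {f' : SimplexCategory.mk m' ⟶ SimplexCategory.mk n} [HasPullback f f']
    {i : Fin (n + 1)} {a c : Fin (m + 1)} {a' c' : Fin (m' + 1)}
    (hac : a < c) (hac' : a' < c')
    (hfa : f.toOrderHom a = i) (hfc : f.toOrderHom c = i)
    (hfa' : f'.toOrderHom a' = i) (hfc' : f'.toOrderHom c' = i) : False := by
  have lift_pt : ∀ (u : Fin (m + 1)) (v : Fin (m' + 1)),
      f.toOrderHom u = f'.toOrderHom v →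
      ∃ x : Fin ((pullback f f').len + 1),
        (pullback.fst f f').toOrderHom x = u ∧ (pullback.snd f f').toOrderHom x = v := by
    intro u v huv
    have w : SimplexCategory.const (SimplexCategory.mk 0) (SimplexCategory.mk m) u ≫ f =
        SimplexCategory.const (SimplexCategory.mk 0) (SimplexCategory.mk m') v ≫ f' := by
      rw [SimplexCategory.const_comp, SimplexCategory.const_comp, huv]
    refine ⟨(pullback.lift _ _ w).toOrderHom 0, ?_, ?_⟩
    · exact congrArg
        (fun (g : SimplexCategory.mk 0 ⟶ SimplexCategory.mk m) => g.toOrderHom 0)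
        (pullback.lift_fst _ _ w)
    · exact congrArg
        (fun (g : SimplexCategory.mk 0 ⟶ SimplexCategory.mk m') => g.toOrderHom 0)
        (pullback.lift_snd _ _ w)
  obtain ⟨x1, hx1a, hx1b⟩ := lift_pt a c' (by rw [hfa, hfc'])
  obtain ⟨x2, hx2a, hx2b⟩ := lift_pt c a' (by rw [hfc, hfa'])
  rcases le_total x1 x2 with h | h
  · have := (pullback.snd f f').toOrderHom.monotone h
    rw [hx1b, hx2b] at this
    exact absurd this (not_le.mpr hac')
  · have := (pullback.fst f f').toOrderHom.monotone h
    rw [hx2a, hx1a] at this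
    exact absurd this (not_le.mpr hac)

/-- A cospan `(f, f')` in `Δ` admits a pullback iff it is backwards
compatible and some fiber of both `f` and `f'` is nonempty; in that case the set
`{(a,b) : f(a) = f'(b)}` with the componentwise order is a nonempty linear order, and it
is (via any order isomorphism with some `Fin (p+1)`) a pullback of `(f, f')` in `Δ`. -/
theorem hasPullback_iff_and_explicit_pullback {m m' n : ℕ}
    (f : SimplexCategory.mk m ⟶ SimplexCategory.mk n)
    (f' : SimplexCategory.mk m' ⟶ SimplexCategory.mk n) :
    (HasPullback f f' ↔
      (BackwardsCompatiblePair f f' ∧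
        ∃ i : Fin (n + 1), (∃ a, f.toOrderHom a = i) ∧ (∃ b, f'.toOrderHom b = i))) ∧
    ((BackwardsCompatiblePair f f' ∧
        ∃ i : Fin (n + 1), (∃ a, f.toOrderHom a = i) ∧ (∃ b, f'.toOrderHom b = i)) →
      (Nonempty (PullbackSet f f') ∧
        (∀ p q : PullbackSet f f', p ≤ q ∨ q ≤ p) ∧
        ∃ (p : ℕ) (e : Fin (p + 1) ≃o PullbackSet f f'),
          IsPullback (projFst f f' e) (projSnd f f' e) f f')) := by
  constructor
  · constructor
    · intro h
      constructor
      · intro i hcon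
        obtain ⟨⟨a, c, hac, hfa, hfc⟩, ⟨a', c', hac', hfa', hfc'⟩⟩ := hcon
        rcases lt_or_gt_of_ne hac with h1 | h1 <;> rcases lt_or_gt_of_ne hac' with h2 | h2
        · exact forward_bc (f := f) (f' := f') h1 h2 hfa hfc hfa' hfc'
        · exact forward_bc (f := f) (f' := f') h1 h2 hfa hfc hfc' hfa'
        · exact forward_bc (f := f) (f' := f') h1 h2 hfc hfa hfa' hfc'
        · exact forward_bc (f := f) (f' := f') h1 h2 hfc hfa hfc' hfa'
      · refine ⟨f.toOrderHom ((pullback.fst f f').toOrderHom 0),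
          ⟨(pullback.fst f f').toOrderHom 0, rfl⟩,
          ⟨(pullback.snd f f').toOrderHom 0, ?_⟩⟩
        exact (congrArg (fun (g : pullback f f' ⟶ SimplexCategory.mk n) => g.toOrderHom 0)
          (pullback.condition (f := f) (g := f'))).symm
    · rintro ⟨hbc, hne⟩
      obtain ⟨p, e, hpb⟩ := explicit_isPullback hbc hne
      exact hpb.hasPullback
  · rintro ⟨hbc, hne⟩
    obtain ⟨i, ⟨a, ha⟩, ⟨b, hb⟩⟩ := hne
    refine ⟨⟨⟨(a, b), by rw [ha, hb]⟩⟩, pbs_total hbc, ?_⟩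
    exact explicit_isPullback hbc ⟨i, ⟨a, ha⟩, ⟨b, hb⟩⟩

end HigherSegal
end

section
/- Let (f : I ⟶ [n], f' : I' ⟶ [n]) be a compatible pair of morphisms of the simplex category Δ. Then the pullback square of (f, f') in Δ — whose apex is the set {(a,b) ∈ I×I' : f(a) = f'(b)} linearly ordered by the componentwise order, with the two coordinate projections as the legs — exists and is also a pushout square in Δ. -/
/-!
Formalization of statements from "Higher Segal spaces via higher excision" (T. Walde).
-/

open CategoryTheory CategoryTheory.Limits SimplexCategory

universe v u

namespace HigherSegal

set_option linter.unusedVariables false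
set_option linter.unusedSectionVars false

section Aux
variable {m m' n : ℕ} {f : SimplexCategory.mk m ⟶ SimplexCategory.mk n}
    {f' : SimplexCategory.mk m' ⟶ SimplexCategory.mk n}

lemma CompatiblePair.symm (h : CompatiblePair f f') : CompatiblePair f' f :=
  ⟨fun i => by have := h.1 i; tauto, fun i => by have := h.2 i; tauto⟩

lemma bc1 (h : CompatiblePair f f') (i : Fin (n + 1)) :
    (∃! a, f.toOrderHom a = i) ∨ (∃! b, f'.toOrderHom b = i) := by
  have := h.1 i; tauto

lemma bc2 (h : CompatiblePair f f') (i : Fin n) :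
    (i.castSucc ∈ Set.range ⇑f.toOrderHom ∧ i.succ ∈ Set.range ⇑f.toOrderHom) ∨
    (i.castSucc ∈ Set.range ⇑f'.toOrderHom ∧ i.succ ∈ Set.range ⇑f'.toOrderHom) := by
  have := h.2 i; tauto

lemma mem_union (h : CompatiblePair f f') (i : Fin (n + 1)) :
    (∃ a, f.toOrderHom a = i) ∨ (∃ b, f'.toOrderHom b = i) :=
  (bc1 h i).imp (fun hu => hu.exists) (fun hu => hu.exists)

lemma descent (h : CompatiblePair f f') :
    ∀ (k : ℕ) (j : Fin (n + 1)), (f'.toOrderHom 0 : ℕ) + k = (j : ℕ) →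
      (∃ a, f.toOrderHom a = j) → ∃ a b, f.toOrderHom a = f'.toOrderHom b := by
  intro k
  induction k with
  | zero =>
    rintro j hj ⟨a, ha⟩
    exact ⟨a, 0, by rw [ha]; exact (Fin.ext (by omega)).symm⟩
  | succ k ih =>
    rintro j hj ⟨a, ha⟩
    have hj1 : (j : ℕ) - 1 < n := by omega
    set i : Fin n := ⟨(j : ℕ) - 1, hj1⟩ with hi
    have hisucc : i.succ = j := Fin.ext (by simp [hi]; omega)
    rcases bc2 h i with ⟨⟨a0, ha0⟩, -⟩ | ⟨-, ⟨b, hb⟩⟩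
    · exact ih i.castSucc (by simp [hi]; omega) ⟨a0, ha0⟩
    · exact ⟨a, b, by rw [ha, hb, hisucc]⟩

lemma exists_eq (h : CompatiblePair f f') :
    ∃ a b, f.toOrderHom a = f'.toOrderHom b := by
  rcases le_total (f'.toOrderHom 0) (f.toOrderHom 0) with h1 | h1
  · exact descent h ((f.toOrderHom 0 : ℕ) - (f'.toOrderHom 0 : ℕ)) (f.toOrderHom 0)
      (by omega) ⟨0, rfl⟩
  · obtain ⟨b, a, hba⟩ := descent h.symm ((f'.toOrderHom 0 : ℕ) - (f.toOrderHom 0 : ℕ))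
      (f'.toOrderHom 0) (by omega) ⟨0, rfl⟩
    exact ⟨a, b, hba.symm⟩

lemma mixed_case (h : CompatiblePair f f') {a a' : Fin (m + 1)} {b b' : Fin (m' + 1)}
    (hx : f.toOrderHom a = f'.toOrderHom b) (hy : f.toOrderHom a' = f'.toOrderHom b')
    (h1 : a ≤ a') (h2 : b' ≤ b) : (a ≤ a' ∧ b ≤ b') ∨ (a' ≤ a ∧ b' ≤ b) := by
  have efa : f.toOrderHom a = f.toOrderHom a' := by
    refine le_antisymm (f.toOrderHom.monotone h1) ?_
    rw [hy, hx]
    exact f'.toOrderHom.monotone h2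
  rcases bc1 h (f.toOrderHom a) with ⟨a0, -, hu⟩ | ⟨b0, -, hu⟩
  · have haa : a = a' := (hu a rfl).trans (hu a' efa.symm).symm
    exact Or.inr ⟨haa.ge, h2⟩
  · have hbb : b = b' := (hu b hx.symm).trans (hu b' (efa.trans hy).symm).symm
    exact Or.inl ⟨h1, hbb.le⟩

lemma pb_le_total (h : CompatiblePair f f') (x y : PullbackSet f f') : x ≤ y ∨ y ≤ x := by
  obtain ⟨⟨a, b⟩, hx⟩ := x
  obtain ⟨⟨a', b'⟩, hy⟩ := y
  rcases le_total a a' with h1 | h1 <;> rcases le_total b b' with h2 | h2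
  · exact Or.inl ⟨h1, h2⟩
  · rcases mixed_case h hx hy h1 h2 with ⟨u, v⟩ | ⟨u, v⟩
    · exact Or.inl ⟨u, v⟩
    · exact Or.inr ⟨u, v⟩
  · rcases mixed_case h hy hx h1 h2 with ⟨u, v⟩ | ⟨u, v⟩
    · exact Or.inr ⟨u, v⟩
    · exact Or.inl ⟨u, v⟩
  · exact Or.inr ⟨h1, h2⟩

lemma hom_ext_pt {a b : SimplexCategory} {u v : a ⟶ b}
    (H : ∀ x, u.toOrderHom x = v.toOrderHom x) : u = v :=
  SimplexCategory.Hom.ext _ _ (OrderHom.ext _ _ (funext H))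

end Aux
/-- For a compatible pair `(f, f')` in `Δ`, the pullback square with
apex the linearly ordered set `{(a,b) : f(a) = f'(b)}` and the coordinate projections as
legs exists and is also a pushout square in `Δ`. -/

theorem compatiblePair_pullback_isPushout {m m' n : ℕ}
    (f : SimplexCategory.mk m ⟶ SimplexCategory.mk n)
    (f' : SimplexCategory.mk m' ⟶ SimplexCategory.mk n)
    (h : CompatiblePair f f') :
    ∃ (p : ℕ) (e : Fin (p + 1) ≃o PullbackSet f f'),
      IsPullback (projFst f f' e) (projSnd f f' e) f f' ∧
      IsPushout (projFst f f' e) (projSnd f f' e) f f' := by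
  classical
  letI : LinearOrder (PullbackSet f f') :=
    { (inferInstance : PartialOrder (PullbackSet f f')) with
      le_total := pb_le_total h
      toDecidableLE := Classical.decRel _ }
  haveI : Fintype (PullbackSet f f') :=
    inferInstanceAs (Fintype { x : Fin (m + 1) × Fin (m' + 1) //
      f.toOrderHom x.1 = f'.toOrderHom x.2 })
  haveI hne : Nonempty (PullbackSet f f') := by
    obtain ⟨a, b, hab⟩ := exists_eq h
    exact ⟨⟨(a, b), hab⟩⟩
  have hcard : Fintype.card (PullbackSet f f')
      = (Fintype.card (PullbackSet f f') - 1) + 1 := by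
    have := Fintype.card_pos (α := PullbackSet f f')
    omega
  set p := Fintype.card (PullbackSet f f') - 1 with hp
  let e : Fin (p + 1) ≃o PullbackSet f f' := monoEquivOfFin (PullbackSet f f') hcard
  have comm : projFst f f' e ≫ f = projSnd f f' e ≫ f' :=
    hom_ext_pt fun x => (e x).prop
  -- the value of the projections
  have keyPB : ∀ (X : SimplexCategory) (u : X ⟶ SimplexCategory.mk m)
      (v : X ⟶ SimplexCategory.mk m'), u ≫ f = v ≫ f' →
      ∃ l : X ⟶ SimplexCategory.mk p,
        l ≫ projFst f f' e = u ∧ l ≫ projSnd f f' e = v := by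
    intro X u v huv
    have hw : ∀ x, f.toOrderHom (u.toOrderHom x) = f'.toOrderHom (v.toOrderHom x) :=
      fun x => congrArg (fun q => SimplexCategory.Hom.toOrderHom q x) huv
    refine ⟨SimplexCategory.Hom.mk
      { toFun := fun x => e.symm ⟨(u.toOrderHom x, v.toOrderHom x), hw x⟩
        monotone' := fun x y hxy => e.symm.monotone
          ⟨u.toOrderHom.monotone hxy, v.toOrderHom.monotone hxy⟩ }, ?_, ?_⟩
    · apply hom_ext_pt; intro x
      show (e (e.symm ⟨(u.toOrderHom x, v.toOrderHom x), hw x⟩)).val.1 = u.toOrderHom x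
      exact congrArg (fun z : PullbackSet f f' => z.val.1) (e.apply_symm_apply _)
    · apply hom_ext_pt; intro x
      show (e (e.symm ⟨(u.toOrderHom x, v.toOrderHom x), hw x⟩)).val.2 = v.toOrderHom x
      exact congrArg (fun z : PullbackSet f f' => z.val.2) (e.apply_symm_apply _)
  have uniqPB : ∀ (X : SimplexCategory) (l l' : X ⟶ SimplexCategory.mk p),
      l ≫ projFst f f' e = l' ≫ projFst f f' e →
      l ≫ projSnd f f' e = l' ≫ projSnd f f' e → l = l' := by
    intro X l l' h1 h2
    apply hom_ext_pt; intro x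
    apply e.injective
    apply Subtype.ext
    apply Prod.ext
    · exact congrArg (fun q => SimplexCategory.Hom.toOrderHom q x) h1
    · exact congrArg (fun q => SimplexCategory.Hom.toOrderHom q x) h2
  -- the pair relation
  have hP : ∀ (a : Fin (m + 1)) (b : Fin (m' + 1)), f.toOrderHom a = f'.toOrderHom b →
      ∀ (X : SimplexCategory) (u : SimplexCategory.mk m ⟶ X)
        (v : SimplexCategory.mk m' ⟶ X),
        projFst f f' e ≫ u = projSnd f f' e ≫ v →
        u.toOrderHom a = v.toOrderHom b := by
    intro a b hab X u v huv
    have := congrArg (fun q => SimplexCategory.Hom.toOrderHom q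
      (e.symm ⟨(a, b), hab⟩)) huv
    have ha : (e (e.symm ⟨(a, b), hab⟩)).val.1 = a :=
      congrArg (fun z : PullbackSet f f' => z.val.1) (e.apply_symm_apply _)
    have hb : (e (e.symm ⟨(a, b), hab⟩)).val.2 = b :=
      congrArg (fun z : PullbackSet f f' => z.val.2) (e.apply_symm_apply _)
    exact (congrArg u.toOrderHom ha).symm.trans (this.trans (congrArg v.toOrderHom hb))
  have keyPO : ∀ (X : SimplexCategory) (u : SimplexCategory.mk m ⟶ X)
      (v : SimplexCategory.mk m' ⟶ X),
      projFst f f' e ≫ u = projSnd f f' e ≫ v →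
      ∃ t : SimplexCategory.mk n ⟶ X, f ≫ t = u ∧ f' ≫ t = v := by
    intro X u v huv
    have key : ∀ i : Fin (n + 1), ∃ c : Fin (X.len + 1),
        (∀ a, f.toOrderHom a = i → u.toOrderHom a = c) ∧
        (∀ b, f'.toOrderHom b = i → v.toOrderHom b = c) := by
      intro i
      rcases bc1 h i with ⟨a0, ha0, hu⟩ | ⟨b0, hb0, hu⟩
      · refine ⟨u.toOrderHom a0, fun a ha => by rw [hu a ha], fun b hb => ?_⟩
        exact (hP a0 b (ha0.trans hb.symm) X u v huv).symm
      · refine ⟨v.toOrderHom b0, fun a ha => ?_, fun b hb => by rw [hu b hb]⟩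
        exact hP a b0 (ha.trans hb0.symm) X u v huv
    choose T hT1 hT2 using key
    have tmono : Monotone T := by
      rw [Fin.monotone_iff_le_succ]
      intro i
      rcases bc2 h i with ⟨⟨a, ha⟩, ⟨a', ha'⟩⟩ | ⟨⟨b, hb⟩, ⟨b', hb'⟩⟩
      · have haa : a ≤ a' := by
          by_contra hc
          push_neg at hc
          have := f.toOrderHom.monotone hc.le
          rw [ha, ha'] at this
          exact absurd (lt_of_lt_of_le (Fin.castSucc_lt_succ : i.castSucc < i.succ) this) (lt_irrefl _)
        rw [← hT1 _ a ha, ← hT1 _ a' ha']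
        exact u.toOrderHom.monotone haa
      · have hbb : b ≤ b' := by
          by_contra hc
          push_neg at hc
          have := f'.toOrderHom.monotone hc.le
          rw [hb, hb'] at this
          exact absurd (lt_of_lt_of_le (Fin.castSucc_lt_succ : i.castSucc < i.succ) this) (lt_irrefl _)
        rw [← hT2 _ b hb, ← hT2 _ b' hb']
        exact v.toOrderHom.monotone hbb
    refine ⟨SimplexCategory.Hom.mk ⟨T, tmono⟩, ?_, ?_⟩
    · exact hom_ext_pt fun a => (hT1 (f.toOrderHom a) a rfl).symm
    · exact hom_ext_pt fun b => (hT2 (f'.toOrderHom b) b rfl).symm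
  have uniqPO : ∀ (X : SimplexCategory) (t t' : SimplexCategory.mk n ⟶ X),
      f ≫ t = f ≫ t' → f' ≫ t = f' ≫ t' → t = t' := by
    intro X t t' h1 h2
    apply hom_ext_pt; intro i
    rcases mem_union h i with ⟨a, ha⟩ | ⟨b, hb⟩
    · have := congrArg (fun q => SimplexCategory.Hom.toOrderHom q a) h1
      rw [← ha]; exact this
    · have := congrArg (fun q => SimplexCategory.Hom.toOrderHom q b) h2
      rw [← hb]; exact this
  refine ⟨p, e, ?_, ?_⟩
  · refine IsPullback.of_isLimit (PullbackCone.IsLimit.mk comm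
      (fun s => (keyPB s.pt s.fst s.snd s.condition).choose)
      (fun s => (keyPB s.pt s.fst s.snd s.condition).choose_spec.1)
      (fun s => (keyPB s.pt s.fst s.snd s.condition).choose_spec.2)
      (fun s l h1 h2 => ?_))
    have hs := (keyPB s.pt s.fst s.snd s.condition).choose_spec
    exact uniqPB s.pt l _ (h1.trans hs.1.symm) (h2.trans hs.2.symm)
  · refine IsPushout.of_isColimit (PushoutCocone.IsColimit.mk comm
      (fun s => (keyPO s.pt s.inl s.inr s.condition).choose)
      (fun s => (keyPO s.pt s.inl s.inr s.condition).choose_spec.1)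
      (fun s => (keyPO s.pt s.inl s.inr s.condition).choose_spec.2)
      (fun s t h1 h2 => ?_))
    have hs := (keyPO s.pt s.inl s.inr s.condition).choose_spec
    exact uniqPO s.pt t _ (h1.trans hs.1.symm) (h2.trans hs.2.symm)

end HigherSegal
end

section
/- Let f : I ⟶ [n] and f' : I' ⟶ [n] be morphisms of the simplex category Δ and suppose there is a commutative square in Δ with f and f' as the two morphisms into [n] which is simultaneously a pullback square and a pushout square. Then the pair (f, f') is compatible. -/
/-!
Formalization of statements from "Higher Segal spaces via higher excision" (T. Walde).
-/

open CategoryTheory CategoryTheory.Limits SimplexCategory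

universe v u

namespace HigherSegal

set_option linter.unusedVariables false
set_option linter.unusedSectionVars false

lemma jointSurj {m m' n : ℕ}
    (f : SimplexCategory.mk m ⟶ SimplexCategory.mk n)
    (f' : SimplexCategory.mk m' ⟶ SimplexCategory.mk n)
    {w : SimplexCategory} (g : w ⟶ SimplexCategory.mk m) (g' : w ⟶ SimplexCategory.mk m')
    (h2 : IsPushout g g' f f') (i : Fin (n + 1)) :
    (∃ a, f.toOrderHom a = i) ∨ (∃ a, f'.toOrderHom a = i) := by
  by_contra hc
  rw [not_or] at hc
  simp only [not_exists] at hc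
  obtain ⟨hc1, hc2⟩ := hc
  let u : SimplexCategory.mk n ⟶ SimplexCategory.mk (n + 1) :=
    SimplexCategory.Hom.mk ⟨fun j => j.castSucc, fun a b h => by simpa using h⟩
  let v : SimplexCategory.mk n ⟶ SimplexCategory.mk (n + 1) :=
    SimplexCategory.Hom.mk ⟨fun j => if j = i then i.succ else j.castSucc, by
      intro a b hab
      dsimp only
      split_ifs with ha hb hb <;>
        simp only [Fin.le_def, Fin.ext_iff, Fin.val_succ, Fin.coe_castSucc] at * <;> omega⟩
  have hfu : f ≫ u = f ≫ v := by
    apply SimplexCategory.Hom.ext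
    ext a
    simp only [comp_toOrderHom, OrderHom.comp_coe, Function.comp_apply,
      SimplexCategory.Hom.toOrderHom_mk, u, v, OrderHom.coe_mk]
    rw [if_neg (hc1 a)]
    rfl
  have hfu' : f' ≫ u = f' ≫ v := by
    apply SimplexCategory.Hom.ext
    ext a
    simp only [comp_toOrderHom, OrderHom.comp_coe, Function.comp_apply,
      SimplexCategory.Hom.toOrderHom_mk, u, v, OrderHom.coe_mk]
    rw [if_neg (hc2 a)]
    rfl
  have huv : u = v := h2.hom_ext hfu hfu'
  have := congrArg (fun (φ : SimplexCategory.mk n ⟶ SimplexCategory.mk (n+1)) =>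
    (φ.toOrderHom i : ℕ)) huv
  change (i.castSucc : ℕ) = ((if i = i then i.succ else i.castSucc : Fin (n+1+1)) : ℕ) at this
  simp only [SimplexCategory.Hom.toOrderHom_mk, u, v, OrderHom.coe_mk, eq_self_iff_true, ite_true,
    Fin.coe_castSucc, Fin.val_succ] at this
  omega

lemma notBothDouble {m m' n : ℕ}
    (f : SimplexCategory.mk m ⟶ SimplexCategory.mk n)
    (f' : SimplexCategory.mk m' ⟶ SimplexCategory.mk n)
    {w : SimplexCategory} (g : w ⟶ SimplexCategory.mk m) (g' : w ⟶ SimplexCategory.mk m')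
    (h1 : IsPullback g g' f f') (i : Fin (n + 1))
    {a b : Fin (m + 1)} (hab : a ≠ b) (ha : f.toOrderHom a = i) (hb : f.toOrderHom b = i)
    {a' b' : Fin (m' + 1)} (hab' : a' ≠ b') (ha' : f'.toOrderHom a' = i)
    (hb' : f'.toOrderHom b' = i) : False := by
  -- comm squares for constants
  have key : ∀ (x : Fin (m + 1)) (y : Fin (m' + 1)), f.toOrderHom x = i → f'.toOrderHom y = i →
      ∃ z : Fin (w.len + 1), g.toOrderHom z = x ∧ g'.toOrderHom z = y := by
    intro x y hx hy
    have comm : SimplexCategory.const (SimplexCategory.mk 0) (SimplexCategory.mk m) x ≫ f =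
        SimplexCategory.const (SimplexCategory.mk 0) (SimplexCategory.mk m') y ≫ f' := by
      rw [SimplexCategory.const_comp, SimplexCategory.const_comp, hx, hy]
    refine ⟨(h1.lift _ _ comm).toOrderHom 0, ?_, ?_⟩
    · have h0 := congrArg (fun φ => SimplexCategory.Hom.toOrderHom φ 0) (h1.lift_fst _ _ comm)
      simp only [comp_toOrderHom, OrderHom.comp_coe, Function.comp_apply,
        SimplexCategory.const_apply] at h0
      exact h0
    · have h0 := congrArg (fun φ => SimplexCategory.Hom.toOrderHom φ 0) (h1.lift_snd _ _ comm)
      simp only [comp_toOrderHom, OrderHom.comp_coe, Function.comp_apply,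
        SimplexCategory.const_apply] at h0
      exact h0
  obtain ⟨z1, hz1g, hz1g'⟩ := key a b' ha hb'
  obtain ⟨z2, hz2g, hz2g'⟩ := key b a' hb ha'
  obtain ⟨z3, hz3g, hz3g'⟩ := key a a' ha ha'
  obtain ⟨z4, hz4g, hz4g'⟩ := key b b' hb hb'
  have mono := g.toOrderHom.monotone
  have mono' := g'.toOrderHom.monotone
  rcases le_total z1 z2 with h12 | h12 <;> rcases le_total z3 z4 with h34 | h34
  · -- a ≤ b, b' ≤ a' and a ≤ b, a' ≤ b'
    exact hab' (le_antisymm (hz3g' ▸ hz4g' ▸ mono' h34) (hz1g' ▸ hz2g' ▸ mono' h12))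
  · exact hab (le_antisymm (hz1g ▸ hz2g ▸ mono h12) (hz4g ▸ hz3g ▸ mono h34))
  · exact hab (le_antisymm (hz3g ▸ hz4g ▸ mono h34) (hz2g ▸ hz1g ▸ mono h12))
  · exact hab' (le_antisymm (hz2g' ▸ hz1g' ▸ mono' h12) (hz4g' ▸ hz3g' ▸ mono' h34))

lemma emptyDouble {m m' n : ℕ}
    (f : SimplexCategory.mk m ⟶ SimplexCategory.mk n)
    (f' : SimplexCategory.mk m' ⟶ SimplexCategory.mk n)
    {w : SimplexCategory} (g : w ⟶ SimplexCategory.mk m) (g' : w ⟶ SimplexCategory.mk m')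
    (h2 : IsPushout g g' f f') (i : Fin (n + 1))
    (hf : ∀ x, f.toOrderHom x ≠ i)
    {a' b' : Fin (m' + 1)} (hab' : a' < b') (ha' : f'.toOrderHom a' = i)
    (hb' : f'.toOrderHom b' = i) : False := by
  let u : SimplexCategory.mk m ⟶ SimplexCategory.mk (n + 1) :=
    SimplexCategory.Hom.mk ⟨fun x => if (f.toOrderHom x : ℕ) < (i : ℕ)
        then (f.toOrderHom x).castSucc else (f.toOrderHom x).succ, by
      intro x y hxy
      have hm := f.toOrderHom.monotone hxy
      dsimp only
      split_ifs <;>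
        simp only [Fin.le_def, Fin.val_succ, Fin.coe_castSucc] at * <;> omega⟩
  let v : SimplexCategory.mk m' ⟶ SimplexCategory.mk (n + 1) :=
    SimplexCategory.Hom.mk ⟨fun x => if (f'.toOrderHom x : ℕ) < (i : ℕ) ∨
        ((f'.toOrderHom x : ℕ) = (i : ℕ) ∧ x ≤ a')
        then (f'.toOrderHom x).castSucc else (f'.toOrderHom x).succ, by
      intro x y hxy
      have hm := f'.toOrderHom.monotone hxy
      dsimp only
      split_ifs <;>
        simp only [Fin.le_def, Fin.val_succ, Fin.coe_castSucc, not_or, not_and, not_lt,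
          not_le] at * <;> omega⟩
  have comm : g ≫ u = g' ≫ v := by
    apply SimplexCategory.Hom.ext
    ext z
    have hw := congrArg (fun φ => SimplexCategory.Hom.toOrderHom φ z) h2.w
    simp only [comp_toOrderHom, OrderHom.comp_coe, Function.comp_apply] at hw ⊢
    simp only [SimplexCategory.Hom.toOrderHom_mk, OrderHom.coe_mk, u, v]
    rw [← hw]
    have hne := hf (g.toOrderHom z)
    have hne' : (f.toOrderHom (g.toOrderHom z) : ℕ) ≠ (i : ℕ) := fun h => hne (Fin.ext h)
    split_ifs with h1 h2 h2
    · rfl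
    · exact absurd (Or.inl h1) h2
    · rcases h2 with h2 | ⟨h2, _⟩
      · exact absurd h2 h1
      · exact absurd h2 hne'
    · rfl
  have hE := congrFun (congrArg (fun φ => ⇑(SimplexCategory.Hom.toOrderHom φ))
    (h2.inr_desc u v comm))
  have hta := hE a'
  have htb := hE b'
  simp only [comp_toOrderHom, OrderHom.comp_coe, Function.comp_apply,
    SimplexCategory.Hom.toOrderHom_mk, OrderHom.coe_mk, v] at hta htb
  rw [ha'] at hta
  simp only [hb'] at htb
  rw [if_pos (Or.inr ⟨rfl, le_refl a'⟩)] at hta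
  rw [if_neg (by
    rintro (h | ⟨-, hle⟩)
    · exact lt_irrefl _ h
    · exact absurd hab' (not_lt.mpr hle))] at htb
  rw [hta] at htb
  have : (i.castSucc : ℕ) = (i.succ : ℕ) := congrArg Fin.val htb
  simp at this

lemma bc2Asym {m m' n : ℕ}
    (f : SimplexCategory.mk m ⟶ SimplexCategory.mk n)
    (f' : SimplexCategory.mk m' ⟶ SimplexCategory.mk n)
    {w : SimplexCategory} (g : w ⟶ SimplexCategory.mk m) (g' : w ⟶ SimplexCategory.mk m')
    (h2 : IsPushout g g' f f') (i : Fin n)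
    (hf : ∀ x, f.toOrderHom x ≠ i.castSucc)
    (hf' : ∀ x, f'.toOrderHom x ≠ i.succ)
    {x0 : Fin (m + 1)} (hx0 : f.toOrderHom x0 = i.succ)
    {x0' : Fin (m' + 1)} (hx0' : f'.toOrderHom x0' = i.castSucc) : False := by
  let u : SimplexCategory.mk m ⟶ SimplexCategory.mk 1 :=
    SimplexCategory.Hom.mk ⟨fun x => if (f.toOrderHom x : ℕ) ≤ (i : ℕ) + 1
        then 0 else 1, by
      intro x y hxy
      have hm : (f.toOrderHom x : ℕ) ≤ f.toOrderHom y := f.toOrderHom.monotone hxy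
      dsimp only
      split_ifs with hc1 hc2 hc2
      · exact le_refl _
      · exact Fin.zero_le _
      · exact absurd (le_trans hm hc2) hc1
      · exact le_refl _⟩
  let v : SimplexCategory.mk m' ⟶ SimplexCategory.mk 1 :=
    SimplexCategory.Hom.mk ⟨fun x => if (f'.toOrderHom x : ℕ) < (i : ℕ)
        then 0 else 1, by
      intro x y hxy
      have hm : (f'.toOrderHom x : ℕ) ≤ f'.toOrderHom y := f'.toOrderHom.monotone hxy
      dsimp only
      split_ifs with hc1 hc2 hc2
      · exact le_refl _
      · exact Fin.zero_le _
      · exact absurd (lt_of_le_of_lt hm hc2) (not_lt.mpr (not_lt.mp hc1))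
      · exact le_refl _⟩
  have comm : g ≫ u = g' ≫ v := by
    apply SimplexCategory.Hom.ext
    ext z
    have hw := congrArg (fun φ => SimplexCategory.Hom.toOrderHom φ z) h2.w
    simp only [comp_toOrderHom, OrderHom.comp_coe, Function.comp_apply] at hw ⊢
    simp only [SimplexCategory.Hom.toOrderHom_mk, OrderHom.coe_mk, u, v]
    change ((if (f.toOrderHom (g.toOrderHom z) : ℕ) ≤ (i : ℕ) + 1 then 0 else 1 : Fin 2) : ℕ) =
      ((if (f'.toOrderHom (g'.toOrderHom z) : ℕ) < (i : ℕ) then 0 else 1 : Fin 2) : ℕ)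
    rw [← hw]
    have h1 : (f.toOrderHom (g.toOrderHom z) : ℕ) ≠ (i : ℕ) := fun h =>
      hf (g.toOrderHom z) (Fin.ext (by simpa using h))
    have h2' : (f.toOrderHom (g.toOrderHom z) : ℕ) ≠ (i : ℕ) + 1 := by
      intro h
      apply hf' (g'.toOrderHom z)
      rw [← hw]
      exact Fin.ext (by simpa using h)
    split_ifs <;> first | rfl | omega
  have hE := congrFun (congrArg (fun φ => ⇑(SimplexCategory.Hom.toOrderHom φ))
    (h2.inl_desc u v comm))
  have hE' := congrFun (congrArg (fun φ => ⇑(SimplexCategory.Hom.toOrderHom φ))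
    (h2.inr_desc u v comm))
  have hta := hE x0
  have htb := hE' x0'
  simp only [comp_toOrderHom, OrderHom.comp_coe, Function.comp_apply,
    SimplexCategory.Hom.toOrderHom_mk, OrderHom.coe_mk, u, v] at hta htb
  change _ = (if (f.toOrderHom x0 : ℕ) ≤ (i : ℕ) + 1 then 0 else 1 : Fin 2) at hta
  change _ = (if (f'.toOrderHom x0' : ℕ) < (i : ℕ) then 0 else 1 : Fin 2) at htb
  simp only [hx0] at hta
  simp only [hx0'] at htb
  rw [if_pos (by simp)] at hta
  rw [if_neg (by simp)] at htb
  have hmono := (h2.desc u v comm).toOrderHom.monotone (le_of_lt (Fin.castSucc_lt_succ (i := i)))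
  rw [hta, htb] at hmono
  exact absurd hmono (by decide)

/-- If a commutative square in `Δ` with `f` and `f'` as the morphisms
into `[n]` is simultaneously a pullback and a pushout, then the pair `(f, f')`
is compatible. -/
theorem compatible_of_isPullback_isPushout {m m' n : ℕ}
    (f : SimplexCategory.mk m ⟶ SimplexCategory.mk n)
    (f' : SimplexCategory.mk m' ⟶ SimplexCategory.mk n)
    {w : SimplexCategory} (g : w ⟶ SimplexCategory.mk m) (g' : w ⟶ SimplexCategory.mk m')
    (h1 : IsPullback g g' f f') (h2 : IsPushout g g' f f') :
    CompatiblePair f f' := by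
  constructor
  · -- BC1
    rintro i ⟨hne, hne'⟩
    have key : ∀ {k : ℕ} (φ : SimplexCategory.mk k ⟶ SimplexCategory.mk n),
        ¬(∃! a, φ.toOrderHom a = i) →
        (∀ a, φ.toOrderHom a ≠ i) ∨
          (∃ a b, a ≠ b ∧ φ.toOrderHom a = i ∧ φ.toOrderHom b = i) := by
      intro k φ h
      by_cases he : ∃ a, φ.toOrderHom a = i
      · obtain ⟨a, ha⟩ := he
        right
        by_contra hno
        simp only [not_exists] at hno
        refine h ⟨a, ha, fun y hy => ?_⟩
        by_contra hy2
        exact hno y a ⟨hy2, hy, ha⟩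
      · left
        intro a ha
        exact he ⟨a, ha⟩
    have emptyDouble' : ∀ {k k' : ℕ} (φ : SimplexCategory.mk k ⟶ SimplexCategory.mk n)
        (φ' : SimplexCategory.mk k' ⟶ SimplexCategory.mk n) {v : SimplexCategory}
        (ψ : v ⟶ SimplexCategory.mk k) (ψ' : v ⟶ SimplexCategory.mk k')
        (hpo : IsPushout ψ ψ' φ φ'), (∀ x, φ.toOrderHom x ≠ i) →
        (∃ a b, a ≠ b ∧ φ'.toOrderHom a = i ∧ φ'.toOrderHom b = i) → False := by
      rintro k k' φ φ' v ψ ψ' hpo hemp ⟨a, b, hab, ha, hb⟩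
      rcases lt_or_gt_of_ne hab with hlt | hlt
      · exact emptyDouble φ φ' ψ ψ' hpo i hemp hlt ha hb
      · exact emptyDouble φ φ' ψ ψ' hpo i hemp hlt hb ha
    rcases key f hne with hf | hf <;> rcases key f' hne' with hf' | hf'
    · rcases jointSurj f f' g g' h2 i with ⟨a, ha⟩ | ⟨a, ha⟩
      · exact hf a ha
      · exact hf' a ha
    · exact emptyDouble' f f' g g' h2 hf hf'
    · exact emptyDouble' f' f g' g h2.flip hf' hf
    · obtain ⟨a, b, hab, ha, hb⟩ := hf
      obtain ⟨a', b', hab', ha', hb'⟩ := hf'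
      exact notBothDouble f f' g g' h1 i hab ha hb hab' ha' hb'
  · -- BC2
    rintro i ⟨hh, hh'⟩
    simp only [not_and_or, Set.mem_range, not_exists] at hh hh'
    have hsurj := jointSurj f f' g g' h2
    rcases hh with hc | hs <;> rcases hh' with hc' | hs'
    · rcases hsurj i.castSucc with ⟨a, ha⟩ | ⟨a, ha⟩
      · exact hc a ha
      · exact hc' a ha
    · -- f misses castSucc, f' misses succ
      rcases hsurj i.castSucc with ⟨a, ha⟩ | ⟨a, ha⟩
      · exact hc a ha
      · rcases hsurj i.succ with ⟨b, hb⟩ | ⟨b, hb⟩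
        · exact bc2Asym f f' g g' h2 i hc hs' hb ha
        · exact hs' b hb
    · -- f misses succ, f' misses castSucc
      rcases hsurj i.castSucc with ⟨a, ha⟩ | ⟨a, ha⟩
      · rcases hsurj i.succ with ⟨b, hb⟩ | ⟨b, hb⟩
        · exact hs b hb
        · exact bc2Asym f' f g' g h2.flip i hc' hs hb ha
      · exact hc' a ha
    · rcases hsurj i.succ with ⟨a, ha⟩ | ⟨a, ha⟩
      · exact hs a ha
      · exact hs' a ha

end HigherSegal
end

section
/- Let C be a category with finite limits, S a nonempty finite set, and X : Δᵒᵖ ⥤ C a simplicial object. Define the left path object P◁X : Δᵒᵖ ⥤ C by (P◁X)([n]) = X([n+1]) on objects and (P◁X)(α) = X(α⁺) on a morphism α : [m] ⟶ [n], where α⁺ : [m+1] ⟶ [n+1] is the morphism of Δ with α⁺(0) = 0 and α⁺(i+1) = α(i)+1. Then X sends every left active strongly biCartesian S-cube in Δ to a limit cube in C if and only if P◁X sends every strongly biCartesian S-cube in Δ to a limit cube in C. -/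
/-!
Formalization of statements from "Higher Segal spaces via higher excision" (T. Walde).
-/

open CategoryTheory CategoryTheory.Limits SimplexCategory

universe v u

namespace HigherSegal

set_option linter.unusedVariables false
set_option linter.unusedSectionVars false

/-- The cone over the restriction of an `S`-cube `R : Finset S ⥤ C` to the nonempty
subsets of `S`, with apex the value of the cube at `∅` and legs the images of the
inclusions `∅ ⊆ T`. -/
def cubeCone {C : Type u} [Category.{v} C] {S : Type} (R : Finset S ⥤ C) :
    Cone (ObjectProperty.ι (fun T : Finset S => T.Nonempty) ⋙ R) where
  pt := R.obj ⊥
  π :=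
    { app := fun T => R.map (homOfLE bot_le)
      naturality := fun T T' g => by
        dsimp
        rw [Category.id_comp, ← R.map_comp]
        rfl }

/-- An `S`-cube in `C` is a limit cube if the cone with apex its value at `∅` exhibits it
as the limit of the restriction of the cube to nonempty subsets of `S`. -/
def IsLimitCube {C : Type u} [Category.{v} C] {S : Type} (R : Finset S ⥤ C) : Prop :=
  Nonempty (IsLimit (cubeCone R))

/-- A morphism of `Δ` is left active if it preserves the minimal element. -/
def IsLeftActive {x y : SimplexCategory} (f : x ⟶ y) : Prop :=
  f.toOrderHom 0 = 0

/-- A morphism of `Δ` is right active if it preserves the maximal element. -/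
def IsRightActive {x y : SimplexCategory} (f : x ⟶ y) : Prop :=
  f.toOrderHom (Fin.last x.len) = Fin.last y.len

/-- A morphism of `Δ` is active if it is both left active and right active. -/
def IsActive {x y : SimplexCategory} (f : x ⟶ y) : Prop :=
  IsLeftActive f ∧ IsRightActive f

/-- A cube `Q : P(S)ᵒᵖ ⥤ Δ` is strongly biCartesian if each of its 2-dimensional faces
(indexed by `T ⊆ S` and distinct `s, s' ∈ S ∖ T`) is both a pullback and a pushout
square in `Δ`. -/
def StronglyBiCartesian {S : Type} [DecidableEq S]
    (Q : (Finset S)ᵒᵖ ⥤ SimplexCategory) : Prop :=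
  ∀ (T : Finset S) (s s' : S), s ∉ T → s' ∉ T → s ≠ s' →
    IsPullback
      (Q.map (homOfLE (Finset.insert_subset_insert s (Finset.subset_insert s' T))).op)
      (Q.map (homOfLE (Finset.subset_insert s (insert s' T))).op)
      (Q.map (homOfLE (Finset.subset_insert s T)).op)
      (Q.map (homOfLE (Finset.subset_insert s' T)).op) ∧
    IsPushout
      (Q.map (homOfLE (Finset.insert_subset_insert s (Finset.subset_insert s' T))).op)
      (Q.map (homOfLE (Finset.subset_insert s (insert s' T))).op)
      (Q.map (homOfLE (Finset.subset_insert s T)).op)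
      (Q.map (homOfLE (Finset.subset_insert s' T)).op)

/-- A cube in `Δ` is left active if all of its morphisms are left active. -/
def LeftActiveCube {S : Type} (Q : (Finset S)ᵒᵖ ⥤ SimplexCategory) : Prop :=
  ∀ {T T' : (Finset S)ᵒᵖ} (g : T ⟶ T'), IsLeftActive (Q.map g)

/-- A cube in `Δ` is right active if all of its morphisms are right active. -/
def RightActiveCube {S : Type} (Q : (Finset S)ᵒᵖ ⥤ SimplexCategory) : Prop :=
  ∀ {T T' : (Finset S)ᵒᵖ} (g : T ⟶ T'), IsRightActive (Q.map g)

/-- For `α : [m] ⟶ [n]` the morphism `α⁺ : [m+1] ⟶ [n+1]` with `α⁺(0) = 0` and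
`α⁺(i+1) = α(i) + 1`. -/
def plusFun {m n : ℕ} (α : Fin (m + 1) →o Fin (n + 1)) : Fin (m + 2) →o Fin (n + 2) where
  toFun i := if h : i = 0 then 0 else (α (i.pred h)).succ
  monotone' := by
    intro a b hab
    by_cases ha : a = 0
    · subst ha
      simp only [dif_pos rfl]
      exact Fin.zero_le _
    · have hb : b ≠ 0 := fun hb => ha (le_antisymm (hb ▸ hab) (Fin.zero_le a))
      show (if h : a = 0 then (0 : Fin (n + 2)) else (α (a.pred h)).succ) ≤
        (if h : b = 0 then 0 else (α (b.pred h)).succ)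
      rw [dif_neg ha, dif_neg hb]
      exact Fin.succ_le_succ_iff.mpr (α.monotone (Fin.pred_le_pred_iff.mpr hab))

/-- The functor `[0] ⋆ − : Δ ⥤ Δ`, sending `[n]` to `[n+1]` and `α` to `α⁺`. -/
def leftConeFunctor : SimplexCategory ⥤ SimplexCategory where
  obj x := SimplexCategory.mk (x.len + 1)
  map {x y} f := SimplexCategory.mkHom (plusFun f.toOrderHom)
  map_id x := by
    apply SimplexCategory.Hom.ext
    apply OrderHom.ext
    funext i
    show plusFun _ i = i
    simp only [plusFun, OrderHom.coe_mk]; dsimp only [DFunLike.coe]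
    split
    · rename_i h; rw [h]
    · rename_i h
      show ((SimplexCategory.Hom.toOrderHom (𝟙 x)) (i.pred h)).succ = i
      have : (SimplexCategory.Hom.toOrderHom (𝟙 x)) (i.pred h) = i.pred h := rfl
      rw [this, Fin.succ_pred]
  map_comp {x y z} f g := by
    apply SimplexCategory.Hom.ext
    apply OrderHom.ext
    funext i
    show plusFun (f ≫ g).toOrderHom i = plusFun g.toOrderHom (plusFun f.toOrderHom i)
    simp only [plusFun, OrderHom.coe_mk]; dsimp only [DFunLike.coe]
    by_cases h : i = 0
    · simp [h]
    · rw [dif_neg h, dif_neg h]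
      have h2 : (f.toOrderHom (i.pred h)).succ ≠ 0 := Fin.succ_ne_zero _
      erw [dif_neg h2, Fin.pred_succ]
      rfl

/-- The left path object `P◁X` of a simplicial object `X`: on objects
`(P◁X)([n]) = X([n+1])` and on morphisms `(P◁X)(α) = X(α⁺)`. -/
def leftPath {C : Type u} [Category.{v} C] (X : SimplexCategoryᵒᵖ ⥤ C) :
    SimplexCategoryᵒᵖ ⥤ C :=
  leftConeFunctor.op ⋙ X


section Helpers

open SimplexCategory

lemma hom_ext_pt_s8 {x y : SimplexCategory} {f g : x ⟶ y}
    (h : ∀ i, f.toOrderHom i = g.toOrderHom i) : f = g :=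
  SimplexCategory.Hom.ext _ _ (OrderHom.ext _ _ (funext h))

lemma hom_eq_apply {x y : SimplexCategory} {f g : x ⟶ y} (h : f = g) (i : Fin (x.len + 1)) :
    f.toOrderHom i = g.toOrderHom i := by erw [h]

lemma comp_apply' {x y z : SimplexCategory} (f : x ⟶ y) (g : y ⟶ z) (i : Fin (x.len + 1)) :
    (f ≫ g).toOrderHom i = g.toOrderHom (f.toOrderHom i) := rfl

lemma lplus_apply {x y : SimplexCategory} (f : x ⟶ y)
    (i : Fin ((leftConeFunctor.obj x).len + 1)) :
    (leftConeFunctor.map f).toOrderHom i =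
      if h : i = 0 then 0 else (f.toOrderHom (i.pred h)).succ := rfl

lemma lplus_zero {x y : SimplexCategory} (f : x ⟶ y) :
    (leftConeFunctor.map f).toOrderHom 0 = 0 := by
  erw [lplus_apply]
  exact dif_pos rfl

lemma lplus_succ {x y : SimplexCategory} (f : x ⟶ y) (i : Fin (x.len + 1)) :
    (leftConeFunctor.map f).toOrderHom i.succ = (f.toOrderHom i).succ := by
  erw [lplus_apply, dif_neg (Fin.succ_ne_zero i), Fin.pred_succ]

lemma lplus_eq_zero_iff {x y : SimplexCategory} (f : x ⟶ y)
    (i : Fin ((leftConeFunctor.obj x).len + 1)) :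
    (leftConeFunctor.map f).toOrderHom i = 0 ↔ i = 0 := by
  constructor
  · intro h
    by_contra hi
    erw [lplus_apply, dif_neg hi] at h
    exact Fin.succ_ne_zero _ h
  · rintro rfl
    exact lplus_zero f

/-- The degeneracy `σ₀ : [0] ⋆ x ⟶ x`. -/
def sigma0 (x : SimplexCategory) : leftConeFunctor.obj x ⟶ x :=
  show (mk (x.len + 1) : SimplexCategory) ⟶ mk x.len from
  SimplexCategory.mkHom
    { toFun := fun i => if h : i = 0 then 0 else i.pred h
      monotone' := by
        intro a b hab
        show (if h : a = 0 then (0 : Fin (x.len + 1)) else a.pred h) ≤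
          (if h : b = 0 then (0 : Fin (x.len + 1)) else b.pred h)
        by_cases ha : a = 0
        · erw [dif_pos ha]; exact Fin.zero_le _
        · have hb : b ≠ 0 := fun hb => ha (le_antisymm (hb ▸ hab) (Fin.zero_le a))
          erw [dif_neg ha, dif_neg hb]
          exact Fin.pred_le_pred_iff.mpr hab }

lemma sigma0_apply (x : SimplexCategory) (i : Fin ((leftConeFunctor.obj x).len + 1)) :
    (sigma0 x).toOrderHom i = if h : i = 0 then (0 : Fin (x.len + 1)) else i.pred h := rfl

/-- The face `δ₀ : x ⟶ [0] ⋆ x`. -/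
def delta0 (x : SimplexCategory) : x ⟶ leftConeFunctor.obj x :=
  show (mk x.len : SimplexCategory) ⟶ mk (x.len + 1) from
  SimplexCategory.mkHom
    { toFun := Fin.succ
      monotone' := fun _ _ h => Fin.succ_le_succ_iff.mpr h }

lemma delta0_apply (x : SimplexCategory) (i : Fin (x.len + 1)) :
    (delta0 x).toOrderHom i = i.succ := rfl

lemma delta0_comp_sigma0 (x : SimplexCategory) : delta0 x ≫ sigma0 x = 𝟙 x := by
  apply hom_ext_pt_s8
  intro i
  erw [comp_apply', delta0_apply, sigma0_apply, dif_neg (Fin.succ_ne_zero i)]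

lemma sigma0_natural {x y : SimplexCategory} (α : x ⟶ y) (hα : IsLeftActive α) :
    sigma0 x ≫ α = leftConeFunctor.map α ≫ sigma0 y := by
  apply hom_ext_pt_s8
  intro i
  rw [comp_apply', comp_apply', sigma0_apply, lplus_apply]
  by_cases hi : i = 0
  · erw [dif_pos hi, dif_pos hi, sigma0_apply, dif_pos rfl]
    exact hα
  · erw [dif_neg hi, dif_neg hi, sigma0_apply, dif_neg (Fin.succ_ne_zero _)]
    exact (Fin.pred_succ _).symm

lemma delta0_natural {x y : SimplexCategory} (α : x ⟶ y) :
    α ≫ delta0 y = delta0 x ≫ leftConeFunctor.map α := by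
  apply hom_ext_pt_s8
  intro i
  rw [comp_apply', comp_apply', delta0_apply, delta0_apply, lplus_succ]

end Helpers
section PlusPullback

open SimplexCategory

lemma pullback_pt_inj {A B C D : SimplexCategory} {p : A ⟶ B} {q : A ⟶ C} {f : B ⟶ D}
    {g : C ⟶ D} (h : IsPullback p q f g) {u v : Fin (A.len + 1)}
    (h1 : p.toOrderHom u = p.toOrderHom v) (h2 : q.toOrderHom u = q.toOrderHom v) : u = v := by
  have hc : SimplexCategory.const (SimplexCategory.mk 0) A u = SimplexCategory.const (SimplexCategory.mk 0) A v := by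
    apply h.hom_ext
    · erw [const_comp, const_comp, h1]
    · erw [const_comp, const_comp, h2]
  exact congrArg (fun φ : SimplexCategory.mk 0 ⟶ A => φ.toOrderHom 0) hc

lemma plus_isPullback {A B C D : SimplexCategory} {p : A ⟶ B} {q : A ⟶ C} {f : B ⟶ D}
    {g : C ⟶ D} (h : IsPullback p q f g) :
    IsPullback (leftConeFunctor.map p) (leftConeFunctor.map q)
      (leftConeFunctor.map f) (leftConeFunctor.map g) := by
  have weq : leftConeFunctor.map p ≫ leftConeFunctor.map f =
      leftConeFunctor.map q ≫ leftConeFunctor.map g := by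
    erw [← Functor.map_comp, ← Functor.map_comp, h.w]
  refine IsPullback.of_isLimit
    (c := PullbackCone.mk (leftConeFunctor.map p) (leftConeFunctor.map q) weq)
    (PullbackCone.isLimitAux' _ fun s => ?_)
  simp only [PullbackCone.mk_fst, PullbackCone.mk_snd]
  have key : ∀ i, (leftConeFunctor.map f).toOrderHom (s.fst.toOrderHom i) =
      (leftConeFunctor.map g).toOrderHom (s.snd.toOrderHom i) := fun i => by
    have := hom_eq_apply s.condition i
    erw [comp_apply', comp_apply'] at this; exact this
  have hz : ∀ i, s.fst.toOrderHom i = 0 ↔ s.snd.toOrderHom i = 0 := fun i => by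
    erw [← lplus_eq_zero_iff f (s.fst.toOrderHom i), key i, lplus_eq_zero_iff]
  by_cases hex : ∃ i, s.fst.toOrderHom i ≠ 0
  · -- there is a point not mapping to the cone point
    have hne : (Finset.univ.filter fun i => s.fst.toOrderHom i ≠ 0).Nonempty := by
      obtain ⟨i0, hi0⟩ := hex
      exact ⟨i0, Finset.mem_filter.mpr ⟨Finset.mem_univ i0, hi0⟩⟩
    set k := (Finset.univ.filter fun i => s.fst.toOrderHom i ≠ 0).min' hne with hkdef
    have hk : s.fst.toOrderHom k ≠ 0 := (Finset.mem_filter.mp (Finset.min'_mem _ hne)).2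
    have hmin : ∀ i, s.fst.toOrderHom i ≠ 0 → k ≤ i := fun i hi =>
      Finset.min'_le _ i (Finset.mem_filter.mpr ⟨Finset.mem_univ i, hi⟩)
    have anz : ∀ i, s.fst.toOrderHom (i ⊔ k) ≠ 0 := fun i h0 =>
      hk (Fin.le_zero_iff.mp (le_of_le_of_eq (s.fst.toOrderHom.monotone le_sup_right) h0))
    have bnz : ∀ i, s.snd.toOrderHom (i ⊔ k) ≠ 0 := fun i h0 => anz i ((hz _).mpr h0)
    let abar : s.pt ⟶ B := SimplexCategory.Hom.mk
      { toFun := fun i => (s.fst.toOrderHom (i ⊔ k)).pred (anz i)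
        monotone' := fun i j hij => Fin.pred_le_pred_iff.mpr
          (s.fst.toOrderHom.monotone (sup_le_sup_right hij k)) }
    let bbar : s.pt ⟶ C := SimplexCategory.Hom.mk
      { toFun := fun i => (s.snd.toOrderHom (i ⊔ k)).pred (bnz i)
        monotone' := fun i j hij => Fin.pred_le_pred_iff.mpr
          (s.snd.toOrderHom.monotone (sup_le_sup_right hij k)) }
    have abar_apply : ∀ i, abar.toOrderHom i = (s.fst.toOrderHom (i ⊔ k)).pred (anz i) :=
      fun _ => rfl
    have bbar_apply : ∀ i, bbar.toOrderHom i = (s.snd.toOrderHom (i ⊔ k)).pred (bnz i) :=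
      fun _ => rfl
    have wpb : abar ≫ f = bbar ≫ g := by
      apply hom_ext_pt_s8
      intro i
      rw [comp_apply', comp_apply', abar_apply, bbar_apply]
      have hkey := key (i ⊔ k)
      erw [← Fin.succ_pred (s.fst.toOrderHom (i ⊔ k)) (anz i),
        ← Fin.succ_pred (s.snd.toOrderHom (i ⊔ k)) (bnz i), lplus_succ, lplus_succ] at hkey
      exact Fin.succ_injective _ hkey
    set ℓ := h.lift abar bbar wpb with hldef
    have hl1 : ∀ i, p.toOrderHom (ℓ.toOrderHom i) = abar.toOrderHom i := fun i => by
      have := hom_eq_apply (h.lift_fst abar bbar wpb) i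
      erw [comp_apply'] at this; exact this
    have hl2 : ∀ i, q.toOrderHom (ℓ.toOrderHom i) = bbar.toOrderHom i := fun i => by
      have := hom_eq_apply (h.lift_snd abar bbar wpb) i
      erw [comp_apply'] at this; exact this
    have pfac : ∀ i (hi : s.fst.toOrderHom i ≠ 0),
        (p.toOrderHom (ℓ.toOrderHom i)).succ = s.fst.toOrderHom i := fun i hi => by
      have hik : i ⊔ k = i := sup_eq_left.mpr (hmin i hi)
      erw [hl1 i, abar_apply, Fin.succ_pred, hik]
    have qfac : ∀ i (hi : s.fst.toOrderHom i ≠ 0),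
        (q.toOrderHom (ℓ.toOrderHom i)).succ = s.snd.toOrderHom i := fun i hi => by
      have hik : i ⊔ k = i := sup_eq_left.mpr (hmin i hi)
      erw [hl2 i, bbar_apply, Fin.succ_pred, hik]
    refine ⟨SimplexCategory.Hom.mk
      { toFun := fun i => if s.fst.toOrderHom i = 0 then 0 else (ℓ.toOrderHom i).succ
        monotone' := ?_ }, ?_, ?_, ?_⟩
    · intro i j hij
      show (if s.fst.toOrderHom i = 0 then 0 else (ℓ.toOrderHom i).succ) ≤
        (if s.fst.toOrderHom j = 0 then 0 else (ℓ.toOrderHom j).succ)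
      by_cases hi : s.fst.toOrderHom i = 0
      · erw [if_pos hi]; exact Fin.zero_le _
      · have hj : s.fst.toOrderHom j ≠ 0 := fun h0 =>
          hi (Fin.le_zero_iff.mp (le_of_le_of_eq (s.fst.toOrderHom.monotone hij) h0))
        erw [if_neg hi, if_neg hj]
        exact Fin.succ_le_succ_iff.mpr (ℓ.toOrderHom.monotone hij)
    · apply hom_ext_pt_s8
      intro i
      erw [comp_apply']
      show (leftConeFunctor.map p).toOrderHom
        (if s.fst.toOrderHom i = 0 then 0 else (ℓ.toOrderHom i).succ) = s.fst.toOrderHom i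
      by_cases hi : s.fst.toOrderHom i = 0
      · erw [if_pos hi, lplus_zero]; exact hi.symm
      · erw [if_neg hi, lplus_succ]; exact pfac i hi
    · apply hom_ext_pt_s8
      intro i
      erw [comp_apply']
      show (leftConeFunctor.map q).toOrderHom
        (if s.fst.toOrderHom i = 0 then 0 else (ℓ.toOrderHom i).succ) = s.snd.toOrderHom i
      by_cases hi : s.fst.toOrderHom i = 0
      · erw [if_pos hi, lplus_zero]; exact ((hz i).mp hi).symm
      · erw [if_neg hi, lplus_succ]; exact qfac i hi
    · intro m hm1 hm2
      apply hom_ext_pt_s8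
      intro i
      have e1 : (leftConeFunctor.map p).toOrderHom (m.toOrderHom i) = s.fst.toOrderHom i := by
        have := hom_eq_apply hm1 i; erw [comp_apply'] at this; exact this
      have e2 : (leftConeFunctor.map q).toOrderHom (m.toOrderHom i) = s.snd.toOrderHom i := by
        have := hom_eq_apply hm2 i; erw [comp_apply'] at this; exact this
      show m.toOrderHom i =
        (if s.fst.toOrderHom i = 0 then 0 else (ℓ.toOrderHom i).succ)
      by_cases hi : s.fst.toOrderHom i = 0
      · erw [if_pos hi]
        exact (lplus_eq_zero_iff p _).mp (e1.trans hi)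
      · erw [if_neg hi]
        have hmi : m.toOrderHom i ≠ 0 := fun h0 => hi (by erw [← e1, h0, lplus_zero])
        have e1' : (p.toOrderHom ((m.toOrderHom i).pred hmi)).succ = s.fst.toOrderHom i := by
          erw [← lplus_succ, Fin.succ_pred]; exact e1
        have e2' : (q.toOrderHom ((m.toOrderHom i).pred hmi)).succ = s.snd.toOrderHom i := by
          erw [← lplus_succ, Fin.succ_pred]; exact e2
        have hu : (m.toOrderHom i).pred hmi = ℓ.toOrderHom i :=
          pullback_pt_inj h (Fin.succ_injective _ (e1'.trans (pfac i hi).symm))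
            (Fin.succ_injective _ (e2'.trans (qfac i hi).symm))
        erw [← Fin.succ_pred (m.toOrderHom i) hmi, hu]
        rfl
  · -- everything maps to the cone point
    push_neg at hex
    refine ⟨SimplexCategory.const s.pt (leftConeFunctor.obj A) 0, ?_, ?_, ?_⟩
    · apply hom_ext_pt_s8
      intro i
      show (leftConeFunctor.map p).toOrderHom 0 = s.fst.toOrderHom i
      erw [lplus_zero]
      exact (hex i).symm
    · apply hom_ext_pt_s8
      intro i
      show (leftConeFunctor.map q).toOrderHom 0 = s.snd.toOrderHom i
      erw [lplus_zero]
      exact ((hz i).mp (hex i)).symm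
    · intro m hm1 hm2
      apply hom_ext_pt_s8
      intro i
      show m.toOrderHom i = 0
      have e1 : (leftConeFunctor.map p).toOrderHom (m.toOrderHom i) = s.fst.toOrderHom i := by
        have := hom_eq_apply hm1 i; erw [comp_apply'] at this; exact this
      exact (lplus_eq_zero_iff p _).mp (e1.trans (hex i))

end PlusPullback
section PlusPushout

open SimplexCategory

lemma plus_isPushout {A B C D : SimplexCategory} {p : A ⟶ B} {q : A ⟶ C} {f : B ⟶ D}
    {g : C ⟶ D} (h : IsPushout p q f g) :
    IsPushout (leftConeFunctor.map p) (leftConeFunctor.map q)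
      (leftConeFunctor.map f) (leftConeFunctor.map g) := by
  have weq : leftConeFunctor.map p ≫ leftConeFunctor.map f =
      leftConeFunctor.map q ≫ leftConeFunctor.map g := by
    erw [← Functor.map_comp, ← Functor.map_comp, h.w]
  refine IsPushout.of_isColimit
    (c := PushoutCocone.mk (leftConeFunctor.map f) (leftConeFunctor.map g) weq)
    (PushoutCocone.isColimitAux' _ fun s => ?_)
  simp only [PushoutCocone.mk_inl, PushoutCocone.mk_inr]
  have key : ∀ i, s.inl.toOrderHom ((leftConeFunctor.map p).toOrderHom i) =
      s.inr.toOrderHom ((leftConeFunctor.map q).toOrderHom i) := fun i => by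
    have := hom_eq_apply s.condition i
    erw [comp_apply', comp_apply'] at this; exact this
  have key0 : s.inl.toOrderHom 0 = s.inr.toOrderHom 0 := by
    have := key 0
    erw [lplus_zero, lplus_zero] at this; exact this
  -- the restrictions of the two legs
  let u' : B ⟶ s.pt := delta0 B ≫ s.inl
  let v' : C ⟶ s.pt := delta0 C ≫ s.inr
  have u'_apply : ∀ i, u'.toOrderHom i = s.inl.toOrderHom i.succ := fun _ => rfl
  have v'_apply : ∀ i, v'.toOrderHom i = s.inr.toOrderHom i.succ := fun _ => rfl
  have wpo : p ≫ u' = q ≫ v' := by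
    apply hom_ext_pt_s8
    intro i
    show s.inl.toOrderHom ((p.toOrderHom i).succ) = s.inr.toOrderHom ((q.toOrderHom i).succ)
    erw [← lplus_succ p, ← lplus_succ q]
    exact key i.succ
  set w' := h.desc u' v' wpo with hw'def
  have hw1 : ∀ i, w'.toOrderHom (f.toOrderHom i) = s.inl.toOrderHom i.succ := fun i => by
    have := hom_eq_apply (h.inl_desc u' v' wpo) i
    erw [comp_apply'] at this; exact this
  have hw2 : ∀ i, w'.toOrderHom (g.toOrderHom i) = s.inr.toOrderHom i.succ := fun i => by
    have := hom_eq_apply (h.inr_desc u' v' wpo) i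
    erw [comp_apply'] at this; exact this
  -- joint surjectivity at the bottom
  have hzero : f.toOrderHom 0 = 0 ∨ g.toOrderHom 0 = 0 := by
    by_contra hcon
    push_neg at hcon
    obtain ⟨hf0, hg0⟩ := hcon
    have hfall : ∀ i, f.toOrderHom i ≠ 0 := fun i h0 =>
      hf0 (Fin.le_zero_iff.mp (le_of_le_of_eq (f.toOrderHom.monotone (Fin.zero_le i)) h0))
    have hgall : ∀ i, g.toOrderHom i ≠ 0 := fun i h0 =>
      hg0 (Fin.le_zero_iff.mp (le_of_le_of_eq (g.toOrderHom.monotone (Fin.zero_le i)) h0))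
    let w1 : D ⟶ SimplexCategory.mk 1 := SimplexCategory.const D (SimplexCategory.mk 1) 1
    let w2 : D ⟶ SimplexCategory.mk 1 := SimplexCategory.Hom.mk
      { toFun := fun i => if i = 0 then 0 else 1
        monotone' := by
          intro a b hab
          show (if a = 0 then (0 : Fin 2) else 1) ≤ (if b = 0 then (0 : Fin 2) else 1)
          by_cases ha : a = 0
          · erw [if_pos ha]; exact Fin.zero_le _
          · have hb : b ≠ 0 := fun hb => ha (le_antisymm (hb ▸ hab) (Fin.zero_le a))
            erw [if_neg ha, if_neg hb] }
    have hw12 : w1 = w2 := by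
      apply h.hom_ext
      · apply hom_ext_pt_s8
        intro i
        erw [comp_apply', comp_apply']
        show (1 : Fin 2) = if f.toOrderHom i = 0 then 0 else 1
        erw [if_neg (hfall i)]
      · apply hom_ext_pt_s8
        intro i
        erw [comp_apply', comp_apply']
        show (1 : Fin 2) = if g.toOrderHom i = 0 then 0 else 1
        erw [if_neg (hgall i)]
    have := congrArg (fun φ : D ⟶ SimplexCategory.mk 1 => φ.toOrderHom 0) hw12
    simp only at this
    have : (1 : Fin 2) = if (0 : Fin (D.len + 1)) = 0 then 0 else 1 := this
    erw [if_pos rfl] at this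
    exact one_ne_zero this
  have hw'0 : s.inl.toOrderHom 0 ≤ w'.toOrderHom 0 := by
    rcases hzero with h0 | h0
    · have := hw1 0
      erw [h0] at this
      erw [this]
      exact s.inl.toOrderHom.monotone (Fin.zero_le _)
    · have := hw2 0
      erw [h0] at this
      erw [this, key0]
      exact s.inr.toOrderHom.monotone (Fin.zero_le _)
  refine ⟨SimplexCategory.Hom.mk
    { toFun := fun i => if hi : i = 0 then s.inl.toOrderHom 0
        else w'.toOrderHom (i.pred hi)
      monotone' := ?_ }, ?_, ?_, ?_⟩
  · intro a b hab
    show (if ha : a = 0 then s.inl.toOrderHom 0 else w'.toOrderHom (a.pred ha)) ≤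
      (if hb : b = 0 then s.inl.toOrderHom 0 else w'.toOrderHom (b.pred hb))
    by_cases ha : a = 0
    · erw [dif_pos ha]
      by_cases hb : b = 0
      · erw [dif_pos hb]
      · erw [dif_neg hb]
        exact le_trans hw'0 (w'.toOrderHom.monotone (Fin.zero_le _))
    · have hb : b ≠ 0 := fun hb => ha (le_antisymm (hb ▸ hab) (Fin.zero_le a))
      erw [dif_neg ha, dif_neg hb]
      exact w'.toOrderHom.monotone (Fin.pred_le_pred_iff.mpr hab)
  · apply hom_ext_pt_s8
    intro i
    erw [comp_apply']
    show (if hi : (leftConeFunctor.map f).toOrderHom i = 0 then s.inl.toOrderHom 0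
      else w'.toOrderHom (((leftConeFunctor.map f).toOrderHom i).pred hi)) = s.inl.toOrderHom i
    by_cases hi : i = 0
    · subst hi
      erw [dif_pos (lplus_zero f)]
    · have hne' : ¬((leftConeFunctor.map f).toOrderHom i = 0) :=
        (lplus_eq_zero_iff f i).not.mpr hi
      have hfi : (leftConeFunctor.map f).toOrderHom i = (f.toOrderHom (i.pred hi)).succ := by
        conv_lhs => erw [← Fin.succ_pred i hi]
        erw [lplus_succ]
      have hpred : ((leftConeFunctor.map f).toOrderHom i).pred hne' =
          f.toOrderHom (i.pred hi) := Fin.succ_injective _ (by erw [Fin.succ_pred, hfi]; rfl)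
      erw [dif_neg hne', hpred, hw1, Fin.succ_pred]
  · apply hom_ext_pt_s8
    intro i
    erw [comp_apply']
    show (if hi : (leftConeFunctor.map g).toOrderHom i = 0 then s.inl.toOrderHom 0
      else w'.toOrderHom (((leftConeFunctor.map g).toOrderHom i).pred hi)) = s.inr.toOrderHom i
    by_cases hi : i = 0
    · subst hi
      erw [dif_pos (lplus_zero g)]
      exact key0
    · have hne' : ¬((leftConeFunctor.map g).toOrderHom i = 0) :=
        (lplus_eq_zero_iff g i).not.mpr hi
      have hgi : (leftConeFunctor.map g).toOrderHom i = (g.toOrderHom (i.pred hi)).succ := by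
        conv_lhs => erw [← Fin.succ_pred i hi]
        erw [lplus_succ]
      have hpred : ((leftConeFunctor.map g).toOrderHom i).pred hne' =
          g.toOrderHom (i.pred hi) := Fin.succ_injective _ (by erw [Fin.succ_pred, hgi]; rfl)
      erw [dif_neg hne', hpred, hw2, Fin.succ_pred]
  · intro m hm1 hm2
    have e1 : ∀ i, m.toOrderHom ((leftConeFunctor.map f).toOrderHom i) = s.inl.toOrderHom i :=
      fun i => by
        have := hom_eq_apply hm1 i
        erw [comp_apply'] at this; exact this
    have e2 : ∀ i, m.toOrderHom ((leftConeFunctor.map g).toOrderHom i) = s.inr.toOrderHom i :=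
      fun i => by
        have := hom_eq_apply hm2 i
        erw [comp_apply'] at this; exact this
    have hm' : delta0 D ≫ m = w' := by
      apply h.hom_ext
      · apply hom_ext_pt_s8
        intro i
        show m.toOrderHom ((f.toOrderHom i).succ) = w'.toOrderHom (f.toOrderHom i)
        have h1 := e1 i.succ
        erw [lplus_succ] at h1
        erw [h1, hw1]
      · apply hom_ext_pt_s8
        intro i
        show m.toOrderHom ((g.toOrderHom i).succ) = w'.toOrderHom (g.toOrderHom i)
        have h2 := e2 i.succ
        erw [lplus_succ] at h2
        erw [h2, hw2]
    apply hom_ext_pt_s8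
    intro i
    show m.toOrderHom i = (if hi : i = 0 then s.inl.toOrderHom 0
      else w'.toOrderHom (i.pred hi))
    by_cases hi : i = 0
    · erw [dif_pos hi, hi]
      have := e1 0
      erw [lplus_zero] at this; exact this
    · erw [dif_neg hi]
      have := hom_eq_apply hm' (i.pred hi)
      erw [comp_apply', delta0_apply, Fin.succ_pred] at this
      exact this
end PlusPushout
section Retract

lemma isLimitCube_of_retract {C : Type u} [Category.{v} C] {S : Type}
    {A B : Finset S ⥤ C} (i : A ⟶ B) (r : B ⟶ A) (hir : i ≫ r = 𝟙 A)
    (hB : IsLimitCube B) : IsLimitCube A := by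
  obtain ⟨hB⟩ := hB
  constructor
  refine
    { lift := fun c =>
        hB.lift ⟨c.pt, c.π ≫ Functor.whiskerLeft (ObjectProperty.ι _) i⟩ ≫ r.app ⊥
      fac := fun c j => ?_
      uniq := fun c m hm => ?_ }
  · dsimp only [cubeCone]
    rw [Category.assoc, ← r.naturality, ← Category.assoc]
    have hf := hB.fac ⟨c.pt, c.π ≫ Functor.whiskerLeft (ObjectProperty.ι _) i⟩ j
    dsimp only [cubeCone] at hf
    simp only [NatTrans.comp_app, Functor.whiskerLeft_app] at hf
    rw [hf, Category.assoc, ← NatTrans.comp_app, hir]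
    simp
  · have h1 : m ≫ i.app ⊥ = hB.lift ⟨c.pt, c.π ≫ Functor.whiskerLeft (ObjectProperty.ι _) i⟩ := by
      apply hB.uniq ⟨c.pt, c.π ≫ Functor.whiskerLeft (ObjectProperty.ι _) i⟩
      intro j
      dsimp only [cubeCone]
      simp only [NatTrans.comp_app, Functor.whiskerLeft_app]
      erw [Category.assoc, ← i.naturality, ← Category.assoc]
      have hmj := hm j
      dsimp only [cubeCone] at hmj
      rw [hmj]
    have h2 : m = (m ≫ i.app ⊥) ≫ r.app ⊥ := by
      erw [Category.assoc, ← NatTrans.comp_app, hir]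
      exact (Category.comp_id m).symm
    rw [h2, h1]
    rfl

end Retract

/-- A simplicial object `X` sends every left active strongly biCartesian
`S`-cube in `Δ` to a limit cube iff its left path object `P◁X` sends every strongly
biCartesian `S`-cube in `Δ` to a limit cube. -/
theorem leftActive_excision_iff_leftPath_excision {C : Type u} [Category.{v} C]
    [HasFiniteLimits C] {S : Type} [Fintype S] [DecidableEq S] [Nonempty S]
    (X : SimplexCategoryᵒᵖ ⥤ C) :
    (∀ Q : (Finset S)ᵒᵖ ⥤ SimplexCategory, StronglyBiCartesian Q → LeftActiveCube Q →
        IsLimitCube (Q.rightOp ⋙ X)) ↔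
      (∀ Q : (Finset S)ᵒᵖ ⥤ SimplexCategory, StronglyBiCartesian Q →
        IsLimitCube (Q.rightOp ⋙ leftPath X)) := by
  constructor
  · -- left active excision implies path excision
    intro hX Q hQ
    have hsbc : StronglyBiCartesian (Q ⋙ leftConeFunctor) := by
      intro T s s' hs hs' hss
      obtain ⟨h1, h2⟩ := hQ T s s' hs hs' hss
      exact ⟨plus_isPullback h1, plus_isPushout h2⟩
    have hla : LeftActiveCube (Q ⋙ leftConeFunctor) := by
      intro T T' g
      exact lplus_zero (Q.map g)
    exact hX _ hsbc hla
  · -- path excision implies left active excision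
    intro hP Q hQ hQla
    have hB : IsLimitCube (Q.rightOp ⋙ leftPath X) := hP Q hQ
    refine isLimitCube_of_retract
      (A := Q.rightOp ⋙ X) (B := Q.rightOp ⋙ leftPath X)
      { app := fun T => X.map (sigma0 (Q.obj (Opposite.op T))).op
        naturality := fun T T' g => ?_ }
      { app := fun T => X.map (delta0 (Q.obj (Opposite.op T))).op
        naturality := fun T T' g => ?_ }
      ?_ hB
    · -- naturality of the σ₀ transformation
      dsimp only [Functor.comp_map, Functor.rightOp_map, leftPath, Functor.op_map,
        Quiver.Hom.unop_op]
      rw [← X.map_comp, ← X.map_comp, ← op_comp, ← op_comp,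
        sigma0_natural (Q.map g.op) (hQla g.op)]
    · -- naturality of the δ₀ transformation
      dsimp only [Functor.comp_map, Functor.rightOp_map, leftPath, Functor.op_map,
        Quiver.Hom.unop_op]
      rw [← X.map_comp, ← X.map_comp, ← op_comp, ← op_comp, delta0_natural (Q.map g.op)]
    · -- the composition is the identity
      ext T
      dsimp only [NatTrans.comp_app]
      erw [← X.map_comp, ← op_comp, delta0_comp_sigma0, op_id]
      simp


end HigherSegal
end

section
/- Let C be a category with finite limits, k ≥ 1, and X : Δᵒᵖ ⥤ C a simplicial object. Suppose that for every n ≥ 2k there exists a compatible family (I_0, …, I_k) of k+1 nonempty proper subsets of {0,…,n} whose intersection cube is sent by X to a limit cube in C. Then for every n ≥ 0, X sends the intersection cube of every compatible family of k+1 nonempty subsets of {0,…,n} to a limit cube in C. (For a compatible family all intersections of its members are nonempty, so its intersection cube is defined.) -/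
/-!
Formalization of statements from "Higher Segal spaces via higher excision" (T. Walde).
-/

open CategoryTheory CategoryTheory.Limits SimplexCategory

universe v u

namespace HigherSegal

set_option linter.unusedVariables false
set_option linter.unusedSectionVars false

/-- A family of subsets of `{0, …, n}` is compatible if each `i ∈ {0, …, n}` lies in all
but at most one of them and each pair `{i−1, i}` of consecutive elements is contained in
all but at most one of them. -/
def CompatibleFamily {n : ℕ} {S : Type} (I : S → Finset (Fin (n + 1))) : Prop :=
  (∀ i : Fin (n + 1), ∀ s t : S, i ∉ I s → i ∉ I t → s = t) ∧
  (∀ i : Fin n, ∀ s t : S,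
      ¬(i.castSucc ∈ I s ∧ i.succ ∈ I s) → ¬(i.castSucc ∈ I t ∧ i.succ ∈ I t) → s = t)

/-- The intersection `⋂_{t ∈ T} I_t` (with the empty intersection equal to
`{0, …, n}`). -/
def interOf {n : ℕ} {S : Type} (I : S → Finset (Fin (n + 1))) (T : Finset S) :
    Finset (Fin (n + 1)) :=
  Finset.univ.filter fun i => ∀ t ∈ T, i ∈ I t

lemma interOf_anti {n : ℕ} {S : Type} (I : S → Finset (Fin (n + 1)))
    {T T' : Finset S} (h : T ⊆ T') : interOf I T' ⊆ interOf I T := by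
  intro i hi
  simp only [interOf, Finset.mem_filter] at *
  exact ⟨hi.1, fun t ht => hi.2 t (h ht)⟩

/-- The object of `Δ` whose underlying linearly ordered set is the (nonempty) subset
`J ⊆ {0, …, n}`. -/
def toObj {n : ℕ} (J : Finset (Fin (n + 1))) : SimplexCategory :=
  SimplexCategory.mk (J.card - 1)

lemma card_eq {n : ℕ} {J : Finset (Fin (n + 1))} (h : J.Nonempty) :
    J.card = J.card - 1 + 1 :=
  (Nat.succ_pred_eq_of_pos (Finset.card_pos.mpr h)).symm

/-- The morphism of `Δ` induced by an inclusion `J ⊆ J'` of nonempty subsets of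
`{0, …, n}`: the order-preserving inclusion map. -/
noncomputable def toHom {n : ℕ} {J J' : Finset (Fin (n + 1))} (hJ : J.Nonempty)
    (hJ' : J'.Nonempty) (h : J ⊆ J') : toObj J ⟶ toObj J' :=
  SimplexCategory.mkHom
    { toFun := fun a =>
        (J'.orderIsoOfFin (card_eq hJ')).symm
          ⟨(J.orderIsoOfFin (card_eq hJ) a : Fin (n + 1)),
            h (J.orderIsoOfFin (card_eq hJ) a).2⟩
      monotone' := fun _ _ hab =>
        ((J'.orderIsoOfFin (card_eq hJ')).symm.monotone
          (Subtype.mk_le_mk.mpr ((J.orderIsoOfFin (card_eq hJ)).monotone hab))) }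

lemma toHom_apply {n : ℕ} {J J' : Finset (Fin (n + 1))} (hJ : J.Nonempty)
    (hJ' : J'.Nonempty) (h : J ⊆ J') (a : Fin ((toObj J).len + 1)) :
    (toHom hJ hJ' h).toOrderHom a =
      (J'.orderIsoOfFin (card_eq hJ')).symm
        ⟨(J.orderIsoOfFin (card_eq hJ) a : Fin (n + 1)),
          h (J.orderIsoOfFin (card_eq hJ) a).2⟩ := rfl

lemma toHom_id {n : ℕ} {J : Finset (Fin (n + 1))} (hJ hJ' : J.Nonempty) :
    toHom hJ hJ' (subset_refl J) = 𝟙 (toObj J) := by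
  apply SimplexCategory.Hom.ext
  apply OrderHom.ext
  funext a
  rw [toHom_apply]
  have h2 : (SimplexCategory.Hom.toOrderHom (𝟙 (toObj J))) a = a := rfl
  rw [h2]
  have h3 : (⟨((J.orderIsoOfFin (card_eq hJ)) a : Fin (n + 1)),
      (subset_refl J) (J.orderIsoOfFin (card_eq hJ) a).2⟩ : {x // x ∈ J}) =
      (J.orderIsoOfFin (card_eq hJ)) a := Subtype.ext rfl
  rw [h3]
  exact OrderIso.symm_apply_apply _ _

lemma toHom_comp {n : ℕ} {J J' J'' : Finset (Fin (n + 1))} (hJ : J.Nonempty)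
    (hJ' : J'.Nonempty) (hJ'' : J''.Nonempty) (h : J ⊆ J') (h' : J' ⊆ J'') :
    toHom hJ hJ'' (h.trans h') = toHom hJ hJ' h ≫ toHom hJ' hJ'' h' := by
  apply SimplexCategory.Hom.ext
  apply OrderHom.ext
  funext a
  have h1 : ((toHom hJ hJ' h ≫ toHom hJ' hJ'' h').toOrderHom) a =
      (toHom hJ' hJ'' h').toOrderHom ((toHom hJ hJ' h).toOrderHom a) := rfl
  rw [h1, toHom_apply, toHom_apply, toHom_apply]
  congr 1
  apply Subtype.ext
  show (((J.orderIsoOfFin (card_eq hJ)) a : Fin (n + 1))) = _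
  rw [show ((J'.orderIsoOfFin (card_eq hJ')) ((J'.orderIsoOfFin (card_eq hJ')).symm
      ⟨((J.orderIsoOfFin (card_eq hJ)) a : Fin (n + 1)),
        h (J.orderIsoOfFin (card_eq hJ) a).2⟩) : {x // x ∈ J'}) =
      ⟨((J.orderIsoOfFin (card_eq hJ)) a : Fin (n + 1)),
        h (J.orderIsoOfFin (card_eq hJ) a).2⟩ from OrderIso.apply_symm_apply _ _]

/-- The intersection `S`-cube of a family `(I_s)_{s ∈ S}` of subsets of `{0, …, n}` with
nonempty intersections: it sends `T ⊆ S` to the object of `Δ` whose underlying linearly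
ordered set is `⋂_{t ∈ T} I_t`, and inclusions of subsets of `S` to the order-preserving
inclusion maps. -/
noncomputable def intersectionCube {n : ℕ} {S : Type}
    (I : S → Finset (Fin (n + 1))) (hne : ∀ T : Finset S, (interOf I T).Nonempty) :
    (Finset S)ᵒᵖ ⥤ SimplexCategory where
  obj T := toObj (interOf I T.unop)
  map {T T'} g := toHom (hne T.unop) (hne T'.unop) (interOf_anti I (leOfHom g.unop))
  map_id T := toHom_id (hne T.unop) (hne T.unop)
  map_comp {T T' T''} g g' :=
    (toHom_comp (hne T.unop) (hne T'.unop) (hne T''.unop)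
      (interOf_anti I (leOfHom g.unop)) (interOf_anti I (leOfHom g'.unop)))


attribute [reducible] cubeCone

attribute [reducible] intersectionCube

/-! ### Part A: generic cube-limit machinery -/

section Generic

variable {C : Type u} [Category.{v} C] {S : Type} [DecidableEq S] [Fintype S]

abbrev NE (S : Type) := ObjectProperty.FullSubcategory (fun T : Finset S => T.Nonempty)

instance {T T' : NE S} : Subsingleton (T ⟶ T') :=
  ⟨fun f g => InducedCategory.hom_ext (Subsingleton.elim _ _)⟩

lemma Fmap_eq (F : Finset S ⥤ C) {a b : Finset S} (f g : a ⟶ b) : F.map f = F.map g :=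
  congrArg F.map (Subsingleton.elim _ _)

lemma Fmap_comp_eq (F : Finset S ⥤ C) {a b c : Finset S} (f : a ⟶ b) (g : b ⟶ c)
    (h : a ⟶ c) : F.map f ≫ F.map g = F.map h := by
  rw [← F.map_comp]; exact Fmap_eq F _ _

/-- Transfer of `IsLimitCube` along a natural isomorphism. -/
lemma isLimitCube_of_natIso {F G : Finset S ⥤ C} (e : F ≅ G) (h : IsLimitCube F) :
    IsLimitCube G := by
  obtain ⟨hF⟩ := h
  refine ⟨(IsLimit.equivOfNatIsoOfIso (Functor.isoWhiskerLeft _ e) _ _ ?_) hF⟩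
  refine Cones.ext (e.app ⊥) ?_
  intro T
  dsimp [cubeCone]
  rw [e.hom.naturality]

lemma isLimitCube_iff_of_natIso {F G : Finset S ⥤ C} (e : F ≅ G) :
    IsLimitCube F ↔ IsLimitCube G :=
  ⟨isLimitCube_of_natIso e, isLimitCube_of_natIso e.symm⟩

/-- A cube which is degenerate in direction `s₀` is a limit cube. -/
lemma isLimitCube_of_degenerate (F : Finset S ⥤ C) (s₀ : S)
    (hiso : ∀ T : Finset S, IsIso (F.map (homOfLE (Finset.subset_insert s₀ T)))) :
    IsLimitCube F := by
  have hs : ({s₀} : Finset S).Nonempty := Finset.singleton_nonempty s₀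
  set e0 : (⊥ : Finset S) ⟶ ({s₀} : Finset S) := homOfLE bot_le with he0
  haveI hiso0 : IsIso (F.map e0) := by
    have : F.map e0 = F.map (homOfLE (Finset.subset_insert s₀ ⊥)) := Fmap_eq F _ _
    rw [this]; exact hiso ⊥
  constructor
  refine IsLimit.mk (fun c => c.π.app ⟨{s₀}, hs⟩ ≫ inv (F.map e0)) ?_ ?_
  · intro c T
    dsimp [cubeCone]
    haveI := hiso T.obj
    rw [← cancel_mono (F.map (homOfLE (Finset.subset_insert s₀ T.obj)))]
    have hTne : (insert s₀ T.obj).Nonempty := Finset.insert_nonempty _ _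
    have natc := c.π.naturality (X := T) (Y := ⟨insert s₀ T.obj, hTne⟩)
      (ObjectProperty.homMk (homOfLE (Finset.subset_insert s₀ T.obj)))
    dsimp at natc
    rw [Category.id_comp] at natc
    have nats := c.π.naturality (X := ⟨{s₀}, hs⟩) (Y := ⟨insert s₀ T.obj, hTne⟩)
      (ObjectProperty.homMk (homOfLE (Finset.singleton_subset_iff.mpr (Finset.mem_insert_self s₀ T.obj))))
    dsimp at nats
    rw [Category.id_comp] at nats
    simp only [Category.assoc]
    calc c.π.app ⟨{s₀}, hs⟩ ≫ inv (F.map e0) ≫ F.map (homOfLE bot_le) ≫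
          F.map (homOfLE (Finset.subset_insert s₀ T.obj))
        = c.π.app ⟨{s₀}, hs⟩ ≫ inv (F.map e0) ≫ F.map e0 ≫
          F.map (homOfLE (Finset.singleton_subset_iff.mpr (Finset.mem_insert_self s₀ T.obj))) := by
          rw [Fmap_comp_eq F _ _ (homOfLE bot_le), Fmap_comp_eq F _ _ (homOfLE bot_le)]
      _ = c.π.app ⟨{s₀}, hs⟩ ≫
          F.map (homOfLE (Finset.singleton_subset_iff.mpr (Finset.mem_insert_self s₀ T.obj))) := by
          rw [IsIso.inv_hom_id_assoc]
      _ = c.π.app T ≫ F.map (homOfLE (Finset.subset_insert s₀ T.obj)) := by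
          rw [← nats, natc]
  · intro c m hm
    have h1 := hm ⟨{s₀}, hs⟩
    dsimp [cubeCone] at h1 ⊢
    have : F.map (homOfLE bot_le) = F.map e0 := Fmap_eq F _ _
    rw [this] at h1
    rw [← h1, Category.assoc, IsIso.hom_inv_id, Category.comp_id]

end Generic
/-! ### Part B: the pullback-square characterization of limit cubes -/

section Char

variable {C : Type u} [Category.{v} C] {S : Type} [DecidableEq S] [Fintype S]

abbrev Esub (s₀ : S) := ObjectProperty.FullSubcategory (fun T : Finset S => T.Nonempty ∧ s₀ ∉ T)

instance {s₀ : S} {T T' : Esub s₀} : Subsingleton (T ⟶ T') :=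
  ⟨fun f g => InducedCategory.hom_ext (Subsingleton.elim _ _)⟩

instance (s₀ : S) : Fintype (Esub s₀) :=
  Fintype.ofEquiv {T : Finset S // T.Nonempty ∧ s₀ ∉ T}
    ⟨fun x => ⟨x.1, x.2⟩, fun x => ⟨x.1, x.2⟩, fun _ => rfl, fun _ => rfl⟩

instance (s₀ : S) : FinCategory (Esub s₀) where
  fintypeObj := inferInstance
  fintypeHom j j' := Fintype.ofEquiv (ULift.{0} (PLift (j.obj ≤ j'.obj)))
    { toFun := fun x => ObjectProperty.homMk (homOfLE x.down.down)
      invFun := fun f => ⟨⟨leOfHom f.hom⟩⟩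
      left_inv := fun _ => rfl
      right_inv := fun _ => Subsingleton.elim _ _ }

lemma leObj {P : Finset S → Prop} {T T' : ObjectProperty.FullSubcategory P} (f : T ⟶ T') :
    T.obj ≤ T'.obj := leOfHom f.hom

/-- Morphisms in a full subcategory of `Finset S` from inequalities. -/
def homObj {P : Finset S → Prop} {T T' : ObjectProperty.FullSubcategory P} (h : T.obj ≤ T'.obj) :
    T ⟶ T' := ObjectProperty.homMk (homOfLE h)

/-- Naturality of cones over the nonempty-subsets diagram, in convenient form. -/
lemma cone_nat (𝔽 : Finset S ⥤ C)
    (c : Cone (ObjectProperty.ι (fun T : Finset S => T.Nonempty) ⋙ 𝔽))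
    {a b : NE S} (h : a.obj ≤ b.obj) :
    c.π.app a ≫ 𝔽.map (homOfLE h) = c.π.app b := by
  have := (c.π.naturality (homObj h)).symm
  dsimp [ObjectProperty.ι, inducedFunctor] at this
  rw [Category.id_comp] at this
  rw [← this]
  rfl

/-- Inclusion of the `s₀`-free nonempty subsets. -/
abbrev inclE (s₀ : S) : Esub s₀ ⥤ Finset S := ObjectProperty.ι _

/-- The functor `T ↦ insert s₀ T` on `s₀`-free nonempty subsets. -/
abbrev insE (s₀ : S) : Esub s₀ ⥤ Finset S where
  obj T := insert s₀ T.obj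
  map {T T'} f := homOfLE (Finset.insert_subset_insert _ (leObj f))
  map_id _ := Subsingleton.elim _ _
  map_comp _ _ := Subsingleton.elim _ _

variable [HasFiniteLimits C] (𝔽 : Finset S ⥤ C) (s₀ : S)

noncomputable abbrev Lnear : C := limit (inclE s₀ ⋙ 𝔽)
noncomputable abbrev Lfar : C := limit (insE s₀ ⋙ 𝔽)

/-- The map `𝔽(∅) ⟶ Lnear`. -/
noncomputable def pNear : 𝔽.obj ⊥ ⟶ Lnear 𝔽 s₀ :=
  limit.lift (inclE s₀ ⋙ 𝔽)
    { pt := 𝔽.obj ⊥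
      π := { app := fun T => 𝔽.map (homOfLE bot_le)
             naturality := fun T T' f => by
               dsimp [inclE, ObjectProperty.ι, inducedFunctor]
               rw [Category.id_comp]
               exact (Fmap_comp_eq 𝔽 _ _ _).symm } }

/-- The edge `𝔽(∅) ⟶ 𝔽({s₀})`. -/
def qEdge : 𝔽.obj ⊥ ⟶ 𝔽.obj {s₀} := 𝔽.map (homOfLE bot_le)

/-- The natural transformation from the near face to the far face. -/
def nuTrans : (inclE s₀ ⋙ 𝔽) ⟶ (insE s₀ ⋙ 𝔽) where
  app T := 𝔽.map (homOfLE (Finset.subset_insert s₀ T.obj))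
  naturality T T' f := by
    dsimp [inclE, insE, ObjectProperty.ι, inducedFunctor]
    rw [Fmap_comp_eq 𝔽 _ _ (homOfLE (le_trans (leObj f) (Finset.subset_insert s₀ T'.obj))),
        Fmap_comp_eq 𝔽 _ _ (homOfLE (le_trans (leObj f) (Finset.subset_insert s₀ T'.obj)))]

/-- The map `Lnear ⟶ Lfar`. -/
noncomputable def rMap : Lnear 𝔽 s₀ ⟶ Lfar 𝔽 s₀ := limMap (nuTrans 𝔽 s₀)

/-- The map `𝔽({s₀}) ⟶ Lfar`. -/
noncomputable def wFar : 𝔽.obj {s₀} ⟶ Lfar 𝔽 s₀ :=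
  limit.lift (insE s₀ ⋙ 𝔽)
    { pt := 𝔽.obj {s₀}
      π := { app := fun T => 𝔽.map (homOfLE (Finset.singleton_subset_iff.mpr
               (Finset.mem_insert_self s₀ T.obj)))
             naturality := fun T T' f => by
               dsimp [insE]
               rw [Category.id_comp]
               exact (Fmap_comp_eq 𝔽 _ _ _).symm } }

lemma pNear_π (T : Esub s₀) :
    pNear 𝔽 s₀ ≫ limit.π (inclE s₀ ⋙ 𝔽) T = 𝔽.map (homOfLE bot_le) :=
  limit.lift_π _ _

lemma wFar_π (T : Esub s₀) :
    wFar 𝔽 s₀ ≫ limit.π (insE s₀ ⋙ 𝔽) T =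
      𝔽.map (homOfLE (Finset.singleton_subset_iff.mpr (Finset.mem_insert_self s₀ T.obj))) :=
  limit.lift_π _ _

lemma rMap_π (T : Esub s₀) :
    rMap 𝔽 s₀ ≫ limit.π (insE s₀ ⋙ 𝔽) T =
      limit.π (inclE s₀ ⋙ 𝔽) T ≫ 𝔽.map (homOfLE (Finset.subset_insert s₀ T.obj)) :=
  limMap_π _ _

lemma char_comm : pNear 𝔽 s₀ ≫ rMap 𝔽 s₀ = qEdge 𝔽 s₀ ≫ wFar 𝔽 s₀ := by
  apply limit.hom_ext
  intro T
  simp only [Category.assoc]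
  rw [rMap_π, wFar_π, ← Category.assoc, pNear_π, qEdge,
    Fmap_comp_eq 𝔽 _ _ (homOfLE bot_le), Fmap_comp_eq 𝔽 _ _ (homOfLE bot_le)]

/-- From a pullback cone over `(rMap, wFar)`, a cone over the nonempty-subsets diagram. -/
noncomputable def coneOfPbCone (s : PullbackCone (rMap 𝔽 s₀) (wFar 𝔽 s₀)) :
    Cone (ObjectProperty.ι (fun T : Finset S => T.Nonempty) ⋙ 𝔽) where
  pt := s.pt
  π :=
    { app := fun T => if h : s₀ ∈ T.obj then
        s.snd ≫ 𝔽.map (homOfLE (Finset.singleton_subset_iff.mpr h))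
      else
        s.fst ≫ limit.π (inclE s₀ ⋙ 𝔽) ⟨T.obj, T.2, h⟩
      naturality := by
        intro T T' f
        dsimp [ObjectProperty.ι, inducedFunctor]
        rw [Category.id_comp, Fmap_eq 𝔽 (a := T.obj) (b := T'.obj) f.hom (homOfLE (leObj f))]
        by_cases h' : s₀ ∈ T'.obj
        · rw [dif_pos h']
          by_cases h : s₀ ∈ T.obj
          · rw [dif_pos h, Category.assoc, Fmap_comp_eq 𝔽 _ _
              (homOfLE (Finset.singleton_subset_iff.mpr h'))]
          · rw [dif_neg h, Category.assoc]
            have hcond := s.condition =≫ limit.π (insE s₀ ⋙ 𝔽) ⟨T.obj, T.2, h⟩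
            rw [Category.assoc, Category.assoc, rMap_π, wFar_π] at hcond
            have : limit.π (inclE s₀ ⋙ 𝔽) ⟨T.obj, T.2, h⟩ ≫ 𝔽.map (homOfLE (leObj f))
                = (limit.π (inclE s₀ ⋙ 𝔽) ⟨T.obj, T.2, h⟩ ≫
                    𝔽.map (homOfLE (Finset.subset_insert s₀ T.obj))) ≫
                  𝔽.map (homOfLE (Finset.insert_subset_iff.mpr ⟨h', leObj f⟩)) := by
              rw [Category.assoc, Fmap_comp_eq 𝔽 _ _ (homOfLE (leObj f))]
            rw [this, ← Category.assoc, hcond, Category.assoc,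
              Fmap_comp_eq 𝔽 _ _ (homOfLE (Finset.singleton_subset_iff.mpr h'))]
            try rw [Fmap_comp_eq 𝔽 _ _ (homOfLE (Finset.singleton_subset_iff.mpr h'))]
        · have h : s₀ ∉ T.obj := fun hh => h' (leObj f hh)
          rw [dif_neg h', dif_neg h, Category.assoc]
          have := limit.w (inclE s₀ ⋙ 𝔽)
            (homObj (P := fun T => T.Nonempty ∧ s₀ ∉ T) (T := ⟨T.obj, T.2, h⟩)
              (T' := ⟨T'.obj, T'.2, h'⟩) (leOfHom f.hom))
          have h2 : limit.π (inclE s₀ ⋙ 𝔽) ⟨T.obj, T.2, h⟩ ≫ 𝔽.map (homOfLE (leObj f))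
              = limit.π (inclE s₀ ⋙ 𝔽) ⟨T'.obj, T'.2, h'⟩ := by
            rw [← this]; rfl
          rw [h2] }

/-- From a cone over the nonempty-subsets diagram, a cone over the near face. -/
noncomputable abbrev coneNear (c : Cone (ObjectProperty.ι (fun T : Finset S => T.Nonempty) ⋙ 𝔽)) :
    Cone (inclE s₀ ⋙ 𝔽) where
  pt := c.pt
  π :=
    { app := fun T => c.π.app ⟨T.obj, T.2.1⟩
      naturality := by
        intro T T' f
        dsimp [inclE, ObjectProperty.ι, inducedFunctor]
        rw [Category.id_comp]
        exact (cone_nat 𝔽 c (a := ⟨T.obj, T.2.1⟩) (b := ⟨T'.obj, T'.2.1⟩) (leOfHom f.hom)).symm }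

/-- The pullback-square characterization of being a limit cube. -/
lemma isLimitCube_iff_isPullback :
    IsLimitCube 𝔽 ↔ IsPullback (pNear 𝔽 s₀) (qEdge 𝔽 s₀) (rMap 𝔽 s₀) (wFar 𝔽 s₀) := by
  have hs : ({s₀} : Finset S).Nonempty := Finset.singleton_nonempty s₀
  constructor
  · rintro ⟨hc⟩
    apply IsPullback.of_isLimit' (w := ⟨char_comm 𝔽 s₀⟩)
    refine PullbackCone.IsLimit.mk (char_comm 𝔽 s₀)
      (fun s => hc.lift (coneOfPbCone 𝔽 s₀ s)) ?_ ?_ ?_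
    · -- fac_left
      intro s
      show hc.lift (coneOfPbCone 𝔽 s₀ s) ≫ pNear 𝔽 s₀ = s.fst
      apply limit.hom_ext
      intro T
      rw [Category.assoc, pNear_π]
      have hfac := hc.fac (coneOfPbCone 𝔽 s₀ s) ⟨T.obj, T.2.1⟩
      have happ : (coneOfPbCone 𝔽 s₀ s).π.app ⟨T.obj, T.2.1⟩
          = s.fst ≫ limit.π (inclE s₀ ⋙ 𝔽) T := by
        dsimp [coneOfPbCone]
        rw [dif_neg T.2.2]
      rw [happ] at hfac
      dsimp only [cubeCone] at hfac
      rw [Fmap_eq 𝔽 (homOfLE bot_le) (homOfLE bot_le)]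
      exact hfac
    · -- fac_right
      intro s
      show hc.lift (coneOfPbCone 𝔽 s₀ s) ≫ qEdge 𝔽 s₀ = s.snd
      have hfac := hc.fac (coneOfPbCone 𝔽 s₀ s) ⟨{s₀}, hs⟩
      have happ : (coneOfPbCone 𝔽 s₀ s).π.app ⟨{s₀}, hs⟩ = s.snd := by
        dsimp [coneOfPbCone]
        rw [dif_pos (Finset.mem_singleton_self s₀), Fmap_eq 𝔽 _ (𝟙 ({s₀} : Finset S)),
          𝔽.map_id, Category.comp_id]
      rw [happ] at hfac
      dsimp only [cubeCone] at hfac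
      rw [qEdge, Fmap_eq 𝔽 (homOfLE bot_le) (homOfLE bot_le)]
      exact hfac
    · -- uniq
      intro s m hfst hsnd
      show m = hc.lift (coneOfPbCone 𝔽 s₀ s)
      apply hc.uniq (coneOfPbCone 𝔽 s₀ s)
      intro T
      dsimp only [cubeCone]
      by_cases h : s₀ ∈ T.obj
      · have happ : (coneOfPbCone 𝔽 s₀ s).π.app T
            = s.snd ≫ 𝔽.map (homOfLE (Finset.singleton_subset_iff.mpr h)) := by
          dsimp [coneOfPbCone]; rw [dif_pos h]
        rw [happ, ← hsnd, Category.assoc, qEdge, Fmap_comp_eq 𝔽 _ _ (homOfLE bot_le)]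
        rfl
      · have happ : (coneOfPbCone 𝔽 s₀ s).π.app T
            = s.fst ≫ limit.π (inclE s₀ ⋙ 𝔽) ⟨T.obj, T.2, h⟩ := by
          dsimp [coneOfPbCone]; rw [dif_neg h]
        rw [happ, ← hfst, Category.assoc, pNear_π, Fmap_eq 𝔽 (homOfLE bot_le) (homOfLE bot_le)]
        rfl
  · rintro hpb
    constructor
    refine IsLimit.mk (fun c => hpb.lift (limit.lift _ (coneNear 𝔽 s₀ c))
      (c.π.app ⟨{s₀}, hs⟩) ?_) ?_ ?_
    · -- the compatibility condition
      apply limit.hom_ext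
      intro T
      rw [Category.assoc, Category.assoc, rMap_π, wFar_π, ← Category.assoc, limit.lift_π]
      dsimp [coneNear]
      rw [cone_nat 𝔽 c (a := ⟨T.obj, T.2.1⟩) (b := ⟨insert s₀ T.obj, Finset.insert_nonempty _ _⟩)
        (Finset.subset_insert s₀ T.obj),
        cone_nat 𝔽 c (a := ⟨{s₀}, hs⟩) (b := ⟨insert s₀ T.obj, Finset.insert_nonempty _ _⟩)
        (Finset.singleton_subset_iff.mpr (Finset.mem_insert_self s₀ T.obj))]
    · -- fac
      intro c T
      dsimp [cubeCone]
      by_cases h : s₀ ∈ T.obj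
      · have : (𝔽.map (homOfLE bot_le) : 𝔽.obj ⊥ ⟶ 𝔽.obj T.obj)
            = qEdge 𝔽 s₀ ≫ 𝔽.map (homOfLE (Finset.singleton_subset_iff.mpr h)) := by
          rw [qEdge, Fmap_comp_eq 𝔽 _ _ (homOfLE bot_le)]
        rw [this, ← Category.assoc, hpb.lift_snd,
          cone_nat 𝔽 c (a := ⟨{s₀}, hs⟩) (b := T) (Finset.singleton_subset_iff.mpr h)]
      · have hp : pNear 𝔽 s₀ ≫ limit.π (inclE s₀ ⋙ 𝔽) ⟨T.obj, T.2, h⟩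
            = (𝔽.map (homOfLE bot_le) : 𝔽.obj ⊥ ⟶ 𝔽.obj T.obj) := limit.lift_π _ _
        rw [Fmap_eq 𝔽 (homOfLE bot_le) (homOfLE bot_le), ← hp, ← Category.assoc,
          hpb.lift_fst, limit.lift_π]
    · -- uniq
      intro c m hm
      apply hpb.hom_ext
      · rw [hpb.lift_fst]
        apply limit.hom_ext
        intro T
        rw [Category.assoc, pNear_π, limit.lift_π]
        have := hm ⟨T.obj, T.2.1⟩
        dsimp [cubeCone] at this
        rw [Fmap_eq 𝔽 (homOfLE bot_le) (homOfLE bot_le), this]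
      · rw [hpb.lift_snd]
        have := hm ⟨{s₀}, hs⟩
        dsimp [cubeCone] at this
        rw [qEdge, Fmap_eq 𝔽 (homOfLE bot_le) (homOfLE bot_le), this]

end Char
/-! ### Part C: the pasting lemma for cubes -/

section Pasting

variable {C : Type u} [Category.{v} C] {S : Type} [DecidableEq S] [Fintype S]
variable [HasFiniteLimits C]

variable {𝔸 𝔸' 𝔾 : Finset S ⥤ C} (s₀ : S) (φ : 𝔸 ⟶ 𝔸')
  (u : ∀ T : Finset S, s₀ ∉ T → (𝔾.obj T ≅ 𝔸.obj (insert s₀ T)))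
  (v : ∀ T : Finset S, s₀ ∉ T → (𝔾.obj (insert s₀ T) ≅ 𝔸'.obj (insert s₀ T)))

/-- The pasting lemma: if the "inner" cube `𝔾` is a limit cube, then the "outer" cube `𝔸'`
is a limit cube iff the "composite-free" cube `𝔸` is. -/
lemma isLimitCube_pasting
    (hφ : ∀ T : Finset S, s₀ ∉ T → IsIso (φ.app T))
    (nu : ∀ (T T' : Finset S) (hT : s₀ ∉ T) (hT' : s₀ ∉ T') (h : T ≤ T'),
      𝔾.map (homOfLE h) ≫ (u T' hT').hom =
        (u T hT).hom ≫ 𝔸.map (homOfLE (Finset.insert_subset_insert s₀ h)))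
    (nv : ∀ (T T' : Finset S) (hT : s₀ ∉ T) (hT' : s₀ ∉ T') (h : T ≤ T'),
      𝔾.map (homOfLE (Finset.insert_subset_insert s₀ h)) ≫ (v T' hT').hom =
        (v T hT).hom ≫ 𝔸'.map (homOfLE (Finset.insert_subset_insert s₀ h)))
    (nuv : ∀ (T : Finset S) (hT : s₀ ∉ T),
      𝔾.map (homOfLE (Finset.subset_insert s₀ T)) ≫ (v T hT).hom =
        (u T hT).hom ≫ φ.app (insert s₀ T))
    (hG : IsLimitCube 𝔾) :
    IsLimitCube 𝔸 ↔ IsLimitCube 𝔸' := by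
  have hbot : s₀ ∉ (⊥ : Finset S) := Finset.notMem_empty s₀
  -- natural isomorphisms between the faces
  let U : (inclE s₀ ⋙ 𝔾) ≅ (insE s₀ ⋙ 𝔸) :=
    NatIso.ofComponents (fun T => u T.obj T.2.2) (by
      intro T T' f
      exact nu T.obj T'.obj T.2.2 T'.2.2 (leObj f))
  let V : (insE s₀ ⋙ 𝔾) ≅ (insE s₀ ⋙ 𝔸') :=
    NatIso.ofComponents (fun T => v T.obj T.2.2) (by
      intro T T' f
      exact nv T.obj T'.obj T.2.2 T'.2.2 (leObj f))
  let Φnear : (inclE s₀ ⋙ 𝔸) ≅ (inclE s₀ ⋙ 𝔸') :=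
    NatIso.ofComponents (fun T => @asIso _ _ _ _ _ (hφ T.obj T.2.2)) (by
      intro T T' f
      exact φ.naturality _)
  let Φfar : (insE s₀ ⋙ 𝔸) ⟶ (insE s₀ ⋙ 𝔸') := Functor.whiskerLeft (insE s₀) φ
  let isoL₀ : Lnear 𝔾 s₀ ≅ Lfar 𝔸 s₀ := HasLimit.isoOfNatIso U
  let isoL₁ : Lfar 𝔾 s₀ ≅ Lfar 𝔸' s₀ := HasLimit.isoOfNatIso V
  let isoLn : Lnear 𝔸 s₀ ≅ Lnear 𝔸' s₀ := HasLimit.isoOfNatIso Φnear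
  -- the bottom pullback square
  obtain hGpb := (isLimitCube_iff_isPullback 𝔾 s₀).mp hG
  have c1 : pNear 𝔾 s₀ ≫ isoL₀.hom = (u ⊥ hbot).hom ≫ wFar 𝔸 s₀ := by
    apply limit.hom_ext
    intro T
    erw [Category.assoc, Category.assoc, HasLimit.isoOfNatIso_hom_π, wFar_π,
      ← Category.assoc, pNear_π]
    have := nu ⊥ T.obj hbot T.2.2 bot_le
    rw [Fmap_eq 𝔾 (homOfLE bot_le) (homOfLE bot_le)]
    show 𝔾.map _ ≫ (u T.obj T.2.2).hom = _
    rw [this]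
    try (congr 1; exact Fmap_eq 𝔸 _ _)
    rfl
  have c2 : qEdge 𝔾 s₀ ≫ (v ⊥ hbot).hom = (u ⊥ hbot).hom ≫ φ.app {s₀} := by
    have := nuv ⊥ hbot
    erw [qEdge, Fmap_eq 𝔾 (homOfLE bot_le) (homOfLE (Finset.subset_insert s₀ ⊥))]
    exact this
  have c3 : rMap 𝔾 s₀ ≫ isoL₁.hom = isoL₀.hom ≫ limMap Φfar := by
    apply limit.hom_ext
    intro T
    rw [Category.assoc, Category.assoc, HasLimit.isoOfNatIso_hom_π, limMap_π,
      ← Category.assoc, rMap_π, ← Category.assoc, HasLimit.isoOfNatIso_hom_π,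
      Category.assoc, Category.assoc]
    congr 1
    show 𝔾.map _ ≫ (v T.obj T.2.2).hom = (u T.obj T.2.2).hom ≫ φ.app _
    rw [← nuv T.obj T.2.2]
    try (congr 1; exact Fmap_eq 𝔾 _ _)
  have c4 : wFar 𝔾 s₀ ≫ isoL₁.hom = (v ⊥ hbot).hom ≫ wFar 𝔸' s₀ := by
    apply limit.hom_ext
    intro T
    erw [Category.assoc, Category.assoc, HasLimit.isoOfNatIso_hom_π, wFar_π,
      ← Category.assoc, wFar_π]
    have := nv ⊥ T.obj hbot T.2.2 bot_le
    show 𝔾.map _ ≫ (v T.obj T.2.2).hom = _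
    erw [Fmap_eq 𝔾 (homOfLE _) (homOfLE (Finset.insert_subset_insert s₀ bot_le)), this]
    try (congr 1; exact Fmap_eq 𝔸' _ _)
    rfl
  have B : IsPullback (wFar 𝔸 s₀) (φ.app {s₀}) (limMap Φfar) (wFar 𝔸' s₀) :=
    hGpb.of_iso (u ⊥ hbot) isoL₀ (v ⊥ hbot) isoL₁ c1 c2 c3 c4
  -- the comparison data between the top square for 𝔸 and the composite square
  haveI := hφ ⊥ hbot
  have d1 : pNear 𝔸 s₀ ≫ isoLn.hom = φ.app ⊥ ≫ pNear 𝔸' s₀ := by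
    apply limit.hom_ext
    intro T
    rw [Category.assoc, Category.assoc, HasLimit.isoOfNatIso_hom_π, pNear_π,
      ← Category.assoc, pNear_π]
    show 𝔸.map _ ≫ φ.app T.obj = _
    rw [← φ.naturality]
    try rfl
  have d2 : (qEdge 𝔸 s₀ ≫ φ.app {s₀}) = φ.app ⊥ ≫ qEdge 𝔸' s₀ := by
    rw [qEdge, qEdge, ← φ.naturality]
    try rfl
  have d3 : (rMap 𝔸 s₀ ≫ limMap Φfar) = isoLn.hom ≫ rMap 𝔸' s₀ := by
    apply limit.hom_ext
    intro T
    rw [Category.assoc, Category.assoc, limMap_π, rMap_π, ← Category.assoc, rMap_π,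
      ← Category.assoc, HasLimit.isoOfNatIso_hom_π, Category.assoc, Category.assoc]
    congr 1
    show 𝔸.map _ ≫ φ.app _ = φ.app T.obj ≫ 𝔸'.map _
    rw [← φ.naturality]
    try rfl
  constructor
  · intro hA
    obtain hApb := (isLimitCube_iff_isPullback 𝔸 s₀).mp hA
    have comp := hApb.paste_vert B
    refine (isLimitCube_iff_isPullback 𝔸' s₀).mpr ?_
    exact comp.of_iso (asIso (φ.app ⊥)) isoLn (Iso.refl _) (Iso.refl _)
      d1 (by simpa using d2) (by simpa using d3) (by simp)
  · intro hA'
    obtain hA'pb := (isLimitCube_iff_isPullback 𝔸' s₀).mp hA'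
    have comp : IsPullback (pNear 𝔸 s₀) (qEdge 𝔸 s₀ ≫ φ.app {s₀})
        (rMap 𝔸 s₀ ≫ limMap Φfar) (wFar 𝔸' s₀) := by
      refine hA'pb.of_iso (asIso (φ.app ⊥)).symm isoLn.symm (Iso.refl _) (Iso.refl _)
        ?_ ?_ ?_ (by simp)
      · simp only [Iso.symm_hom, asIso_hom, asIso_inv]
        rw [Iso.comp_inv_eq, Category.assoc, d1, IsIso.inv_hom_id_assoc]
      · simp only [Iso.refl_hom, Category.comp_id, Iso.symm_hom, asIso_inv]
        rw [d2, IsIso.inv_hom_id_assoc]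
      · simp only [Iso.refl_hom, Category.comp_id, Iso.symm_hom, asIso_inv]
        rw [d3, Iso.inv_hom_id_assoc]
    refine (isLimitCube_iff_isPullback 𝔸 s₀).mpr ?_
    exact comp.of_bot (char_comm 𝔸 s₀) B

end Pasting
/-! ### Part D: relabelling invariance -/

section Relabel

variable {C : Type u} [Category.{v} C] {S : Type} [DecidableEq S] [Fintype S]

/-- The functor on `Finset S` induced by a permutation of `S`. -/
abbrev mapFunctor (σ : S ≃ S) : Finset S ⥤ Finset S where
  obj T := T.map σ.toEmbedding
  map f := homOfLE (Finset.map_subset_map.mpr (leOfHom f))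
  map_id _ := Subsingleton.elim _ _
  map_comp _ _ := Subsingleton.elim _ _

lemma NEext {P : Finset S → Prop} {T T' : ObjectProperty.FullSubcategory P} (h : T.obj = T'.obj) :
    T = T' := by
  cases T; cases T'; cases h; rfl

/-- The equivalence on nonempty subsets induced by a permutation. -/
def neEquiv (σ : S ≃ S) : NE S ≌ NE S where
  functor :=
    { obj := fun T => ⟨T.obj.map σ.toEmbedding, T.2.map⟩
      map := fun f => homObj (Finset.map_subset_map.mpr (leObj f))
      map_id := fun _ => Subsingleton.elim _ _
      map_comp := fun _ _ => Subsingleton.elim _ _ }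
  inverse :=
    { obj := fun T => ⟨T.obj.map σ.symm.toEmbedding, T.2.map⟩
      map := fun f => homObj (Finset.map_subset_map.mpr (leObj f))
      map_id := fun _ => Subsingleton.elim _ _
      map_comp := fun _ _ => Subsingleton.elim _ _ }
  unitIso := NatIso.ofComponents
    (fun T => eqToIso (NEext (by
      show T.obj = (T.obj.map σ.toEmbedding).map σ.symm.toEmbedding
      rw [Finset.map_map]; ext x; simp)))
    (fun _ => Subsingleton.elim _ _)
  counitIso := NatIso.ofComponents
    (fun T => eqToIso (NEext (by
      show (T.obj.map σ.symm.toEmbedding).map σ.toEmbedding = T.obj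
      rw [Finset.map_map]; ext x; simp)))
    (fun _ => Subsingleton.elim _ _)
  functor_unitIso_comp := fun _ => Subsingleton.elim _ _

/-- Natural isomorphism `H ⋙ 𝔽 ≅ 𝔽` when `H` is objectwise the identity. -/
def natIsoCompOfObjId (H : Finset S ⥤ Finset S) (h : ∀ T, H.obj T = T)
    (𝔽 : Finset S ⥤ C) : (H ⋙ 𝔽) ≅ 𝔽 :=
  NatIso.ofComponents (fun T => eqToIso (congrArg 𝔽.obj (h T)))
    (by
      intro a b f
      dsimp
      rw [← eqToHom_map 𝔽 (h b), ← eqToHom_map 𝔽 (h a),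
        Fmap_comp_eq 𝔽 (H.map f) (eqToHom (h b)) (homOfLE ((le_of_eq (h a)).trans (leOfHom f))),
        Fmap_comp_eq 𝔽 (eqToHom (h a)) f (homOfLE ((le_of_eq (h a)).trans (leOfHom f)))])

lemma isLimitCube_mapFunctor (σ : S ≃ S) (𝔽 : Finset S ⥤ C) (h : IsLimitCube 𝔽) :
    IsLimitCube (mapFunctor σ ⋙ 𝔽) := by
  obtain ⟨hc⟩ := h
  exact ⟨hc.whiskerEquivalence (neEquiv σ)⟩

lemma isLimitCube_mapFunctor_iff (σ : S ≃ S) (𝔽 : Finset S ⥤ C) :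
    IsLimitCube (mapFunctor σ ⋙ 𝔽) ↔ IsLimitCube 𝔽 := by
  constructor
  · intro h
    have h2 := isLimitCube_mapFunctor σ.symm _ h
    refine isLimitCube_of_natIso ?_ h2
    exact natIsoCompOfObjId (mapFunctor σ.symm ⋙ mapFunctor σ) (by
      intro T
      show (T.map σ.symm.toEmbedding).map σ.toEmbedding = T
      rw [Finset.map_map]
      ext x
      simp) 𝔽
  · exact isLimitCube_mapFunctor σ 𝔽

end Relabel
/-! ### Part E1: combinatorics of compatible families -/

section Comb

variable {n : ℕ} {S : Type} [DecidableEq S]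

lemma mem_interOf {I : S → Finset (Fin (n + 1))} {T : Finset S} {i : Fin (n + 1)} :
    i ∈ interOf I T ↔ ∀ t ∈ T, i ∈ I t := by
  simp [interOf]

/-- All intersections of a compatible family of nonempty subsets are nonempty. -/
lemma interOf_nonempty {I : S → Finset (Fin (n + 1))} (hc : CompatibleFamily I)
    (hne : ∀ s, (I s).Nonempty) (T : Finset S) : (interOf I T).Nonempty := by
  by_contra hempty
  rw [Finset.not_nonempty_iff_eq_empty] at hempty
  have hex : ∀ i : Fin (n + 1), ∃ s, s ∈ T ∧ i ∉ I s := by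
    intro i
    have : i ∉ interOf I T := by rw [hempty]; exact Finset.notMem_empty i
    rw [mem_interOf] at this
    push_neg at this
    exact this
  choose f hfT hfI using hex
  have hconsec : ∀ i : Fin n, f i.castSucc = f i.succ := by
    intro i
    exact hc.2 i _ _ (fun hh => hfI i.castSucc hh.1) (fun hh => hfI i.succ hh.2)
  have hconst : ∀ i : Fin (n + 1), f i = f 0 := by
    intro i
    induction i using Fin.induction with
    | zero => rfl
    | succ i ih => rw [← hconsec i]; exact ih
  obtain ⟨x, hx⟩ := hne (f 0)
  exact hfI x (by rw [hconst x]; exact hx)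

/-- Two-separatedness of a system of points. -/
def Sep {S : Type} (x : S → Fin (n + 1)) : Prop :=
  ∀ s t : S, s ≠ t → ((x s).val + 2 ≤ (x t).val ∨ (x t).val + 2 ≤ (x s).val)

lemma sep_of_compat {I : S → Finset (Fin (n + 1))} (hc : CompatibleFamily I)
    {x : S → Fin (n + 1)} (hx : ∀ s, x s ∉ I s) : Sep x := by
  intro s t hst
  by_contra hcon
  push_neg at hcon
  obtain ⟨h1, h2⟩ := hcon
  -- |x s - x t| ≤ 1
  rcases Nat.lt_trichotomy (x s).val (x t).val with hlt | heq | hgt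
  · -- x t = x s + 1
    have hxt : (x t).val = (x s).val + 1 := by omega
    have hslt : (x s).val < n := by
      have := (x t).isLt; omega
    set i : Fin n := ⟨(x s).val, hslt⟩ with hi
    have hcs : i.castSucc = x s := by
      apply Fin.ext; simp [hi]
    have hsc : i.succ = x t := by
      apply Fin.ext; simp [hi, hxt]
    exact hst (hc.2 i s t (fun hh => hx s (hcs ▸ hh.1)) (fun hh => hx t (hsc ▸ hh.2)))
  · have hxx : x s = x t := Fin.ext heq
    exact hst (hc.1 (x s) s t (hx s) (by rw [hxx]; exact hx t))
  · have hxs : (x s).val = (x t).val + 1 := by omega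
    have htlt : (x t).val < n := by
      have := (x s).isLt; omega
    set i : Fin n := ⟨(x t).val, htlt⟩ with hi
    have hcs : i.castSucc = x t := by
      apply Fin.ext; simp [hi]
    have hsc : i.succ = x s := by
      apply Fin.ext; simp [hi, hxs]
    exact hst (hc.2 i t s (fun hh => hx t (hcs ▸ hh.1)) (fun hh => hx s (hsc ▸ hh.2))).symm

lemma sep_injective {x : S → Fin (n + 1)} (hx : Sep x) : Function.Injective x := by
  intro s t h
  by_contra hst
  rcases hx s t hst with h' | h' <;> rw [h] at h' <;> omega

/-- A `2`-separated `(k+1)`-tuple of points in `Fin (n+1)` forces `2k ≤ n`. -/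
lemma sep_count {k : ℕ} {x : Fin (k + 1) → Fin (n + 1)} (hx : Sep x) : 2 * k ≤ n := by
  classical
  set y : Fin (k + 1) → Fin (n + 1) := x ∘ Tuple.sort x with hy
  have hmono : Monotone y := Tuple.monotone_sort x
  have hysep : Sep y := by
    intro s t hst
    exact hx _ _ (fun hc => hst (Equiv.injective _ hc))
  have hstep : ∀ i : Fin k, (y i.castSucc).val + 2 ≤ (y i.succ).val := by
    intro i
    rcases hysep i.castSucc i.succ (by
      intro hh
      have := congrArg Fin.val hh
      simp [Fin.castSucc, Fin.succ] at this) with h | h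
    · exact h
    · exfalso
      have := hmono (le_of_lt (Fin.castSucc_lt_succ (i := i)))
      omega
  have hbound : ∀ i : Fin (k + 1), 2 * i.val ≤ (y i).val := by
    intro i
    induction i using Fin.induction with
    | zero => simp
    | succ i ih =>
      have := hstep i
      simp only [Fin.val_succ]
      have hcs : (i.castSucc).val = i.val := rfl
      omega
  have := hbound (Fin.last k)
  have hlt := (y (Fin.last k)).isLt
  simp [Fin.last] at this
  omega

end Comb
/-! ### Part E2: transport of inclusion maps in the simplex category -/

section Delta

variable {n m : ℕ}

lemma toObj_eq {J : Finset (Fin (n + 1))} {J' : Finset (Fin (m + 1))}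
    (h : J.card = J'.card) : toObj J = toObj J' := by
  unfold toObj; rw [h]

lemma toHom_eq_id {J : Finset (Fin (n + 1))} (hJ hJ' : J.Nonempty) (h : J ⊆ J) :
    toHom hJ hJ' h = 𝟙 (toObj J) := toHom_id hJ hJ'

lemma isIso_toHom_of_eq {J J' : Finset (Fin (n + 1))} (hJ : J.Nonempty) (hJ' : J'.Nonempty)
    (h : J ⊆ J') (he : J = J') : IsIso (toHom hJ hJ' h) := by
  subst he
  rw [toHom_eq_id hJ hJ' h]
  infer_instance

lemma eqToHom_toOrderHom_val {X Y : SimplexCategory} (H : X = Y) (a : Fin (X.len + 1)) :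
    (((eqToHom H).toOrderHom) a).val = a.val := by
  subst H; rfl

/-- The fundamental property of `toHom`: it commutes with the enumerations. -/
lemma orderEmbOfFin_toHom {J J' : Finset (Fin (n + 1))} (hJ : J.Nonempty) (hJ' : J'.Nonempty)
    (h : J ⊆ J') (a : Fin ((toObj J).len + 1)) :
    J'.orderEmbOfFin (card_eq hJ') ((toHom hJ hJ' h).toOrderHom a)
      = J.orderEmbOfFin (card_eq hJ) a := by
  rw [toHom_apply]
  have h2 := congrArg Subtype.val (OrderIso.apply_symm_apply (J'.orderIsoOfFin (card_eq hJ'))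
    ⟨(J.orderIsoOfFin (card_eq hJ) a : Fin (n + 1)), h (J.orderIsoOfFin (card_eq hJ) a).2⟩)
  rw [← Finset.coe_orderIsoOfFin_apply, h2]
  rfl

lemma orderEmbOfFin_val_congr {α : Type} [LinearOrder α] {s : Finset α} {c c' : ℕ}
    (h : s.card = c) (h' : s.card = c') {i : Fin c} {i' : Fin c'} (hv : i.val = i'.val) :
    s.orderEmbOfFin h i = s.orderEmbOfFin h' i' := by
  subst h
  subst h'
  cases Fin.ext hv
  rfl

variable {P₀ : Finset (Fin (n + 1))} (hP₀ : P₀.card = m + 1)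

lemma exists_orderEmbOfFin_eq {y : Fin (n + 1)} (hy : y ∈ P₀) :
    ∃ a, P₀.orderEmbOfFin hP₀ a = y := by
  have : y ∈ Set.range (P₀.orderEmbOfFin hP₀) := by
    rw [Finset.range_orderEmbOfFin]
    exact hy
  exact this

lemma image_filter_emb {A' : Finset (Fin (n + 1))} (hA'P : A' ⊆ P₀) :
    (Finset.univ.filter (fun a : Fin (m + 1) => P₀.orderEmbOfFin hP₀ a ∈ A')).image
      (P₀.orderEmbOfFin hP₀) = A' := by
  ext y
  simp only [Finset.mem_image, Finset.mem_filter, Finset.mem_univ, true_and]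
  constructor
  · rintro ⟨a, ha, rfl⟩
    exact ha
  · intro hy
    obtain ⟨a, rfl⟩ := exists_orderEmbOfFin_eq hP₀ (hA'P hy)
    exact ⟨a, hy, rfl⟩

lemma card_filter_emb {A' : Finset (Fin (n + 1))} (hA'P : A' ⊆ P₀) :
    (Finset.univ.filter (fun a : Fin (m + 1) => P₀.orderEmbOfFin hP₀ a ∈ A')).card
      = A'.card := by
  calc (Finset.univ.filter (fun a : Fin (m + 1) => P₀.orderEmbOfFin hP₀ a ∈ A')).card
      = ((Finset.univ.filter (fun a : Fin (m + 1) => P₀.orderEmbOfFin hP₀ a ∈ A')).image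
          (P₀.orderEmbOfFin hP₀)).card :=
        (Finset.card_image_of_injective _ (P₀.orderEmbOfFin hP₀).injective).symm
    _ = A'.card := by rw [image_filter_emb hP₀ hA'P]

lemma orderEmbOfFin_filter {A' : Finset (Fin (n + 1))} (hA'P : A' ⊆ P₀) {c c' : ℕ}
    (hA : (Finset.univ.filter (fun a : Fin (m + 1) => P₀.orderEmbOfFin hP₀ a ∈ A')).card = c)
    (hA' : A'.card = c') (a : Fin c) (a' : Fin c') (hv : a.val = a'.val) :
    P₀.orderEmbOfFin hP₀
      ((Finset.univ.filter (fun a : Fin (m + 1) => P₀.orderEmbOfFin hP₀ a ∈ A')).orderEmbOfFin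
        hA a) = A'.orderEmbOfFin hA' a' := by
  have hc : A'.card = c := hA ▸ (card_filter_emb hP₀ hA'P).symm
  have huniq : (fun b : Fin c => P₀.orderEmbOfFin hP₀
      ((Finset.univ.filter (fun a : Fin (m + 1) => P₀.orderEmbOfFin hP₀ a ∈ A')).orderEmbOfFin
        hA b)) = A'.orderEmbOfFin hc := by
    apply Finset.orderEmbOfFin_unique
    · intro b
      exact (Finset.mem_filter.mp (Finset.orderEmbOfFin_mem _ hA b)).2
    · exact (P₀.orderEmbOfFin hP₀).strictMono.comp (Finset.orderEmbOfFin _ hA).strictMono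
  calc P₀.orderEmbOfFin hP₀
        ((Finset.univ.filter (fun a : Fin (m + 1) => P₀.orderEmbOfFin hP₀ a ∈ A')).orderEmbOfFin
          hA a) = A'.orderEmbOfFin hc a := congrFun huniq a
    _ = A'.orderEmbOfFin hA' a' := orderEmbOfFin_val_congr hc hA' hv

/-- Master transport lemma: the inclusion map between preimage subsets under the
enumeration of `P₀` agrees with the inclusion map between the subsets themselves. -/
lemma toHom_transport {A' B' : Finset (Fin (n + 1))} (hA'P : A' ⊆ P₀) (hB'P : B' ⊆ P₀)
    (hA'ne : A'.Nonempty) (hB'ne : B'.Nonempty) (hsub' : A' ⊆ B')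
    {A B : Finset (Fin (m + 1))}
    (hAdef : A = Finset.univ.filter (fun a : Fin (m + 1) => P₀.orderEmbOfFin hP₀ a ∈ A'))
    (hBdef : B = Finset.univ.filter (fun a : Fin (m + 1) => P₀.orderEmbOfFin hP₀ a ∈ B'))
    (hAne : A.Nonempty) (hBne : B.Nonempty) (hsub : A ⊆ B)
    (EA : toObj A = toObj A') (EB : toObj B' = toObj B) :
    toHom hAne hBne hsub = eqToHom EA ≫ toHom hA'ne hB'ne hsub' ≫ eqToHom EB := by
  subst hAdef
  subst hBdef
  have hcardA := card_filter_emb hP₀ hA'P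
  have hcardB := card_filter_emb hP₀ hB'P
  apply SimplexCategory.Hom.ext
  apply OrderHom.ext
  funext a
  apply ((Finset.univ.filter
    (fun b : Fin (m + 1) => P₀.orderEmbOfFin hP₀ b ∈ B')).orderEmbOfFin (card_eq hBne)).injective
  apply (P₀.orderEmbOfFin hP₀).injective
  have halt : a.val < A'.card - 1 + 1 := by
    have := a.isLt
    simp only [toObj, SimplexCategory.len_mk] at this
    omega
  set a' : Fin ((toObj A').len + 1) := ⟨a.val, by
    simp only [toObj, SimplexCategory.len_mk]; exact halt⟩ with ha'
  -- compute the value of the right-hand side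
  set z := ((eqToHom EA ≫ toHom hA'ne hB'ne hsub' ≫ eqToHom EB).toOrderHom) a with hz
  have hzval : z.val = (((toHom hA'ne hB'ne hsub').toOrderHom) a').val := by
    have e1 : z = ((eqToHom EB).toOrderHom) (((toHom hA'ne hB'ne hsub').toOrderHom)
        (((eqToHom EA).toOrderHom) a)) := rfl
    have e2 : ((eqToHom EA).toOrderHom) a = a' := by
      apply Fin.ext
      rw [eqToHom_toOrderHom_val]
    rw [e1, e2, eqToHom_toOrderHom_val]
  calc P₀.orderEmbOfFin hP₀
        ((Finset.univ.filter (fun b : Fin (m + 1) => P₀.orderEmbOfFin hP₀ b ∈ B')).orderEmbOfFin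
          (card_eq hBne) (((toHom hAne hBne hsub).toOrderHom) a))
      = P₀.orderEmbOfFin hP₀
          ((Finset.univ.filter (fun b : Fin (m + 1) => P₀.orderEmbOfFin hP₀ b ∈ A')).orderEmbOfFin
            (card_eq hAne) a) := by
        rw [orderEmbOfFin_toHom]
    _ = A'.orderEmbOfFin (card_eq hA'ne) a' := by
        exact orderEmbOfFin_filter hP₀ hA'P _ _ a a' rfl
    _ = B'.orderEmbOfFin (card_eq hB'ne) (((toHom hA'ne hB'ne hsub').toOrderHom) a') := by
        rw [orderEmbOfFin_toHom]
    _ = P₀.orderEmbOfFin hP₀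
          ((Finset.univ.filter (fun b : Fin (m + 1) => P₀.orderEmbOfFin hP₀ b ∈ B')).orderEmbOfFin
            (card_eq hBne) z) := by
        exact (orderEmbOfFin_filter hP₀ hB'P _ _ z _ hzval).symm

end Delta
/-! ### Part F1: the relative family on a sub-simplex -/

section KFam

variable {n m : ℕ} {S : Type} [DecidableEq S]
variable (P Q : S → Finset (Fin (n + 1))) (s₀ : S)

/-- The relative family living on the sub-simplex spanned by `P s₀`. -/
def Kfam (hP₀ : (P s₀).card = m + 1) : S → Finset (Fin (m + 1)) := fun s =>
  Finset.univ.filter (fun a => (P s₀).orderEmbOfFin hP₀ a ∈ Q s)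

variable (hP₀ : (P s₀).card = m + 1)

lemma mem_Kfam {a : Fin (m + 1)} {s : S} :
    a ∈ Kfam P Q s₀ hP₀ s ↔ (P s₀).orderEmbOfFin hP₀ a ∈ Q s := by
  simp [Kfam]

lemma interOf_Kfam (T : Finset S) :
    interOf (Kfam P Q s₀ hP₀) T
      = Finset.univ.filter (fun a => (P s₀).orderEmbOfFin hP₀ a ∈ interOf Q T) := by
  ext a
  simp only [mem_interOf, Finset.mem_filter, Finset.mem_univ, true_and, mem_Kfam]

lemma interOf_Kfam_nomem (hPQ : ∀ s, s ≠ s₀ → Q s = P s) {T : Finset S} (hT : s₀ ∉ T) :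
    interOf (Kfam P Q s₀ hP₀) T
      = Finset.univ.filter (fun a => (P s₀).orderEmbOfFin hP₀ a ∈ interOf P (insert s₀ T)) := by
  ext a
  simp only [mem_interOf, Finset.mem_filter, Finset.mem_univ, true_and, mem_Kfam]
  constructor
  · intro h t ht
    rcases Finset.mem_insert.mp ht with rfl | htT
    · exact Finset.orderEmbOfFin_mem _ _ _
    · have hts : t ≠ s₀ := fun hc => hT (hc ▸ htT)
      rw [← hPQ t hts]
      exact h t htT
  · intro h t ht
    have hts : t ≠ s₀ := fun hc => hT (hc ▸ ht)
    rw [hPQ t hts]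
    exact h t (Finset.mem_insert_of_mem ht)

/-- Elements of `P s₀` do not lie strictly between consecutive values of the
enumeration. -/
lemma no_between (i : Fin m) {y : Fin (n + 1)} (hy : y ∈ P s₀) :
    y ≤ (P s₀).orderEmbOfFin hP₀ i.castSucc ∨ (P s₀).orderEmbOfFin hP₀ i.succ ≤ y := by
  obtain ⟨j, rfl⟩ := exists_orderEmbOfFin_eq hP₀ hy
  rcases le_or_gt j i.castSucc with h | h
  · exact Or.inl (((P s₀).orderEmbOfFin hP₀).monotone h)
  · refine Or.inr (((P s₀).orderEmbOfFin hP₀).monotone ?_)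
    have h1 : i.castSucc.val < j.val := h
    have : i.succ.val ≤ j.val := by
      simp only [Fin.val_succ]
      have : i.castSucc.val = i.val := rfl
      omega
    exact this

lemma Kfam_compat (hPc : CompatibleFamily P) (hQc : CompatibleFamily Q)
    (hPQ : ∀ s, s ≠ s₀ → Q s = P s) : CompatibleFamily (Kfam P Q s₀ hP₀) := by
  set e := (P s₀).orderEmbOfFin hP₀ with he
  constructor
  · intro a s t hs ht
    rw [mem_Kfam] at hs ht
    exact hQc.1 (e a) s t hs ht
  · intro i s t hs ht
    rw [mem_Kfam, mem_Kfam] at hs ht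
    set b := e i.castSucc with hb
    set b' := e i.succ with hb'
    have hlt : b < b' := e.strictMono (Fin.castSucc_lt_succ (i := i))
    rcases Nat.lt_or_ge (b.val + 1) b'.val with hfar | hnear
    · -- non-adjacent case: both labels must be `s₀`
      have key : ∀ r : S, ¬(b ∈ Q r ∧ b' ∈ Q r) → r = s₀ := by
        intro r hr
        by_contra hrs
        have hQP : Q r = P r := hPQ r hrs
        rw [hQP] at hr
        rcases not_and_or.mp hr with hb1 | hb2
        · -- b ∉ P r ; use the pair (b, b+1)
          have hblt : b.val < n := by
            have := b'.isLt; omega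
          set j : Fin n := ⟨b.val, hblt⟩ with hj
          have hcs : j.castSucc = b := by apply Fin.ext; simp [hj]
          have hmid : j.succ ∉ P s₀ := by
            intro hmem
            rcases no_between P s₀ hP₀ i hmem with h | h
            · have : (j.succ).val ≤ b.val := h
              simp [hj] at this
            · have : b'.val ≤ (j.succ).val := h
              simp [hj] at this
              omega
          exact hrs (hPc.2 j r s₀ (fun hh => hb1 (hcs ▸ hh.1)) (fun hh => hmid hh.2))
        · -- b' ∉ P r ; use the pair (b'-1, b')
          have hb'pos : 0 < b'.val := by omega
          have hblt : b'.val - 1 < n := by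
            have := b'.isLt; omega
          set j : Fin n := ⟨b'.val - 1, hblt⟩ with hj
          have hsc : j.succ = b' := by
            apply Fin.ext; simp [hj]; omega
          have hmid : j.castSucc ∉ P s₀ := by
            intro hmem
            rcases no_between P s₀ hP₀ i hmem with h | h
            · have : (j.castSucc).val ≤ b.val := h
              simp [hj] at this
              omega
            · have : b'.val ≤ (j.castSucc).val := h
              simp [hj] at this
              omega
          exact hrs (hPc.2 j r s₀ (fun hh => hb2 (hsc ▸ hh.2)) (fun hh => hmid hh.1))
      rw [key s hs, key t ht]
    · -- adjacent case
      have hv : b'.val = b.val + 1 := by omega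
      have hblt : b.val < n := by
        have := b'.isLt; omega
      set j : Fin n := ⟨b.val, hblt⟩ with hj
      have hcs : j.castSucc = b := by apply Fin.ext; simp [hj]
      have hsc : j.succ = b' := by apply Fin.ext; simp [hj]; omega
      exact hQc.2 j s t (fun hh => hs ⟨hcs ▸ hh.1, hsc ▸ hh.2⟩)
        (fun hh => ht ⟨hcs ▸ hh.1, hsc ▸ hh.2⟩)

lemma Kfam_nonempty (hQc : CompatibleFamily Q) (hQne : ∀ s, (Q s).Nonempty)
    (hQP : Q s₀ ⊆ P s₀) (s : S) : (Kfam P Q s₀ hP₀ s).Nonempty := by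
  obtain ⟨x, hx⟩ := interOf_nonempty hQc hQne {s, s₀}
  rw [mem_interOf] at hx
  have hxs : x ∈ Q s := hx s (by simp)
  have hxP : x ∈ P s₀ := hQP (hx s₀ (by simp))
  obtain ⟨a, rfl⟩ := exists_orderEmbOfFin_eq hP₀ hxP
  exact ⟨a, mem_Kfam P Q s₀ hP₀ |>.mpr hxs⟩

end KFam
/-! ### Part F2: the move lemma -/

section MoveLemma

variable {C : Type u} [Category.{v} C] [HasFiniteLimits C]
variable {S : Type} [DecidableEq S] [Fintype S]
variable (X : SimplexCategoryᵒᵖ ⥤ C)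

/-- The cube in `C` obtained from a family by applying `X`. -/
noncomputable abbrev cubeX {n : ℕ} (I : S → Finset (Fin (n + 1)))
    (hne : ∀ T : Finset S, (interOf I T).Nonempty) : Finset S ⥤ C :=
  (intersectionCube I hne).rightOp ⋙ X

lemma cubeX_obj {n : ℕ} (I : S → Finset (Fin (n + 1))) (hne) (T : Finset S) :
    (cubeX X I hne).obj T = X.obj (Opposite.op (toObj (interOf I T))) := rfl

lemma cubeX_map {n : ℕ} (I : S → Finset (Fin (n + 1))) (hne) {T T' : Finset S} (f : T ⟶ T') :
    (cubeX X I hne).map f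
      = X.map ((toHom (hne T') (hne T) (interOf_anti I (leOfHom f))).op) := rfl

lemma Xcomp {n : ℕ} {J1 J2 J3 : Finset (Fin (n + 1))} (h1 : J1.Nonempty) (h2 : J2.Nonempty)
    (h3 : J3.Nonempty) (s12 : J1 ⊆ J2) (s23 : J2 ⊆ J3) :
    X.map ((toHom h2 h3 s23).op) ≫ X.map ((toHom h1 h2 s12).op)
      = X.map ((toHom h1 h3 (s12.trans s23)).op) := by
  rw [← X.map_comp, ← op_comp, ← toHom_comp]

lemma X_eqToHom {A B : SimplexCategory} (E : A = B) :
    (eqToIso (congrArg X.obj (congrArg Opposite.op E))).hom = X.map ((eqToHom E.symm).op) := by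
  subst E
  simp

/-- **The move lemma.**  Changing the coordinate `s₀` of a compatible family from `P s₀`
to a smaller set `Q s₀` does not change whether `X` sends the intersection cube to a
limit cube, provided the relative cube on the subsimplex `P s₀` is sent to a limit
cube. -/
lemma move {n m : ℕ} (P Q : S → Finset (Fin (n + 1))) (s₀ : S)
    (hP₀ : (P s₀).card = m + 1)
    (hPQ : ∀ s, s ≠ s₀ → Q s = P s) (hQP : Q s₀ ⊆ P s₀)
    (hPc : CompatibleFamily P) (hQc : CompatibleFamily Q)
    (hPne : ∀ s, (P s).Nonempty) (hQne : ∀ s, (Q s).Nonempty)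
    (hneP : ∀ T, (interOf P T).Nonempty) (hneQ : ∀ T, (interOf Q T).Nonempty)
    (hneK : ∀ T, (interOf (Kfam P Q s₀ hP₀) T).Nonempty)
    (hG : IsLimitCube (cubeX X (Kfam P Q s₀ hP₀) hneK)) :
    IsLimitCube (cubeX X P hneP) ↔ IsLimitCube (cubeX X Q hneQ) := by
  have hQsubP : ∀ s, Q s ⊆ P s := by
    intro s
    by_cases hs : s = s₀
    · subst hs; exact hQP
    · rw [hPQ s hs]
  have Qsub : ∀ T, interOf Q T ⊆ interOf P T := by
    intro T i hi
    rw [mem_interOf] at hi ⊢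
    exact fun t ht => hQsubP t (hi t ht)
  have hPs₀sub : ∀ T : Finset S, interOf P (insert s₀ T) ⊆ P s₀ := by
    intro T i hi
    rw [mem_interOf] at hi
    exact hi s₀ (Finset.mem_insert_self _ _)
  have hQs₀sub : ∀ T : Finset S, interOf Q (insert s₀ T) ⊆ P s₀ := by
    intro T i hi
    rw [mem_interOf] at hi
    exact hQP (hi s₀ (Finset.mem_insert_self _ _))
  -- object identifications
  have EΔu : ∀ (T : Finset S), s₀ ∉ T →
      toObj (interOf (Kfam P Q s₀ hP₀) T) = toObj (interOf P (insert s₀ T)) := by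
    intro T hT
    apply toObj_eq
    rw [interOf_Kfam_nomem P Q s₀ hP₀ hPQ hT]
    exact card_filter_emb hP₀ (hPs₀sub T)
  have EΔv : ∀ (T : Finset S),
      toObj (interOf (Kfam P Q s₀ hP₀) (insert s₀ T)) = toObj (interOf Q (insert s₀ T)) := by
    intro T
    apply toObj_eq
    rw [interOf_Kfam P Q s₀ hP₀ (insert s₀ T)]
    exact card_filter_emb hP₀ (hQs₀sub T)
  -- the natural transformation φ
  let φ : cubeX X P hneP ⟶ cubeX X Q hneQ :=
    { app := fun T => X.map ((toHom (hneQ T) (hneP T) (Qsub T)).op)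
      naturality := by
        intro T T' f
        rw [cubeX_map, cubeX_map, Xcomp, Xcomp] }
  have hφ : ∀ T : Finset S, s₀ ∉ T → IsIso (φ.app T) := by
    intro T hT
    have heq : interOf Q T = interOf P T := by
      ext i
      rw [mem_interOf, mem_interOf]
      constructor
      · intro h t ht
        rw [← hPQ t (fun hc => hT (hc ▸ ht))]
        exact h t ht
      · intro h t ht
        rw [hPQ t (fun hc => hT (hc ▸ ht))]
        exact h t ht
    haveI := isIso_toHom_of_eq (hneQ T) (hneP T) (Qsub T) heq
    show IsIso (X.map ((toHom (hneQ T) (hneP T) (Qsub T)).op))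
    infer_instance
  refine isLimitCube_pasting s₀ φ
    (fun T hT => eqToIso (congrArg X.obj (congrArg Opposite.op (EΔu T hT))))
    (fun T hT => eqToIso (congrArg X.obj (congrArg Opposite.op (EΔv T))))
    hφ ?_ ?_ ?_ hG
  · -- nu
    intro T T' hT hT' h
    have hΔ : eqToHom (EΔu T' hT').symm ≫
        toHom (hneK T') (hneK T) (interOf_anti _ (leOfHom (homOfLE h)))
        = toHom (hneP (insert s₀ T')) (hneP (insert s₀ T))
            (interOf_anti _ (leOfHom (homOfLE (Finset.insert_subset_insert s₀ h))))
          ≫ eqToHom (EΔu T hT).symm := by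
      rw [toHom_transport hP₀ (hPs₀sub T') (hPs₀sub T) (hneP _) (hneP _)
        (interOf_anti P (Finset.insert_subset_insert s₀ h))
        (interOf_Kfam_nomem P Q s₀ hP₀ hPQ hT')
        (interOf_Kfam_nomem P Q s₀ hP₀ hPQ hT)
        (hneK T') (hneK T) (interOf_anti _ h) (EΔu T' hT') (EΔu T hT).symm]
      simp
    rw [cubeX_map, cubeX_map, X_eqToHom X (EΔu T' hT'), X_eqToHom X (EΔu T hT),
      ← X.map_comp, ← op_comp, ← X.map_comp, ← op_comp]
    exact congrArg X.map (congrArg Quiver.Hom.op hΔ)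
  · -- nv
    intro T T' hT hT' h
    have hΔ : eqToHom (EΔv T').symm ≫
        toHom (hneK (insert s₀ T')) (hneK (insert s₀ T))
          (interOf_anti _ (leOfHom (homOfLE (Finset.insert_subset_insert s₀ h))))
        = toHom (hneQ (insert s₀ T')) (hneQ (insert s₀ T))
            (interOf_anti _ (leOfHom (homOfLE (Finset.insert_subset_insert s₀ h))))
          ≫ eqToHom (EΔv T).symm := by
      rw [toHom_transport hP₀ (hQs₀sub T') (hQs₀sub T) (hneQ _) (hneQ _)
        (interOf_anti Q (Finset.insert_subset_insert s₀ h))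
        (interOf_Kfam P Q s₀ hP₀ (insert s₀ T'))
        (interOf_Kfam P Q s₀ hP₀ (insert s₀ T))
        (hneK _) (hneK _) (interOf_anti _ (Finset.insert_subset_insert s₀ h))
        (EΔv T') (EΔv T).symm]
      simp
    rw [cubeX_map, cubeX_map, X_eqToHom X (EΔv T'), X_eqToHom X (EΔv T),
      ← X.map_comp, ← op_comp, ← X.map_comp, ← op_comp]
    exact congrArg X.map (congrArg Quiver.Hom.op hΔ)
  · -- nuv
    intro T hT
    have hΔ : eqToHom (EΔv T).symm ≫
        toHom (hneK (insert s₀ T)) (hneK T)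
          (interOf_anti _ (leOfHom (homOfLE (Finset.subset_insert s₀ T))))
        = toHom (hneQ (insert s₀ T)) (hneP (insert s₀ T)) (Qsub (insert s₀ T))
          ≫ eqToHom (EΔu T hT).symm := by
      rw [toHom_transport hP₀ (hQs₀sub T) (hPs₀sub T) (hneQ _) (hneP _)
        (Qsub (insert s₀ T))
        (interOf_Kfam P Q s₀ hP₀ (insert s₀ T))
        (interOf_Kfam_nomem P Q s₀ hP₀ hPQ hT)
        (hneK _) (hneK _) (interOf_anti _ (Finset.subset_insert s₀ T))
        (EΔv T) (EΔu T hT).symm]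
      simp
    show (cubeX X (Kfam P Q s₀ hP₀) hneK).map (homOfLE (Finset.subset_insert s₀ T)) ≫ _ = _
    rw [cubeX_map, X_eqToHom X (EΔv T), X_eqToHom X (EΔu T hT),
      ← X.map_comp, ← op_comp]
    show _ = X.map _ ≫ X.map ((toHom (hneQ (insert s₀ T)) (hneP (insert s₀ T))
      (Qsub (insert s₀ T))).op)
    rw [← X.map_comp, ← op_comp]
    exact congrArg X.map (congrArg Quiver.Hom.op hΔ)

end MoveLemma
/-! ### Part G: degenerate cubes and relabelling for concrete families -/

section Concrete

variable {C : Type u} [Category.{v} C] [HasFiniteLimits C]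
variable {S : Type} [DecidableEq S] [Fintype S]
variable (X : SimplexCategoryᵒᵖ ⥤ C)

lemma cubeX_degenerate {n : ℕ} (I : S → Finset (Fin (n + 1))) (hne) (s₀ : S)
    (hs : I s₀ = Finset.univ) : IsLimitCube (cubeX X I hne) := by
  apply isLimitCube_of_degenerate _ s₀
  intro T
  have heq : interOf I (insert s₀ T) = interOf I T := by
    ext i
    rw [mem_interOf, mem_interOf]
    constructor
    · exact fun h t ht => h t (Finset.mem_insert_of_mem ht)
    · intro h t ht
      rcases Finset.mem_insert.mp ht with rfl | htT
      · rw [hs]; exact Finset.mem_univ i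
      · exact h t htT
  rw [cubeX_map]
  haveI := isIso_toHom_of_eq (hne (insert s₀ T)) (hne T)
    (interOf_anti I (leOfHom (homOfLE (Finset.subset_insert s₀ T)))) heq
  infer_instance

/-- Transport of inclusion maps along propositional equalities of the subsets. -/
lemma toHom_congr_sq {n : ℕ} {A B A₂ B₂ : Finset (Fin (n + 1))}
    (hA : A.Nonempty) (hB : B.Nonempty) (s : A ⊆ B)
    (hA₂ : A₂.Nonempty) (hB₂ : B₂.Nonempty) (s₂ : A₂ ⊆ B₂)
    (eA : A = A₂) (eB : B₂ = B) (E1 : toObj A = toObj A₂) (E2 : toObj B₂ = toObj B) :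
    toHom hA hB s = eqToHom E1 ≫ toHom hA₂ hB₂ s₂ ≫ eqToHom E2 := by
  subst eA
  subst eB
  rw [eqToHom_refl, eqToHom_refl, Category.id_comp, Category.comp_id]

lemma relabel_iff {n : ℕ} (σ : S ≃ S) (I : S → Finset (Fin (n + 1)))
    (hne : ∀ T, (interOf I T).Nonempty)
    (hne' : ∀ T, (interOf (fun s => I (σ s)) T).Nonempty) :
    IsLimitCube (cubeX X (fun s => I (σ s)) hne') ↔ IsLimitCube (cubeX X I hne) := by
  have hset : ∀ T : Finset S,
      interOf (fun s => I (σ s)) T = interOf I (T.map σ.toEmbedding) := by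
    intro T
    ext i
    rw [mem_interOf, mem_interOf]
    constructor
    · intro h y hy
      obtain ⟨t, ht, rfl⟩ := Finset.mem_map.mp hy
      exact h t ht
    · intro h t ht
      exact h (σ t) (Finset.mem_map_of_mem _ ht)
  have EΔ : ∀ T : Finset S,
      toObj (interOf (fun s => I (σ s)) T) = toObj (interOf I (T.map σ.toEmbedding)) := by
    intro T
    rw [hset T]
  rw [← isLimitCube_mapFunctor_iff σ (cubeX X I hne)]
  apply isLimitCube_iff_of_natIso
  refine NatIso.ofComponents
    (fun T => eqToIso (congrArg X.obj (congrArg Opposite.op (EΔ T)))) ?_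
  intro T T' f
  rw [X_eqToHom X (EΔ T), X_eqToHom X (EΔ T')]
  show (cubeX X (fun s => I (σ s)) hne').map f ≫ _
    = _ ≫ (cubeX X I hne).map ((mapFunctor σ).map f)
  rw [cubeX_map, cubeX_map, ← X.map_comp, ← op_comp, ← X.map_comp, ← op_comp]
  refine congrArg X.map (congrArg Quiver.Hom.op ?_)
  rw [toHom_congr_sq (hne' T') (hne' T) (interOf_anti _ (leOfHom f))
    (hne (T'.map σ.toEmbedding)) (hne (T.map σ.toEmbedding))
    (interOf_anti I (leOfHom ((mapFunctor σ).map f)))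
    (hset T') (hset T).symm (EΔ T') (EΔ T).symm]
  simp

end Concrete
/-! ### Part H1: the `Good` predicate and elementary moves -/

section Moves

variable {C : Type u} [Category.{v} C] [HasFiniteLimits C] (X : SimplexCategoryᵒᵖ ⥤ C) {k : ℕ}

/-- `X` sends the intersection cube of `I` to a limit cube. -/
def Good {n : ℕ} (I : Fin (k + 1) → Finset (Fin (n + 1))) : Prop :=
  ∀ hne : ∀ T : Finset (Fin (k + 1)), (interOf I T).Nonempty,
    IsLimitCube ((intersectionCube I hne).rightOp ⋙ X)

lemma good_iff_cube {n : ℕ} (I : Fin (k + 1) → Finset (Fin (n + 1)))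
    (hne : ∀ T : Finset (Fin (k + 1)), (interOf I T).Nonempty) :
    Good X I ↔ IsLimitCube (cubeX X I hne) := by
  constructor
  · intro h; exact h hne
  · intro h hne'
    have : hne' = hne := Subsingleton.elim _ _
    rw [this]
    exact h

lemma compat_mono {n : ℕ} {I I' : Fin (k + 1) → Finset (Fin (n + 1))}
    (h : ∀ s, I s ⊆ I' s) (hc : CompatibleFamily I) : CompatibleFamily I' := by
  constructor
  · intro i s t hs ht
    exact hc.1 i s t (fun hh => hs (h s hh)) (fun hh => ht (h t hh))
  · intro i s t hs ht
    exact hc.2 i s t (fun hh => hs ⟨h s hh.1, h s hh.2⟩) (fun hh => ht ⟨h t hh.1, h t hh.2⟩)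

/-- The single-coordinate shrinking move, with the induction hypothesis made explicit. -/
lemma goodMove {n : ℕ}
    (IH : ∀ m : ℕ, m < n → ∀ I : Fin (k + 1) → Finset (Fin (m + 1)),
      (∀ s, (I s).Nonempty) → CompatibleFamily I → Good X I)
    (P Q : Fin (k + 1) → Finset (Fin (n + 1))) (s₀ : Fin (k + 1))
    (hPQ : ∀ s, s ≠ s₀ → Q s = P s) (hQP : Q s₀ ⊆ P s₀)
    (hPc : CompatibleFamily P) (hQc : CompatibleFamily Q)
    (hPne : ∀ s, (P s).Nonempty) (hQne : ∀ s, (Q s).Nonempty)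
    (hproper : P s₀ ≠ Finset.univ) :
    Good X P ↔ Good X Q := by
  have hneP := interOf_nonempty hPc hPne
  have hneQ := interOf_nonempty hQc hQne
  have hcard : (P s₀).card = ((P s₀).card - 1) + 1 := card_eq (hPne s₀)
  have hmlt : (P s₀).card - 1 < n := by
    have h1 : (P s₀).card < n + 1 := by
      have := Finset.card_lt_card (Finset.ssubset_univ_iff.mpr hproper)
      simpa using this
    have h2 : 0 < (P s₀).card := Finset.card_pos.mpr (hPne s₀)
    omega
  have hKc := Kfam_compat P Q s₀ hcard hPc hQc hPQ
  have hKne := Kfam_nonempty P Q s₀ hcard hQc hQne hQP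
  have hneK := interOf_nonempty hKc hKne
  have hG : IsLimitCube (cubeX X (Kfam P Q s₀ hcard) hneK) :=
    IH _ hmlt _ hKne hKc hneK
  rw [good_iff_cube X P hneP, good_iff_cube X Q hneQ]
  exact move X P Q s₀ hcard hPQ hQP hPc hQc hPne hQne hneP hneQ hneK hG

/-- Changing one coordinate arbitrarily, through the intersection. -/
lemma goodChange {n : ℕ}
    (IH : ∀ m : ℕ, m < n → ∀ I : Fin (k + 1) → Finset (Fin (m + 1)),
      (∀ s, (I s).Nonempty) → CompatibleFamily I → Good X I)
    (P P' : Fin (k + 1) → Finset (Fin (n + 1))) (s₀ : Fin (k + 1))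
    (hPP' : ∀ s, s ≠ s₀ → P' s = P s)
    (hPc : CompatibleFamily P) (hP'c : CompatibleFamily P')
    (hMc : CompatibleFamily (Function.update P s₀ (P s₀ ∩ P' s₀)))
    (hPne : ∀ s, (P s).Nonempty) (hP'ne : ∀ s, (P' s).Nonempty)
    (hMne : (P s₀ ∩ P' s₀).Nonempty)
    (hproper : P s₀ ≠ Finset.univ) (hproper' : P' s₀ ≠ Finset.univ) :
    Good X P ↔ Good X P' := by
  set M := Function.update P s₀ (P s₀ ∩ P' s₀) with hM
  have hMs : ∀ s, s ≠ s₀ → M s = P s := by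
    intro s hs; rw [hM, Function.update_of_ne hs]
  have hMs₀ : M s₀ = P s₀ ∩ P' s₀ := by rw [hM, Function.update_self]
  have hMne' : ∀ s, (M s).Nonempty := by
    intro s
    by_cases hs : s = s₀
    · subst hs; rw [hMs₀]; exact hMne
    · rw [hMs s hs]; exact hPne s
  have h1 : Good X P ↔ Good X M := by
    refine goodMove X IH P M s₀ hMs ?_ hPc hMc hPne hMne' hproper
    rw [hMs₀]; exact Finset.inter_subset_left
  have h2 : Good X P' ↔ Good X M := by
    refine goodMove X IH P' M s₀ ?_ ?_ hP'c hMc hP'ne hMne' hproper'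
    · intro s hs; rw [hMs s hs, hPP' s hs]
    · rw [hMs₀]; exact Finset.inter_subset_right
  rw [h1, h2]

/-- Family of complements of singletons. -/
def singFam {n : ℕ} (x : Fin (k + 1) → Fin (n + 1)) : Fin (k + 1) → Finset (Fin (n + 1)) :=
  fun s => ({x s} : Finset (Fin (n + 1)))ᶜ

lemma compat_of_sepCompl {n : ℕ} (I : Fin (k + 1) → Finset (Fin (n + 1)))
    (h : ∀ s t, s ≠ t → ∀ a b : Fin (n + 1), a ∉ I s → b ∉ I t →
      a.val + 2 ≤ b.val ∨ b.val + 2 ≤ a.val) : CompatibleFamily I := by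
  constructor
  · intro i s t hs ht
    by_contra hst
    rcases h s t hst i i hs ht with h' | h' <;> omega
  · intro i s t hs ht
    by_contra hst
    rcases not_and_or.mp hs with hs' | hs' <;> rcases not_and_or.mp ht with ht' | ht' <;>
    · rcases h s t hst _ _ hs' ht' with h' | h' <;>
      · simp only [Fin.coe_castSucc, Fin.val_succ] at h'
        omega

lemma singFam_not_mem {n : ℕ} {x : Fin (k + 1) → Fin (n + 1)} {a : Fin (n + 1)}
    {s : Fin (k + 1)} (h : a ∉ singFam x s) : a = x s := by
  simp only [singFam, Finset.mem_compl, Finset.mem_singleton, not_not] at h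
  exact h

lemma singFam_compat {n : ℕ} {x : Fin (k + 1) → Fin (n + 1)} (hx : Sep x) :
    CompatibleFamily (singFam x) := by
  apply compat_of_sepCompl
  intro s t hst a b ha hb
  rw [singFam_not_mem ha, singFam_not_mem hb]
  exact hx s t hst

lemma singFam_nonempty {n : ℕ} (hn : 1 ≤ n) (x : Fin (k + 1) → Fin (n + 1)) (s : Fin (k + 1)) :
    (singFam x s).Nonempty := by
  rw [← Finset.card_pos, singFam, Finset.card_compl, Finset.card_singleton]
  simp only [Fintype.card_fin]
  omega

lemma singFam_proper {n : ℕ} (x : Fin (k + 1) → Fin (n + 1)) (s : Fin (k + 1)) :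
    singFam x s ≠ Finset.univ := by
  intro hc
  have : x s ∈ singFam x s := hc ▸ Finset.mem_univ (x s)
  simp [singFam] at this

/-- Moving a single token. -/
lemma goodSingleMove {n : ℕ} (hn : 2 ≤ n)
    (IH : ∀ m : ℕ, m < n → ∀ I : Fin (k + 1) → Finset (Fin (m + 1)),
      (∀ s, (I s).Nonempty) → CompatibleFamily I → Good X I)
    (x : Fin (k + 1) → Fin (n + 1)) (s₀ : Fin (k + 1)) (p : Fin (n + 1))
    (hx : Sep x) (hx' : Sep (Function.update x s₀ p)) :
    Good X (singFam x) ↔ Good X (singFam (Function.update x s₀ p)) := by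
  set x' := Function.update x s₀ p with hx'def
  have hx't : ∀ s, s ≠ s₀ → x' s = x s := fun s hs => Function.update_of_ne hs _ _
  have hx's₀ : x' s₀ = p := Function.update_self _ _ _
  have hMeq : singFam x s₀ ∩ singFam x' s₀ = ({x s₀, p} : Finset (Fin (n + 1)))ᶜ := by
    rw [singFam, singFam, ← Finset.compl_union, hx's₀]
    congr 1
    try (ext a; simp [or_comm])
  have hMmem : ∀ a : Fin (n + 1), a ∉ singFam x s₀ ∩ singFam x' s₀ → a = x s₀ ∨ a = p := by
    intro a ha
    rw [hMeq, Finset.mem_compl, not_not, Finset.mem_insert, Finset.mem_singleton] at ha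
    exact ha
  have mixed : ∀ s t : Fin (k + 1), s ≠ t →
      (x s).val + 2 ≤ (x' t).val ∨ (x' t).val + 2 ≤ (x s).val := by
    intro s t hst
    by_cases hs : s = s₀
    · have ht : t ≠ s₀ := fun hc => hst (hs.trans hc.symm)
      rw [hx't t ht]
      exact hx s t hst
    · rw [← hx't s hs]
      exact hx' s t hst
  refine goodChange X IH (singFam x) (singFam x') s₀ ?_ (singFam_compat hx)
    (singFam_compat hx') ?_ (singFam_nonempty (by omega) x) (singFam_nonempty (by omega) x')
    ?_ (singFam_proper x s₀) (singFam_proper x' s₀)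
  · intro s hs
    simp only [singFam]
    rw [hx't s hs]
  · -- compatibility of the mixed family
    apply compat_of_sepCompl
    intro s t hst a b ha hb
    have hmem : ∀ (r : Fin (k + 1)) (c : Fin (n + 1)),
        c ∉ Function.update (singFam x) s₀ (singFam x s₀ ∩ singFam x' s₀) r →
        c = x r ∨ c = x' r := by
      intro r c hc
      by_cases hr : r = s₀
      · subst hr
        rw [Function.update_self] at hc
        rcases hMmem c hc with h | h
        · exact Or.inl h
        · right; rw [h, hx's₀]
      · rw [Function.update_of_ne hr] at hc
        exact Or.inl (singFam_not_mem hc)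
    rcases hmem s a ha with h1 | h1 <;> rcases hmem t b hb with h2 | h2 <;> rw [h1, h2]
    · exact hx s t hst
    · exact mixed s t hst
    · exact (mixed t s hst.symm).symm
    · exact hx' s t hst
  · -- nonemptiness of the intersection
    rw [hMeq, ← Finset.card_pos, Finset.card_compl]
    have : ({x s₀, p} : Finset (Fin (n + 1))).card ≤ 2 := Finset.card_insert_le _ _ |>.trans
      (by simp)
    simp only [Fintype.card_fin]
    omega

end Moves
/-! ### Part H2: sorting, normalization and the main theorem -/

section Sorting

variable {C : Type u} [Category.{v} C] [HasFiniteLimits C] (X : SimplexCategoryᵒᵖ ⥤ C) {k n : ℕ}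

lemma sep_mono_gap {x : Fin (k + 1) → Fin (n + 1)} (hsep : Sep x) (hmono : StrictMono x)
    {s t : Fin (k + 1)} (h : s < t) : (x s).val + 2 ≤ (x t).val := by
  rcases hsep s t (ne_of_lt h) with h' | h'
  · exact h'
  · exfalso
    have := hmono h
    have := Fin.lt_def.mp this
    omega

lemma sep_lower {x : Fin (k + 1) → Fin (n + 1)} (hsep : Sep x) (hmono : StrictMono x) :
    ∀ s, 2 * s.val ≤ (x s).val := by
  intro s
  induction s using Fin.induction with
  | zero => simp
  | succ i ih =>
    have := sep_mono_gap hsep hmono (Fin.castSucc_lt_succ (i := i))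
    have hcs : (i.castSucc).val = i.val := rfl
    simp only [Fin.val_succ]
    omega

/-- The standard family of complements of the singletons `{0, 2, …, 2k}`. -/
def stdFam (k n : ℕ) (h : 2 * k ≤ n) : Fin (k + 1) → Finset (Fin (n + 1)) :=
  singFam (fun s => ⟨2 * s.val, by have := s.isLt; omega⟩)

lemma goodSort (hk : 1 ≤ k) (h2k : 2 * k ≤ n)
    (IH : ∀ m : ℕ, m < n → ∀ I : Fin (k + 1) → Finset (Fin (m + 1)),
      (∀ s, (I s).Nonempty) → CompatibleFamily I → Good X I)
    (x : Fin (k + 1) → Fin (n + 1)) (hsepx : Sep x) (hmonox : StrictMono x) :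
    Good X (singFam x) ↔ Good X (stdFam k n h2k) := by
  have hn2 : 2 ≤ n := by omega
  suffices main : ∀ N (x : Fin (k + 1) → Fin (n + 1)), (∑ s, (x s).val) = N → Sep x →
      StrictMono x → (Good X (singFam x) ↔ Good X (stdFam k n h2k)) from
    main _ x rfl hsepx hmonox
  intro N
  induction N using Nat.strong_induction_on with
  | _ N ih =>
    intro x hμ hsep hmono
    by_cases hstd : ∀ s : Fin (k + 1), (x s).val = 2 * s.val
    · have hxarg : x = (fun s : Fin (k + 1) => (⟨2 * s.val, by have := s.isLt; omega⟩ :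
          Fin (n + 1))) := funext fun s => Fin.ext (hstd s)
      have hxe : singFam x = stdFam k n h2k := by rw [stdFam, hxarg]
      rw [hxe]
    · have hex : (Finset.univ.filter (fun s : Fin (k + 1) => (x s).val ≠ 2 * s.val)).Nonempty := by
        push_neg at hstd
        obtain ⟨s, hs⟩ := hstd
        exact ⟨s, by simp [hs]⟩
      set i := Finset.min' _ hex with hi
      have hibad : (x i).val ≠ 2 * i.val := by
        have := Finset.min'_mem _ hex
        rw [← hi] at this
        exact (Finset.mem_filter.mp this).2
      have hmin : ∀ s, s < i → (x s).val = 2 * s.val := by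
        intro s hs
        by_contra hcon
        have : i ≤ s := Finset.min'_le _ s (by simp [hcon])
        exact absurd hs (not_lt.mpr this)
      have hlow := sep_lower hsep hmono
      have hgt : 2 * i.val < (x i).val := lt_of_le_of_ne (hlow i) (Ne.symm hibad)
      have hplt : 2 * i.val < n + 1 := by
        have := (x i).isLt
        omega
      set p : Fin (n + 1) := ⟨2 * i.val, hplt⟩ with hp
      set x' := Function.update x i p with hx'def
      have hx't : ∀ s, s ≠ i → x' s = x s := fun s hs => Function.update_of_ne hs _ _
      have hx'i : x' i = p := Function.update_self _ _ _
      have hfar : ∀ t, t ≠ i → (p.val + 2 ≤ (x t).val ∨ (x t).val + 2 ≤ p.val) := by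
        intro t hti
        rcases hti.lt_or_gt with hlt | hlt
        · right
          have := hmin t hlt
          have hvlt : t.val < i.val := Fin.lt_def.mp hlt
          simp only [hp]
          omega
        · left
          have := sep_mono_gap hsep hmono hlt
          simp only [hp]
          omega
      have hsepx' : Sep x' := by
        intro s t hst
        by_cases hsi : s = i <;> by_cases hti : t = i
        · exact absurd (hsi.trans hti.symm) hst
        · subst hsi
          rw [hx'i, hx't t hti]
          exact (hfar t hti)
        · subst hti
          rw [hx'i, hx't s hsi]
          exact (hfar s hsi).symm
        · rw [hx't s hsi, hx't t hti]
          exact hsep s t hst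
      have hmonox' : StrictMono x' := by
        intro a b hab
        rw [Fin.lt_def]
        by_cases hai : a = i <;> by_cases hbi : b = i
        · exact absurd (hai.trans hbi.symm) (ne_of_lt hab)
        · subst hai
          rw [hx'i, hx't b hbi]
          have := sep_mono_gap hsep hmono hab
          simp only [hp]
          omega
        · subst hbi
          rw [hx'i, hx't a hai]
          have := hmin a hab
          have := Fin.lt_def.mp hab
          simp only [hp]
          omega
        · rw [hx't a hai, hx't b hbi]
          exact Fin.lt_def.mp (hmono hab)
      have hμ' : (∑ s, (x' s).val) < N := by
        rw [← hμ]
        have h1 : (∑ s, (x' s).val) = p.val + ∑ s ∈ Finset.univ.erase i, (x s).val := by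
          rw [hx'def]
          have : (fun s => (Function.update x i p s).val)
              = Function.update (fun s => (x s).val) i p.val := by
            funext s
            by_cases hs : s = i
            · subst hs; rw [Function.update_self, Function.update_self]
            · rw [Function.update_of_ne hs, Function.update_of_ne hs]
          rw [this, Finset.sum_update_of_mem (Finset.mem_univ i),
            Finset.sdiff_singleton_eq_erase]
        have h2 : (∑ s, (x s).val) = (x i).val + ∑ s ∈ Finset.univ.erase i, (x s).val :=
          (Finset.add_sum_erase _ _ (Finset.mem_univ i)).symm
        rw [h1, h2]
        simp only [hp]
        omega
      have hrec := ih _ hμ' x' rfl hsepx' hmonox'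
      have hmove := goodSingleMove X hn2 IH x i p hsep hsepx'
      rw [hmove]
      exact hrec

lemma goodRelabel (σ : Equiv.Perm (Fin (k + 1))) (I : Fin (k + 1) → Finset (Fin (n + 1)))
    (hc : CompatibleFamily I) (hne : ∀ s, (I s).Nonempty) :
    Good X (fun s => I (σ s)) ↔ Good X I := by
  have hcσ : CompatibleFamily (fun s => I (σ s)) := by
    constructor
    · intro i s t hs ht
      exact σ.injective (hc.1 i (σ s) (σ t) hs ht)
    · intro i s t hs ht
      exact σ.injective (hc.2 i (σ s) (σ t) hs ht)
  have hneσ := interOf_nonempty hcσ (fun s => hne (σ s))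
  have hneI := interOf_nonempty hc hne
  rw [good_iff_cube X _ hneσ, good_iff_cube X I hneI]
  exact relabel_iff X σ I hneI hneσ

lemma goodNormal (hk : 1 ≤ k) (h2k : 2 * k ≤ n)
    (IH : ∀ m : ℕ, m < n → ∀ I : Fin (k + 1) → Finset (Fin (m + 1)),
      (∀ s, (I s).Nonempty) → CompatibleFamily I → Good X I)
    (I : Fin (k + 1) → Finset (Fin (n + 1))) (hc : CompatibleFamily I)
    (hne : ∀ s, (I s).Nonempty) (hproper : ∀ s, I s ≠ Finset.univ) :
    Good X I ↔ Good X (stdFam k n h2k) := by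
  have hn1 : 1 ≤ n := by omega
  have hex : ∀ s, ∃ a, a ∉ I s := by
    intro s
    by_contra h
    push_neg at h
    exact hproper s (Finset.eq_univ_iff_forall.mpr h)
  choose y hy using hex
  have hsep : Sep y := sep_of_compat hc hy
  have hIsub : ∀ s, I s ⊆ singFam y s := by
    intro s a ha
    simp only [singFam, Finset.mem_compl, Finset.mem_singleton]
    exact fun hay => hy s (hay ▸ ha)
  set M : ℕ → Fin (k + 1) → Finset (Fin (n + 1)) :=
    fun j s => if s.val < j then singFam y s else I s with hM
  have hMsub : ∀ j s, I s ⊆ M j s := by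
    intro j s
    by_cases h : s.val < j
    · simp only [hM, if_pos h]; exact hIsub s
    · simp only [hM, if_neg h]
      exact subset_rfl
  have hMc : ∀ j, CompatibleFamily (M j) := fun j => compat_mono (hMsub j) hc
  have hMne : ∀ j s, (M j s).Nonempty := fun j s => (hne s).mono (hMsub j s)
  have hstep : ∀ j, j ≤ k + 1 → (Good X I ↔ Good X (M j)) := by
    intro j
    induction j with
    | zero =>
      intro _
      have hM0 : M 0 = I := funext fun s => if_neg (by omega)
      rw [hM0]
    | succ j ihj =>
      intro hj
      rw [ihj (by omega)]
      set s₀ : Fin (k + 1) := ⟨j, by omega⟩ with hs₀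
      have hs₀v : s₀.val = j := rfl
      refine (goodMove X IH (M (j + 1)) (M j) s₀ ?_ ?_ (hMc _) (hMc _)
        (fun s => hMne _ s) (fun s => hMne _ s) ?_).symm
      · intro s hs
        have hvne : s.val ≠ j := fun hcon => hs (Fin.ext (hcon.trans hs₀v.symm))
        simp only [hM]
        by_cases hlt : s.val < j
        · rw [if_pos hlt, if_pos (by omega)]
        · rw [if_neg hlt, if_neg (by omega)]
      · simp only [hM, hs₀v]
        rw [if_neg (by omega), if_pos (by omega)]
        exact hIsub s₀
      · simp only [hM, hs₀v]
        rw [if_pos (by omega)]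
        exact singFam_proper y s₀
  have h1 : Good X I ↔ Good X (singFam y) := by
    have hMk : M (k + 1) = singFam y := funext fun s => if_pos s.isLt
    rw [← hMk]
    exact hstep (k + 1) le_rfl
  set σ := Tuple.sort y with hσ
  have hmono : Monotone (y ∘ σ) := Tuple.monotone_sort y
  have hsepσ : Sep (fun s => y (σ s)) := fun s t hst => hsep _ _ (fun hc => hst (σ.injective hc))
  have hstrict : StrictMono (fun s => y (σ s)) :=
    hmono.strictMono_of_injective ((sep_injective hsep).comp σ.injective)
  have h2 : Good X (singFam (fun s => y (σ s))) ↔ Good X (singFam y) := by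
    have hee : (fun s => singFam y (σ s)) = singFam (fun s => y (σ s)) := rfl
    rw [← hee]
    exact goodRelabel X σ (singFam y) (singFam_compat hsep) (singFam_nonempty hn1 y)
  have h3 := goodSort X hk h2k IH (fun s => y (σ s)) hsepσ hstrict
  rw [h1, ← h2, h3]

end Sorting
/-- If for every `n ≥ 2k` some compatible family of `k+1` nonempty
proper subsets of `{0, …, n}` has its intersection cube sent to a limit cube by `X`, then
`X` sends the intersection cube of every compatible family of `k+1` nonempty subsets of
`{0, …, n}` (for every `n`) to a limit cube. -/
theorem polynomial_of_one_cover_per_dimension {C : Type u} [Category.{v} C]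
    [HasFiniteLimits C] (k : ℕ) (hk : 1 ≤ k) (X : SimplexCategoryᵒᵖ ⥤ C)
    (H : ∀ n : ℕ, 2 * k ≤ n →
      ∃ I : Fin (k + 1) → Finset (Fin (n + 1)),
        (∀ s, (I s).Nonempty) ∧ (∀ s, I s ≠ Finset.univ) ∧ CompatibleFamily I ∧
        ∃ hne : ∀ T : Finset (Fin (k + 1)), (interOf I T).Nonempty,
          IsLimitCube ((intersectionCube I hne).rightOp ⋙ X)) :
    ∀ (n : ℕ) (I : Fin (k + 1) → Finset (Fin (n + 1))),
      (∀ s, (I s).Nonempty) → CompatibleFamily I →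
      ∀ hne : ∀ T : Finset (Fin (k + 1)), (interOf I T).Nonempty,
        IsLimitCube ((intersectionCube I hne).rightOp ⋙ X) := by
  intro n
  induction n using Nat.strong_induction_on with
  | _ n IH' =>
    intro I hIne hIc hne
    have IH : ∀ m : ℕ, m < n → ∀ J : Fin (k + 1) → Finset (Fin (m + 1)),
        (∀ s, (J s).Nonempty) → CompatibleFamily J → Good X J :=
      fun m hm J h1 h2 => IH' m hm J h1 h2
    show IsLimitCube ((intersectionCube I hne).rightOp ⋙ X)
    by_cases hdeg : ∃ s₀, I s₀ = Finset.univ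
    · obtain ⟨s₀, hs⟩ := hdeg
      exact cubeX_degenerate X I hne s₀ hs
    · push_neg at hdeg
      have hex : ∀ s, ∃ a, a ∉ I s := fun s => by
        by_contra h
        push_neg at h
        exact hdeg s (Finset.eq_univ_iff_forall.mpr h)
      choose y hy using hex
      have h2k : 2 * k ≤ n := sep_count (sep_of_compat hIc hy)
      obtain ⟨J, hJne, hJproper, hJc, hneJ, hJlim⟩ := H n h2k
      have hGoodJ : Good X J := by
        intro hne'
        have he : hne' = hneJ := Subsingleton.elim _ _
        rw [he]
        exact hJlim
      have h1 := goodNormal X hk h2k IH I hIc hIne hdeg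
      have h2 := goodNormal X hk h2k IH J hJc hJne hJproper
      exact (h1.mpr (h2.mp hGoodJ)) hne

end HigherSegal
end

section
/- Let C be a category with finite limits, let k ≥ 2, and let X : Δᵒᵖ ⥤ C be a lower (2k−1)-Segal simplicial object. If X([m]) is a terminal object of C for every m with 0 ≤ m ≤ 2k−2, then X([m]) is a terminal object of C for every m ≥ 0. -/
/-!
Formalization of statements from "Higher Segal spaces via higher excision" (T. Walde).
-/

open CategoryTheory CategoryTheory.Limits SimplexCategory

universe v u

namespace HigherSegal

set_option linter.unusedVariables false
set_option linter.unusedSectionVars false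

/-- The category `Δ_{/F}` associated to a family `F` of subsets of `{0, …, n}`:
objects are morphisms `α : [m] ⟶ [n]` of `Δ` whose image is contained in some member
of the family; morphisms are morphisms over `[n]`. -/
def DeltaOverFamily (n : ℕ) {S : Type} (F : S → Finset (Fin (n + 1))) : Type :=
  ObjectProperty.FullSubcategory
    (fun α : Over (SimplexCategory.mk n) =>
      ∃ s : S, ∀ x : Fin (α.left.len + 1), α.hom.toOrderHom x ∈ F s)

instance (n : ℕ) {S : Type} (F : S → Finset (Fin (n + 1))) :
    Category (DeltaOverFamily n F) :=
  ObjectProperty.FullSubcategory.category _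

/-- The diagram `(Δ_{/F})ᵒᵖ ⥤ C` sending `(α : [m] ⟶ [n])` to `X([m])`. -/
def descentDiagram {C : Type u} [Category.{v} C] (X : SimplexCategoryᵒᵖ ⥤ C) (n : ℕ)
    {S : Type} (F : S → Finset (Fin (n + 1))) : (DeltaOverFamily n F)ᵒᵖ ⥤ C :=
  (ObjectProperty.ι _ ⋙ Over.forget _).op ⋙ X

/-- The cone over `descentDiagram X n F` with apex `X([n])` and legs `X(α)`. -/
def descentCone {C : Type u} [Category.{v} C] (X : SimplexCategoryᵒᵖ ⥤ C) (n : ℕ)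
    {S : Type} (F : S → Finset (Fin (n + 1))) : Cone (descentDiagram X n F) where
  pt := X.obj (Opposite.op (SimplexCategory.mk n))
  π :=
    { app := fun α => X.map (α.unop.obj.hom).op
      naturality := fun α β g => by
        refine (Category.id_comp _).trans ?_
        refine Eq.trans ?_ (X.map_comp _ _)
        exact congrArg X.map
          (congrArg Quiver.Hom.op (Over.w ((ObjectProperty.ι _).map g.unop)).symm) }

/-- A simplicial object `X` satisfies descent with respect to a family `F` of subsets of
`{0, …, n}` if the cone with apex `X([n])` and legs `X(α)` is a limit cone. -/
def SatisfiesDescent {C : Type u} [Category.{v} C] (X : SimplexCategoryᵒᵖ ⥤ C) (n : ℕ)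
    {S : Type} (F : S → Finset (Fin (n + 1))) : Prop :=
  Nonempty (IsLimit (descentCone X n F))

/-- A subset `I ⊆ {0, …, n}` belongs to the lower `(2k−1)`-Segal cover of `[n]` iff it is
a disjoint union of `k` pairs of consecutive integers (in particular `|I| = 2k`). -/
def IsLowerSegalSubset (k n : ℕ) (I : Finset (Fin (n + 1))) : Prop :=
  ∃ g : Fin k → ℕ,
    (∀ j, g j + 1 ≤ n) ∧
    (∀ j j' : Fin k, j < j' → g j + 1 < g j') ∧
    (∀ x : Fin (n + 1), x ∈ I ↔ ∃ j, (x : ℕ) = g j ∨ (x : ℕ) = g j + 1)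

/-- A simplicial object is lower `(2k−1)`-Segal if it satisfies descent with respect to
the lower `(2k−1)`-Segal cover of `[n]` for every `n ≥ 2k`. -/
def IsLowerSegal {C : Type u} [Category.{v} C] (k : ℕ) (X : SimplexCategoryᵒᵖ ⥤ C) :
    Prop :=
  ∀ n : ℕ, 2 * k ≤ n →
    SatisfiesDescent X n
      (fun I : { I : Finset (Fin (n + 1)) // IsLowerSegalSubset k n I } => I.val)



section Auxiliary

open SimplexCategory

lemma val_sigma {n : ℕ} (i : Fin (n+1)) (x : Fin (n+2)) :
    (((SimplexCategory.σ i).toOrderHom x) : ℕ) = if (i:ℕ) < (x:ℕ) then (x:ℕ) - 1 else (x:ℕ) := by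
  change ((Fin.predAbove i x : Fin (n+1)) : ℕ) = _
  unfold Fin.predAbove
  split
  · next h => rw [if_pos (by simpa [Fin.lt_def] using h)]; simp
  · next h => rw [if_neg (by simpa [Fin.lt_def] using h)]; simp

lemma val_delta {n : ℕ} (i : Fin (n+2)) (x : Fin (n+1)) :
    (((SimplexCategory.δ i).toOrderHom x) : ℕ) = if (x:ℕ) < (i:ℕ) then (x:ℕ) else (x:ℕ) + 1 := by
  change ((Fin.succAbove i x : Fin (n+2)) : ℕ) = _
  unfold Fin.succAbove
  split
  · next h => rw [if_pos (by simpa [Fin.lt_def] using h)]; simp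
  · next h => rw [if_neg (by simpa [Fin.lt_def] using h)]; simp

variable {C : Type u} [Category.{v} C]

/-- If `τ : x ⟶ [N+1]` misses the value `i` and `X([N])` is terminal, then `u ≫ X(τ)`
is the canonical "constant" map, independent of `u`. -/
lemma leg_eq_const (X : SimplexCategoryᵒᵖ ⥤ C) {Z : C} {N : ℕ}
    (hN : IsTerminal (X.obj (Opposite.op (SimplexCategory.mk N))))
    {x : SimplexCategory} (τ : x ⟶ SimplexCategory.mk (N+1))
    (i : Fin (N+2)) (hi : ∀ q, τ.toOrderHom q ≠ i)
    (u : Z ⟶ X.obj (Opposite.op (SimplexCategory.mk (N+1))))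
    (t0 : Z ⟶ X.obj (Opposite.op (SimplexCategory.mk 0))) :
    u ≫ X.map τ.op
      = t0 ≫ X.map (SimplexCategory.const x (SimplexCategory.mk 0) 0).op := by
  obtain ⟨θ, hθ⟩ := SimplexCategory.eq_comp_δ_of_not_surjective' τ i hi
  subst hθ
  rw [op_comp, X.map_comp, ← Category.assoc]
  have h1 : u ≫ X.map (SimplexCategory.δ i).op
      = t0 ≫ X.map
          (SimplexCategory.const (SimplexCategory.mk N) (SimplexCategory.mk 0) 0).op :=
    hN.hom_ext _ _
  rw [h1, Category.assoc, ← X.map_comp, ← op_comp]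
  have h2 : θ ≫ SimplexCategory.const (SimplexCategory.mk N) (SimplexCategory.mk 0) 0
      = SimplexCategory.const x (SimplexCategory.mk 0) 0 :=
    SimplexCategory.eq_const_to_zero _
  rw [h2]

lemma card_le_of_lowerSegal {k n : ℕ} {I : Finset (Fin (n+1))}
    (hI : IsLowerSegalSubset k n I) : I.card ≤ 2 * k := by
  obtain ⟨g, hg1, hg2, hg3⟩ := hI
  have hsub : I ⊆ Finset.image
      (fun p : Fin k × Fin 2 => (⟨g p.1 + (p.2:ℕ), by have := hg1 p.1; omega⟩ : Fin (n+1)))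
      Finset.univ := by
    intro x hx
    rw [hg3] at hx
    obtain ⟨j, hj | hj⟩ := hx
    · exact Finset.mem_image.2 ⟨(j, 0), Finset.mem_univ _, by apply Fin.ext; simp [hj.symm]⟩
    · exact Finset.mem_image.2 ⟨(j, 1), Finset.mem_univ _, by apply Fin.ext; simp [hj.symm]⟩
  calc I.card ≤ _ := Finset.card_le_card hsub
    _ ≤ (Finset.univ : Finset (Fin k × Fin 2)).card := Finset.card_image_le
    _ = 2 * k := by simp [Finset.card_univ]; ring

lemma exists_not_mem_of_lowerSegal {k n : ℕ} {I : Finset (Fin (n+1))}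
    (hI : IsLowerSegalSubset k n I) (hn : 2 * k < n + 1) :
    ∃ h : Fin (n+1), h ∉ I := by
  by_contra hcon
  push_neg at hcon
  have h1 : n + 1 ≤ I.card := by
    have := Finset.card_le_card (fun x _ => hcon x : (Finset.univ : Finset (Fin (n+1))) ⊆ I)
    simpa using this
  have h2 := card_le_of_lowerSegal hI
  omega


/-- Monotone gap estimate for the pair-starting function `g`. -/
lemma gap_of_lowerSegal {k : ℕ} {g : Fin k → ℕ}
    (hg2 : ∀ j j' : Fin k, j < j' → g j + 1 < g j') :
    ∀ d : ℕ, ∀ a b : Fin k, (b:ℕ) = (a:ℕ) + d → g a + 2*d ≤ g b := by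
  intro d
  induction d with
  | zero =>
    intro a b h
    have : a = b := Fin.ext (by omega)
    subst this; omega
  | succ d ih =>
    intro a b h
    have hb' : (a:ℕ) + d < k := by have := b.isLt; omega
    have h1 := ih a ⟨(a:ℕ)+d, hb'⟩ rfl
    have h2 : g ⟨(a:ℕ)+d, hb'⟩ + 1 < g b := hg2 _ _ (by simp [Fin.lt_def]; omega)
    omega

/-- In a lower Segal subset of `[2k]`, if `2 ∈ I` then also `1 ∈ I` and `3 ∈ I`. -/
lemma mem_of_two_mem {k N : ℕ} (hk : 2 ≤ k) (hkN : 2*k = N+2) {I : Finset (Fin (N+3))}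
    (hI : IsLowerSegalSubset k (N+2) I) (h2 : (⟨2, by omega⟩ : Fin (N+3)) ∈ I) :
    (⟨1, by omega⟩ : Fin (N+3)) ∈ I ∧ (⟨3, by omega⟩ : Fin (N+3)) ∈ I := by
  obtain ⟨g, hg1, hg2, hg3⟩ := hI
  have hk0 : 0 < k := by omega
  have gap := gap_of_lowerSegal hg2
  have lower : ∀ j : Fin k, 2*(j:ℕ) ≤ g j := by
    intro j
    have := gap (j:ℕ) ⟨0, hk0⟩ j (by simp)
    omega
  have upper : ∀ j : Fin k, g j ≤ 2*(j:ℕ) + 1 := by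
    intro j
    have hlast : g ⟨k-1, by omega⟩ ≤ N + 1 := by
      have := hg1 ⟨k-1, by omega⟩; omega
    have := gap (k - 1 - (j:ℕ)) j ⟨k-1, by omega⟩ (by simp; have := j.isLt; omega)
    have := j.isLt
    omega
  obtain ⟨j0, hj0⟩ := (hg3 ⟨2, by omega⟩).1 h2
  simp only [] at hj0
  rcases hj0 with hj0 | hj0
  · -- 2 = g j0, so j0 = 1, g ⟨0⟩ = 0
    have hj0v : (j0:ℕ) = 1 := by have := lower j0; have := upper j0; omega
    have hlt : (⟨0, hk0⟩ : Fin k) < j0 := by simp [Fin.lt_def]; omega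
    have h01 := hg2 ⟨0, hk0⟩ j0 hlt
    have hg0 : g ⟨0, hk0⟩ = 0 := by omega
    constructor
    · exact (hg3 ⟨1, by omega⟩).2 ⟨⟨0, hk0⟩, Or.inr (by simp [hg0])⟩
    · exact (hg3 ⟨3, by omega⟩).2 ⟨j0, Or.inr (by simp; omega)⟩
  · -- 2 = g j0 + 1, so g j0 = 1, j0 = 0, g ⟨1⟩ = 3
    have hgj0 : g j0 = 1 := by omega
    have hj0v : (j0:ℕ) = 0 := by have := lower j0; omega
    have hlt : j0 < (⟨1, hk⟩ : Fin k) := by simp [Fin.lt_def]; omega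
    have h01 := hg2 j0 ⟨1, hk⟩ hlt
    have hg1v : g ⟨1, hk⟩ = 3 := by have := upper ⟨1, hk⟩; simp at this ⊢; omega
    constructor
    · exact (hg3 ⟨1, by omega⟩).2 ⟨j0, Or.inl (by simp; omega)⟩
    · exact (hg3 ⟨3, by omega⟩).2 ⟨⟨1, hk⟩, Or.inl (by simp [hg1v])⟩

/-- If `I` contains the consecutive pair `c, c+1` then `σ c` is not injective on `I`,
hence misses some point of the codomain. -/
lemma exists_miss {k N : ℕ} (hkN : 2*k = N+2) {I : Finset (Fin (N+3))}
    (hI : IsLowerSegalSubset k (N+2) I) (c : ℕ) (hc : c + 2 ≤ N + 2)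
    (hm1 : (⟨c, by omega⟩ : Fin (N+3)) ∈ I) (hm2 : (⟨c+1, by omega⟩ : Fin (N+3)) ∈ I)
    (ic : Fin (N+2)) (hic : (ic:ℕ) = c) :
    ∃ h : Fin (N+2), ∀ y ∈ I, (SimplexCategory.σ (n := N+1) ic).toOrderHom y ≠ h := by
  have hcc' : (⟨c, by omega⟩ : Fin (N+3)) ≠ (⟨c+1, by omega⟩ : Fin (N+3)) := by
    simp [Fin.ext_iff]
  have hcollide : (SimplexCategory.σ (n := N+1) ic).toOrderHom (⟨c+1, by omega⟩ : Fin (N+3))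
      = (SimplexCategory.σ (n := N+1) ic).toOrderHom (⟨c, by omega⟩ : Fin (N+3)) := by
    apply Fin.ext
    rw [val_sigma, val_sigma]
    simp only [hic]
    split_ifs <;> omega
  set φ := (SimplexCategory.σ (n := N+1) ic).toOrderHom with hφ
  have hsub : I.image φ ⊆ (I.erase ⟨c+1, by omega⟩).image φ := by
    intro y hy
    obtain ⟨x, hx, rfl⟩ := Finset.mem_image.1 hy
    by_cases hxe : x = (⟨c+1, by omega⟩ : Fin (N+3))
    · subst hxe
      exact Finset.mem_image.2 ⟨(⟨c, by omega⟩ : Fin (N+3)), Finset.mem_erase.2 ⟨hcc', hm1⟩, hcollide.symm⟩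
    · exact Finset.mem_image.2 ⟨x, Finset.mem_erase.2 ⟨hxe, hx⟩, rfl⟩
  have hcard : (I.image φ).card < N + 2 := by
    have e1 : (I.image φ).card ≤ ((I.erase ⟨c+1, by omega⟩).image φ).card :=
      Finset.card_le_card hsub
    have e2 : ((I.erase ⟨c+1, by omega⟩).image φ).card ≤ (I.erase ⟨c+1, by omega⟩).card :=
      Finset.card_image_le
    have e3 : (I.erase ⟨c+1, by omega⟩).card = I.card - 1 :=
      Finset.card_erase_of_mem hm2
    have e4 : I.card ≤ 2 * k := card_le_of_lowerSegal hI
    have e5 : 0 < I.card := Finset.card_pos.2 ⟨_, hm1⟩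
    omega
  have : ∃ h : Fin (N+2), h ∉ I.image φ := by
    by_contra hcon
    push_neg at hcon
    have := Finset.card_le_card (fun x _ => hcon x :
      (Finset.univ : Finset (Fin (N+2))) ⊆ I.image φ)
    simp at this
    omega
  obtain ⟨h, hh⟩ := this
  exact ⟨h, fun y hy heq => hh (Finset.mem_image.2 ⟨y, hy, heq⟩)⟩


/-- The inductive step: if `X([0])` and `X([M])` are terminal and `X` satisfies descent
at `[M+1]` with respect to the lower Segal cover, then `X([M+1])` is terminal. -/
lemma isTerminal_step (X : SimplexCategoryᵒᵖ ⥤ C) (k M : ℕ) (hM : 2 * k ≤ M + 1)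
    (hterm0 : IsTerminal (X.obj (Opposite.op (SimplexCategory.mk 0))))
    (htermM : IsTerminal (X.obj (Opposite.op (SimplexCategory.mk M))))
    (hdes : SatisfiesDescent X (M + 1)
      (fun I : { I : Finset (Fin (M + 2)) // IsLowerSegalSubset k (M + 1) I } => I.val)) :
    Nonempty (IsTerminal (X.obj (Opposite.op (SimplexCategory.mk (M + 1))))) := by
  refine ⟨IsTerminal.ofUniqueHom
    (fun Z => hterm0.from Z ≫ X.map (SimplexCategory.const (SimplexCategory.mk (M+1))
      (SimplexCategory.mk 0) 0).op) ?_⟩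
  intro Z u
  refine hdes.some.hom_ext fun j => ?_
  obtain ⟨s, hs⟩ := j.unop.property
  obtain ⟨h, hh⟩ := exists_not_mem_of_lowerSegal s.2 (by omega)
  have hi : ∀ q, (j.unop.obj.hom).toOrderHom q ≠ h := fun q heq => hh (heq ▸ hs q)
  show u ≫ X.map (j.unop.obj.hom).op = _ ≫ X.map (j.unop.obj.hom).op
  rw [leg_eq_const X htermM _ h hi u (hterm0.from Z),
      leg_eq_const X htermM _ h hi _ (hterm0.from Z)]

/-- The key step: descent at `[2k] = [N+2]` together with terminality of `X([m])` for
`m ≤ N = 2k-2` forces `X([2k-1]) = X([N+1])` to be terminal. -/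
lemma isTerminal_of_descent_succ (X : SimplexCategoryᵒᵖ ⥤ C) (k N : ℕ) (hk : 2 ≤ k)
    (hkN : 2 * k = N + 2)
    (htriv : ∀ m : ℕ, m ≤ N →
      Nonempty (IsTerminal (X.obj (Opposite.op (SimplexCategory.mk m)))))
    (hdes : SatisfiesDescent X (N + 2)
      (fun I : { I : Finset (Fin (N + 3)) // IsLowerSegalSubset k (N + 2) I } => I.val)) :
    Nonempty (IsTerminal (X.obj (Opposite.op (SimplexCategory.mk (N + 1))))) := by
  have hN2 : 2 ≤ N := by omega
  have hterm0 : IsTerminal (X.obj (Opposite.op (SimplexCategory.mk 0))) :=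
    (htriv 0 (by omega)).some
  have htermN : IsTerminal (X.obj (Opposite.op (SimplexCategory.mk N))) :=
    (htriv N le_rfl).some
  refine ⟨IsTerminal.ofUniqueHom
    (fun Z => hterm0.from Z ≫ X.map (SimplexCategory.const (SimplexCategory.mk (N+1))
      (SimplexCategory.mk 0) 0).op) ?_⟩
  intro Z u
  have claim1 : u ≫ X.map (SimplexCategory.σ (n := N+1) ⟨1, by omega⟩).op
      = u ≫ X.map (SimplexCategory.σ (n := N+1) ⟨2, by omega⟩).op := by
    refine hdes.some.hom_ext fun j => ?_
    obtain ⟨s, hs⟩ := j.unop.property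
    show (u ≫ X.map (SimplexCategory.σ (n := N+1) ⟨1, by omega⟩).op)
          ≫ X.map (j.unop.obj.hom).op
        = (u ≫ X.map (SimplexCategory.σ (n := N+1) ⟨2, by omega⟩).op)
          ≫ X.map (j.unop.obj.hom).op
    rw [Category.assoc, Category.assoc, ← X.map_comp, ← X.map_comp, ← op_comp, ← op_comp]
    by_cases hc : ∃ q, ((j.unop.obj.hom.toOrderHom q : Fin (N+3)) : ℕ) = 2
    · obtain ⟨q2, hq2⟩ := hc
      have h2I : (⟨2, by omega⟩ : Fin (N+3)) ∈ s.val := by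
        have hmem := hs q2
        have he : j.unop.obj.hom.toOrderHom q2 = (⟨2, by omega⟩ : Fin (N+3)) :=
          Fin.ext (by simpa using hq2)
        rwa [he] at hmem
      obtain ⟨h1I, h3I⟩ := mem_of_two_mem hk hkN s.2 h2I
      obtain ⟨ha, hha⟩ := exists_miss hkN s.2 1 (by omega) h1I h2I ⟨1, by omega⟩ rfl
      obtain ⟨hb, hhb⟩ := exists_miss hkN s.2 2 (by omega) h2I h3I ⟨2, by omega⟩ rfl
      have hia' : ∀ q, (j.unop.obj.hom ≫ SimplexCategory.σ (n := N+1)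
          ⟨1, by omega⟩).toOrderHom q ≠ ha := by
        intro q
        rw [SimplexCategory.comp_toOrderHom]
        exact hha _ (hs q)
      have hib' : ∀ q, (j.unop.obj.hom ≫ SimplexCategory.σ (n := N+1)
          ⟨2, by omega⟩).toOrderHom q ≠ hb := by
        intro q
        rw [SimplexCategory.comp_toOrderHom]
        exact hhb _ (hs q)
      rw [leg_eq_const X htermN _ ha hia' u (hterm0.from Z),
          leg_eq_const X htermN _ hb hib' u (hterm0.from Z)]
    · push_neg at hc
      have heq : j.unop.obj.hom ≫ SimplexCategory.σ (n := N+1) ⟨1, by omega⟩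
          = j.unop.obj.hom ≫ SimplexCategory.σ (n := N+1) ⟨2, by omega⟩ := by
        apply SimplexCategory.Hom.ext
        apply OrderHom.ext
        funext q
        apply Fin.ext
        show (((SimplexCategory.σ (n := N+1) ⟨1, by omega⟩).toOrderHom
            (j.unop.obj.hom.toOrderHom q)) : ℕ)
          = (((SimplexCategory.σ (n := N+1) ⟨2, by omega⟩).toOrderHom
            (j.unop.obj.hom.toOrderHom q)) : ℕ)
        rw [val_sigma, val_sigma]
        have := hc q
        have hiav : (((⟨1, by omega⟩ : Fin (N+2))) : ℕ) = 1 := rfl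
        have hibv : (((⟨2, by omega⟩ : Fin (N+2))) : ℕ) = 2 := rfl
        rw [hiav, hibv]
        split_ifs <;> omega
      rw [heq]
  have hδσa : SimplexCategory.δ (n := N+1) ⟨1, by omega⟩
      ≫ SimplexCategory.σ (n := N+1) ⟨1, by omega⟩ = 𝟙 (SimplexCategory.mk (N+1)) := by
    apply SimplexCategory.Hom.ext
    apply OrderHom.ext
    funext q
    apply Fin.ext
    show (((SimplexCategory.σ (n := N+1) ⟨1, by omega⟩).toOrderHom
        ((SimplexCategory.δ (n := N+1) ⟨1, by omega⟩).toOrderHom q)) : ℕ) = (q : ℕ)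
    rw [val_sigma, val_delta]
    have := q.isLt
    split_ifs <;> omega
  have hδσb : SimplexCategory.δ (n := N+1) ⟨1, by omega⟩
      ≫ SimplexCategory.σ (n := N+1) ⟨2, by omega⟩
      = SimplexCategory.σ (n := N) ⟨1, by omega⟩ ≫ SimplexCategory.δ (n := N) ⟨1, by omega⟩ := by
    apply SimplexCategory.Hom.ext
    apply OrderHom.ext
    funext q
    apply Fin.ext
    show (((SimplexCategory.σ (n := N+1) ⟨2, by omega⟩).toOrderHom
        ((SimplexCategory.δ (n := N+1) ⟨1, by omega⟩).toOrderHom q)) : ℕ)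
      = (((SimplexCategory.δ (n := N) ⟨1, by omega⟩).toOrderHom
        ((SimplexCategory.σ (n := N) ⟨1, by omega⟩).toOrderHom q)) : ℕ)
    rw [val_sigma, val_delta, val_delta, val_sigma]
    have := q.isLt
    simp only [show ((⟨1, by omega⟩ : Fin (N+3)) : ℕ) = 1 from rfl,
      show ((⟨2, by omega⟩ : Fin (N+2)) : ℕ) = 2 from rfl,
      show ((⟨1, by omega⟩ : Fin (N+1)) : ℕ) = 1 from rfl,
      show ((⟨1, by omega⟩ : Fin (N+2)) : ℕ) = 1 from rfl]
    split_ifs <;> omega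
  calc u
      = (u ≫ X.map (SimplexCategory.σ (n := N+1) ⟨1, by omega⟩).op)
          ≫ X.map (SimplexCategory.δ (n := N+1) ⟨1, by omega⟩).op := by
        rw [Category.assoc, ← X.map_comp, ← op_comp, hδσa]
        simp
    _ = (u ≫ X.map (SimplexCategory.σ (n := N+1) ⟨2, by omega⟩).op)
          ≫ X.map (SimplexCategory.δ (n := N+1) ⟨1, by omega⟩).op := by rw [claim1]
    _ = u ≫ X.map (SimplexCategory.δ (n := N+1) ⟨1, by omega⟩
          ≫ SimplexCategory.σ (n := N+1) ⟨2, by omega⟩).op := by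
        rw [Category.assoc, ← X.map_comp, ← op_comp]
    _ = (u ≫ X.map (SimplexCategory.δ (n := N) ⟨1, by omega⟩).op)
          ≫ X.map (SimplexCategory.σ (n := N) ⟨1, by omega⟩).op := by
        rw [hδσb, op_comp, X.map_comp, Category.assoc]
    _ = (hterm0.from Z ≫ X.map (SimplexCategory.const (SimplexCategory.mk N)
          (SimplexCategory.mk 0) 0).op)
          ≫ X.map (SimplexCategory.σ (n := N) ⟨1, by omega⟩).op := by
        congr 1
        exact htermN.hom_ext _ _
    _ = hterm0.from Z ≫ X.map (SimplexCategory.const (SimplexCategory.mk (N+1))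
          (SimplexCategory.mk 0) 0).op := by
        rw [Category.assoc, ← X.map_comp, ← op_comp,
          SimplexCategory.eq_const_to_zero (SimplexCategory.σ (n := N) ⟨1, by omega⟩
            ≫ SimplexCategory.const (SimplexCategory.mk N) (SimplexCategory.mk 0) 0)]


end Auxiliary

/-- Let `k ≥ 2` and let `X` be a lower `(2k−1)`-Segal object in a
category with finite limits. If `X([m])` is terminal for all `m ≤ 2k−2` then `X([m])` is
terminal for all `m`. -/
theorem lowerSegal_triviality_bound {C : Type u} [Category.{v} C] [HasFiniteLimits C]
    (k : ℕ) (hk : 2 ≤ k) (X : SimplexCategoryᵒᵖ ⥤ C) (hX : IsLowerSegal k X)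
    (htriv : ∀ m : ℕ, m ≤ 2 * k - 2 →
      Nonempty (IsTerminal (X.obj (Opposite.op (SimplexCategory.mk m))))) :
    ∀ m : ℕ, Nonempty (IsTerminal (X.obj (Opposite.op (SimplexCategory.mk m)))) := by
  have hkN : 2 * k = (2 * k - 2) + 2 := by omega
  have hdes0 := hX (2 * k) le_rfl
  rw [hkN] at hdes0
  have key := isTerminal_of_descent_succ X k (2 * k - 2) hk hkN (fun m hm => htriv m hm) hdes0
  intro m
  induction m using Nat.strong_induction_on with
  | _ m ih =>
    rcases Nat.lt_or_ge m (2 * k - 1) with h | h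
    · exact htriv m (by omega)
    rcases Nat.eq_or_lt_of_le h with h' | h'
    · rw [show m = 2 * k - 2 + 1 from by omega]
      exact key
    · obtain ⟨M, rfl⟩ : ∃ M, m = M + 1 := ⟨m - 1, by omega⟩
      exact isTerminal_step X k M (by omega) (htriv 0 (by omega)).some
        (ih M (by omega)).some (hX (M + 1) (by omega))

end HigherSegal
end
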